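/- arXiv:2309.09149 — 11 statements merged into one kernel-verified Lean document; each statement's English description precedes it below -/
import Mathlib

section
/- For coprime positive integers a and b and any non-negative integer s, the largest integer having at most s representations as a non-negative integer combination of a and b is (s+1)ab - a - b. -/
/-- `d2 a b n` is the number of pairs `(x,y)` of non-negative integers
with `a*x + b*y = n`. -/
noncomputable def d2 (a b : ℕ) (n : ℤ) : ℕ :=
  Nat.card {p : ℕ × ℕ // (a : ℤ) * p.1 + (b : ℤ) * p.2 = n}

lemma d2_fin (a b : ℕ) (ha : 0 < a) (hb : 0 < b) (n : ℤ) :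
    Finite {p : ℕ × ℕ // (a : ℤ) * p.1 + (b : ℤ) * p.2 = n} := by
  apply Finite.of_injective
    (fun p : {p : ℕ × ℕ // (a : ℤ) * p.1 + (b : ℤ) * p.2 = n} =>
      (⟨p.1.1, by
        have h := p.2
        have hby : (0:ℤ) ≤ (b:ℤ) * p.1.2 := by positivity
        have hax : (a:ℤ) * p.1.1 ≤ n := by linarith
        have hxa : (p.1.1 : ℤ) ≤ (a:ℤ) * p.1.1 := by
          nlinarith [Int.ofNat_nonneg p.1.1, (by exact_mod_cast ha : (1:ℤ) ≤ (a:ℤ))]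
        have hx : (p.1.1 : ℤ) ≤ n := le_trans hxa hax
        have hn0 : (0:ℤ) ≤ n := le_trans (by positivity) hax
        omega⟩ : Fin (n.toNat + 1)))
  intro p q hpq
  have h1 : p.1.1 = q.1.1 := by simpa using congrArg Fin.val hpq
  have h2 : p.1.2 = q.1.2 := by
    have hp := p.2; have hq := q.2
    rw [h1] at hp
    have : (b:ℤ) * p.1.2 = (b:ℤ) * q.1.2 := by linarith
    have hb' : (b:ℤ) ≠ 0 := by exact_mod_cast hb.ne'
    exact_mod_cast mul_left_cancel₀ hb' this
  exact Subtype.ext (Prod.ext h1 h2)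

lemma d2_upper (a b : ℕ) (ha : 0 < a) (hb : 0 < b) (hab : Nat.gcd a b = 1) (s : ℕ) :
    d2 a b (((s : ℤ) + 1) * a * b - a - b) ≤ s := by
  set N : ℤ := ((s : ℤ) + 1) * a * b - a - b with hN
  have key : ∀ p : {p : ℕ × ℕ // (a : ℤ) * p.1 + (b : ℤ) * p.2 = N},
      ∃ k, p.1.1 + 1 = b * k ∧ 1 ≤ k ∧ k ≤ s := by
    rintro ⟨⟨x, y⟩, h⟩
    simp only at h ⊢
    have hz : (a:ℤ) * (x + 1) + (b:ℤ) * (y + 1) = ((s:ℤ) + 1) * (a * b) := by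
      linear_combination h
    have hnat : a * (x + 1) + b * (y + 1) = (s + 1) * (a * b) := by exact_mod_cast hz
    have hbsum : b ∣ a * (x + 1) + b * (y + 1) := hnat ▸ ⟨(s + 1) * a, by ring⟩
    have hbax : b ∣ a * (x + 1) := by
      have := Nat.dvd_sub hbsum (Dvd.intro (y + 1) rfl)
      simpa using this
    have hbx : b ∣ x + 1 := Nat.Coprime.dvd_of_dvd_mul_left (Nat.coprime_comm.mp hab) hbax
    have hasum : a ∣ a * (x + 1) + b * (y + 1) := hnat ▸ ⟨(s + 1) * b, by ring⟩
    have haby : a ∣ b * (y + 1) := by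
      have := Nat.dvd_sub hasum (dvd_mul_right a (x + 1))
      simpa [Nat.add_sub_cancel_left] using this
    have hay : a ∣ y + 1 := Nat.Coprime.dvd_of_dvd_mul_left hab haby
    obtain ⟨k, hk⟩ := hbx
    obtain ⟨m, hm⟩ := hay
    have hk1 : 1 ≤ k := by
      rcases Nat.eq_zero_or_pos k with h0 | h1
      · rw [h0, Nat.mul_zero] at hk; omega
      · exact h1
    have hm1 : 1 ≤ m := by
      rcases Nat.eq_zero_or_pos m with h0 | h1
      · rw [h0, Nat.mul_zero] at hm; omega
      · exact h1
    have hkz : ((x:ℤ) + 1) = (b:ℤ) * k := by exact_mod_cast congrArg (Nat.cast : ℕ → ℤ) hk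
    have hmz : ((y:ℤ) + 1) = (a:ℤ) * m := by exact_mod_cast congrArg (Nat.cast : ℕ → ℤ) hm
    have hab0 : (a:ℤ) * b ≠ 0 := by positivity
    have hkm : k + m = s + 1 := by
      have h2 : ((k:ℤ) + m) * ((a:ℤ) * b) = ((s:ℤ) + 1) * ((a:ℤ) * b) := by
        linear_combination hz - (a:ℤ) * hkz - (b:ℤ) * hmz
      exact_mod_cast mul_right_cancel₀ hab0 h2
    exact ⟨k, hk, hk1, by omega⟩
  have hcard : Nat.card {p : ℕ × ℕ // (a : ℤ) * p.1 + (b : ℤ) * p.2 = N}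
      ≤ Nat.card (Fin s) := by
    apply Nat.card_le_card_of_injective
      (fun p => ⟨(p.1.1 + 1) / b - 1, by
        obtain ⟨k, hk, hk1, hks⟩ := key p
        rw [hk, Nat.mul_div_cancel_left _ hb]
        omega⟩)
    intro p q hpq
    have hv : (p.1.1 + 1) / b - 1 = (q.1.1 + 1) / b - 1 := by
      simpa using congrArg Fin.val hpq
    obtain ⟨k, hk, hk1, _⟩ := key p
    obtain ⟨k', hk', hk1', _⟩ := key q
    rw [hk, hk', Nat.mul_div_cancel_left _ hb, Nat.mul_div_cancel_left _ hb] at hv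
    have hkk : k = k' := by omega
    have h1' : p.1.1 + 1 = q.1.1 + 1 := by rw [hk, hk', hkk]
    have h1 : p.1.1 = q.1.1 := by omega
    have h2 : p.1.2 = q.1.2 := by
      have hp := p.2; have hq := q.2
      rw [h1] at hp
      have : (b:ℤ) * p.1.2 = (b:ℤ) * q.1.2 := by linarith [hp, hq]
      have hb' : (b:ℤ) ≠ 0 := by exact_mod_cast hb.ne'
      exact_mod_cast mul_left_cancel₀ hb' this
    exact Subtype.ext (Prod.ext h1 h2)
  simpa [d2] using hcard

lemma d2_lower (a b : ℕ) (ha : 0 < a) (hb : 0 < b) (hab : Nat.gcd a b = 1) (s : ℕ)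
    (n : ℤ) (hn : ((s : ℤ) + 1) * a * b - a - b < n) : s + 1 ≤ d2 a b n := by
  have hb' : (0:ℤ) < b := by exact_mod_cast hb
  have ha' : (0:ℤ) < a := by exact_mod_cast ha
  set u : ℤ := Nat.gcdA a b with hu
  set v : ℤ := Nat.gcdB a b with hv
  have hid : (a:ℤ) * u + (b:ℤ) * v = 1 := by
    have := Nat.gcd_eq_gcd_ab a b
    rw [hab] at this
    exact_mod_cast this.symm
  set c : ℤ := (u * n) % (b:ℤ) with hcdef
  have hc0 : 0 ≤ c := Int.emod_nonneg _ hb'.ne'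
  have hcb : c < b := Int.emod_lt_of_pos _ hb'
  have hceq : c = u * n - b * ((u * n) / b) := by rw [hcdef, Int.emod_def]
  have hdvd : (b:ℤ) ∣ n - a * c :=
    ⟨n * v + a * ((u * n) / b), by rw [hceq]; linear_combination (-n) * hid⟩
  have hrep : ∀ j : Fin (s + 1),
      ∃ p : {p : ℕ × ℕ // (a : ℤ) * p.1 + (b : ℤ) * p.2 = n},
        (p.1.1 : ℤ) = c + (j : ℤ) * b := by
    intro j
    have hj : (j : ℤ) ≤ s := by exact_mod_cast Nat.lt_succ_iff.mp j.2
    have hj0 : (0:ℤ) ≤ (j:ℤ) := by positivity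
    set x : ℤ := c + (j : ℤ) * b with hx
    have hx0 : 0 ≤ x := by positivity
    have hdvdj : (b:ℤ) ∣ n - a * x := by
      have : n - a * x = (n - a * c) - b * (a * j) := by rw [hx]; ring
      rw [this]
      exact dvd_sub hdvd ⟨a * j, rfl⟩
    obtain ⟨t, ht⟩ := hdvdj
    have ht0 : 0 ≤ t := by
      by_contra hneg
      push_neg at hneg
      have ht1 : t ≤ -1 := by omega
      have h1 : (b:ℤ) * t ≤ (b:ℤ) * (-1) := by
        exact mul_le_mul_of_nonneg_left ht1 hb'.le
      have h2 : (a:ℤ) * c ≤ (a:ℤ) * ((b:ℤ) - 1) := by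
        apply mul_le_mul_of_nonneg_left (by omega) ha'.le
      have h3 : (a:ℤ) * ((j:ℤ) * b) ≤ (a:ℤ) * ((s:ℤ) * b) := by
        apply mul_le_mul_of_nonneg_left (by nlinarith) ha'.le
      have hbt : (b:ℤ) * t = n - a * c - a * ((j:ℤ) * b) := by rw [← ht, hx]; ring
      nlinarith
    refine ⟨⟨(x.toNat, t.toNat), ?_⟩, ?_⟩
    · simp only
      rw [Int.toNat_of_nonneg hx0, Int.toNat_of_nonneg ht0]
      linarith [ht]
    · simp only
      rw [Int.toNat_of_nonneg hx0]
  choose g hg using hrep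
  have hginj : Function.Injective g := by
    intro j j' hjj'
    have h1 := hg j
    rw [hjj', hg j'] at h1
    have : ((j:ℕ) : ℤ) * b = ((j':ℕ) : ℤ) * b := by linarith
    have hjv : ((j:ℕ) : ℤ) = ((j':ℕ) : ℤ) := mul_right_cancel₀ hb'.ne' this
    have : (j : ℕ) = (j' : ℕ) := by exact_mod_cast hjv
    exact Fin.ext this
  haveI := d2_fin a b ha hb n
  have := Nat.card_le_card_of_injective g hginj
  simpa [d2] using this

/-- For coprime positive integers `a`, `b` and `s ≥ 0`, the largest integer
having at most `s` representations by `a` and `b` is `(s+1)ab - a - b`. -/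
theorem stmt0 (a b : ℕ) (ha : 0 < a) (hb : 0 < b) (hab : Nat.gcd a b = 1) (s : ℕ) :
    IsGreatest {n : ℤ | d2 a b n ≤ s} (((s : ℤ) + 1) * a * b - a - b) := by
  constructor
  · exact d2_upper a b ha hb hab s
  · intro n hn
    simp only [Set.mem_setOf_eq] at hn
    by_contra h
    push_neg at h
    have := d2_lower a b ha hb hab s n h
    omega
end

section
/- Let a, b be coprime positive integers and s a non-negative integer. Then the integer (s+1)ab - a - b has exactly s representations as ax + by with x, y non-negative integers. -/
/-- `(s+1)ab - a - b` has exactly `s` representations by coprime positive `a`, `b`. -/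
theorem stmt2 (a b : ℕ) (ha : 0 < a) (hb : 0 < b) (hab : Nat.gcd a b = 1) (s : ℕ) :
    d2 a b (((s : ℤ) + 1) * a * b - a - b) = s := by
  unfold d2
  have key : ∀ k : Fin s,
      (a : ℤ) * ((b * (k + 1) - 1 : ℕ) : ℤ) + (b : ℤ) * ((a * (s - k) - 1 : ℕ) : ℤ)
        = ((s : ℤ) + 1) * a * b - a - b := by
    intro k
    have h1 : 1 ≤ b * ((k : ℕ) + 1) := Nat.one_le_iff_ne_zero.2 (by positivity)
    have hk : (k : ℕ) < s := k.2
    have h2 : 1 ≤ a * (s - (k : ℕ)) :=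
      Nat.one_le_iff_ne_zero.2 (by
        have : 0 < s - (k : ℕ) := by omega
        positivity)
    push_cast [Nat.cast_sub h1, Nat.cast_sub h2, Nat.cast_sub hk.le]
    ring
  have hbij : Function.Bijective (fun k : Fin s =>
      (⟨(b * (k + 1) - 1, a * (s - k) - 1), key k⟩ :
        {p : ℕ × ℕ // (a : ℤ) * p.1 + (b : ℤ) * p.2 = ((s : ℤ) + 1) * a * b - a - b})) := by
    refine ⟨?_, ?_⟩
    · intro k k' h
      have h1 : 1 ≤ b * ((k : ℕ) + 1) := Nat.one_le_iff_ne_zero.2 (by positivity)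
      have h1' : 1 ≤ b * ((k' : ℕ) + 1) := Nat.one_le_iff_ne_zero.2 (by positivity)
      have hx : b * ((k : ℕ) + 1) - 1 = b * ((k' : ℕ) + 1) - 1 := by
        simpa using congrArg (fun p => p.1.1) h
      have : b * ((k : ℕ) + 1) = b * ((k' : ℕ) + 1) := by omega
      have := Nat.eq_of_mul_eq_mul_left hb this
      exact Fin.ext (by omega)
    · rintro ⟨⟨x, y⟩, h⟩
      -- derive the natural-number equation a*(x+1) + b*(y+1) = (s+1)*a*b
      have hnat : a * (x + 1) + b * (y + 1) = (s + 1) * a * b := by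
        have : (a : ℤ) * (x + 1) + (b : ℤ) * (y + 1) = ((s : ℤ) + 1) * a * b := by
          simp only at h; linarith
        exact_mod_cast this
      have hdvd : b ∣ x + 1 := by
        have hba : Nat.Coprime b a := Nat.coprime_comm.mp hab
        have h2 : b ∣ a * (x + 1) + b * (y + 1) := by
          rw [hnat]; exact ⟨(s + 1) * a, by ring⟩
        have : b ∣ a * (x + 1) :=
          (Nat.dvd_add_iff_left (dvd_mul_right b (y + 1))).mpr h2
        exact hba.dvd_of_dvd_mul_left this
      obtain ⟨i, hi⟩ := hdvd
      have hi1 : 1 ≤ i := by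
        rcases Nat.eq_zero_or_pos i with rfl | h0
        · simp at hi
        · exact h0
      -- cancel b
      have hcancel : a * i + (y + 1) = (s + 1) * a := by
        have : b * (a * i + (y + 1)) = b * ((s + 1) * a) := by
          rw [hi] at hnat
          ring_nf at hnat ⊢
          linarith
        exact Nat.eq_of_mul_eq_mul_left hb this
      have his : i ≤ s := by
        by_contra hc
        push_neg at hc
        have : (s + 1) * a ≤ a * i := by
          calc (s + 1) * a ≤ i * a := Nat.mul_le_mul_right a hc
          _ = a * i := Nat.mul_comm _ _
        omega
      refine ⟨⟨i - 1, by omega⟩, ?_⟩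
      apply Subtype.ext
      have hy : y + 1 = a * (s + 1 - i) := by
        have hj : i + (s + 1 - i) = s + 1 := by omega
        have : a * i + a * (s + 1 - i) = (s + 1) * a := by
          rw [← Nat.mul_add, hj, Nat.mul_comm]
        omega
      simp only [Prod.ext_iff]
      constructor
      · show b * ((i - 1) + 1) - 1 = x
        have : (i - 1) + 1 = i := by omega
        rw [this]; omega
      · show a * (s - (i - 1)) - 1 = y
        have h3 : s - (i - 1) = s + 1 - i := by omega
        rw [h3]; omega
  rw [← Nat.card_eq_of_bijective _ hbij]
  simp
end

section
/- Let a₁,…,a_k be positive integers with gcd 1, where k ≥ 2, and let ℓ = gcd(a₂,…,a_k), with a_j = ℓ·a_j' for 2 ≤ j ≤ k. Then for every s ≥ 0, g(a₁, a₂, …, a_k; s) = ℓ·g(a₁, a₂', …, a_k'; s) + a₁(ℓ−1). -/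
/-- Number of representations of `n` as `a₁*x + ∑ i, b i * y i` with
non-negative integer coefficients (the tuple is `(a₁, b 0, …, b (m-1))`). -/
noncomputable def dRep {m : ℕ} (a₁ : ℕ) (b : Fin m → ℕ) (n : ℤ) : ℕ :=
  Nat.card {xy : ℕ × (Fin m → ℕ) // (a₁ : ℤ) * xy.1 + ∑ i, (xy.2 i : ℤ) * b i = n}

lemma dRep_key {m : ℕ} (a₁ : ℕ) (b b' : Fin m → ℕ) (ℓ : ℕ) (hℓ0 : 0 < ℓ)
    (hcop : IsCoprime (a₁ : ℤ) (ℓ : ℤ))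
    (hb' : ∀ i, b i = ℓ * b' i) (n : ℤ) (r : ℕ) (hr : r < ℓ) :
    dRep a₁ b ((ℓ : ℤ) * n + a₁ * r) = dRep a₁ b' n := by
  have hsum : ∀ y : Fin m → ℕ, (∑ i, (y i : ℤ) * b i) = ℓ * ∑ i, (y i : ℤ) * b' i := by
    intro y
    rw [Finset.mul_sum]
    refine Finset.sum_congr rfl fun i _ => ?_
    rw [hb' i]; push_cast; ring
  symm
  refine Nat.card_eq_of_bijective
    (fun p => ⟨(r + ℓ * p.1.1, p.1.2), ?_⟩) ⟨?_, ?_⟩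
  · obtain ⟨⟨t, y⟩, h⟩ := p
    simp only at h ⊢
    rw [hsum]
    push_cast
    linear_combination (ℓ : ℤ) * h
  · rintro ⟨⟨t₁, y₁⟩, h₁⟩ ⟨⟨t₂, y₂⟩, h₂⟩ he
    simp only [Subtype.mk.injEq, Prod.mk.injEq] at he ⊢
    exact ⟨Nat.eq_of_mul_eq_mul_left hℓ0 (Nat.add_left_cancel he.1), he.2⟩
  · rintro ⟨⟨x, y⟩, h⟩
    simp only at h
    rw [hsum] at h
    set S := ∑ i, (y i : ℤ) * b' i with hS
    have hdvd : (ℓ : ℤ) ∣ (x : ℤ) - r := by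
      have h1 : (ℓ : ℤ) ∣ (a₁ : ℤ) * ((x : ℤ) - r) := ⟨n - S, by linarith⟩
      exact (hcop.symm.dvd_of_dvd_mul_left h1)
    obtain ⟨c, hc⟩ := hdvd
    have hl : (0:ℤ) < ℓ := by exact_mod_cast hℓ0
    have hri : (r:ℤ) < ℓ := by exact_mod_cast hr
    have hx0 : (0:ℤ) ≤ x := Int.natCast_nonneg x
    have hrx : (r : ℤ) ≤ x := by
      by_contra hlt
      push_neg at hlt
      have hc0 : c < 0 := by nlinarith
      have : c ≤ -1 := by omega
      nlinarith
    have hc0 : 0 ≤ c := by nlinarith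
    obtain ⟨t, rfl⟩ := Int.eq_ofNat_of_zero_le hc0
    have hx : x = r + ℓ * t := by exact_mod_cast by linarith [hc]
    have hteq : (a₁ : ℤ) * t + S = n := by
      have hl0 : (ℓ : ℤ) ≠ 0 := by exact_mod_cast hℓ0.ne'
      have : (ℓ : ℤ) * ((a₁ : ℤ) * t + S) = (ℓ : ℤ) * n := by
        have hx' : (x : ℤ) = r + ℓ * t := by exact_mod_cast hx
        linear_combination h - (a₁:ℤ) * hx'
      exact mul_left_cancel₀ hl0 this
    exact ⟨⟨⟨t, y⟩, hteq⟩, by simp [hx]⟩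

/-- Beck–Kifer: if `ℓ = gcd(a₂,…,a_k)` and `a_j = ℓ a_j'`, then
`g(a₁,…,a_k;s) = ℓ·g(a₁,a₂',…,a_k';s) + a₁(ℓ-1)`. Here the tuple has `k = m+1 ≥ 2`
entries: `a₁` together with `b i = ℓ * b' i`. -/
theorem stmt3 {m : ℕ} (hm : 1 ≤ m) (a₁ : ℕ) (b b' : Fin m → ℕ)
    (ha₁ : 0 < a₁) (hb : ∀ i, 0 < b i)
    (hgcd : Nat.gcd a₁ (Finset.univ.gcd b) = 1)
    (ℓ : ℕ) (hℓ : ℓ = Finset.univ.gcd b)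
    (hb' : ∀ i, b i = ℓ * b' i)
    (s : ℕ) (G G' : ℤ)
    (hG : IsGreatest {n : ℤ | dRep a₁ b n ≤ s} G)
    (hG' : IsGreatest {n : ℤ | dRep a₁ b' n ≤ s} G') :
    G = (ℓ : ℤ) * G' + (a₁ : ℤ) * ((ℓ : ℤ) - 1) := by
  have i0 : Fin m := ⟨0, hm⟩
  have hℓ0 : 0 < ℓ := by
    rcases Nat.eq_zero_or_pos ℓ with h0 | h; swap; · exact h
    exfalso
    have : b i0 = 0 := by
      have := Finset.gcd_eq_zero_iff.mp (hℓ.symm.trans h0) i0 (Finset.mem_univ i0)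
      exact this
    exact (hb i0).ne' this
  have hl : (0:ℤ) < ℓ := by exact_mod_cast hℓ0
  have hcopN : Nat.Coprime a₁ ℓ := by rw [hℓ]; exact hgcd
  have hcop : IsCoprime (a₁ : ℤ) (ℓ : ℤ) := by
    rw [Int.isCoprime_iff_gcd_eq_one, Int.gcd_natCast_natCast]
    exact hcopN
  have key := dRep_key a₁ b b' ℓ hℓ0 hcop hb'
  -- lower bound
  have h1 : (ℓ : ℤ) * G' + a₁ * ((ℓ:ℤ) - 1) ≤ G := by
    have hr : ℓ - 1 < ℓ := by omega
    have := key G' (ℓ - 1) hr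
    have hcast : ((ℓ - 1 : ℕ) : ℤ) = (ℓ : ℤ) - 1 := by
      push_cast [hℓ0]; ring
    rw [hcast] at this
    exact hG.2 (by rw [Set.mem_setOf_eq, this]; exact hG'.1)
  -- upper bound: write G = ℓ * n + a₁ * r with 0 ≤ r < ℓ
  obtain ⟨u, v, huv⟩ := hcop
  set R : ℤ := (u * G) % ℓ with hR
  have hR0 : 0 ≤ R := Int.emod_nonneg _ hl.ne'
  have hRl : R < ℓ := Int.emod_lt_of_pos _ hl
  have hdvd : (ℓ : ℤ) ∣ G - a₁ * R := by
    have h2 : (ℓ:ℤ) ∣ u * G - R := Int.dvd_self_sub_of_emod_eq rfl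
    obtain ⟨k, hk⟩ := h2
    refine ⟨a₁ * k + v * G, ?_⟩
    have : (a₁:ℤ) * R = a₁ * (u * G) - a₁ * (ℓ * k) := by
      rw [← hk]; ring
    rw [this]
    linear_combination (-G) * huv
  obtain ⟨n, hn⟩ := hdvd
  have hGeq : G = (ℓ:ℤ) * n + a₁ * R := by linarith
  clear_value R
  obtain ⟨rN, rfl⟩ := Int.eq_ofNat_of_zero_le hR0
  have hrN : rN < ℓ := by exact_mod_cast hRl
  have h2 : n ≤ G' := by
    apply hG'.2
    rw [Set.mem_setOf_eq, ← key n rN hrN, ← hGeq]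
    exact hG.1
  have ha : (0:ℤ) ≤ a₁ := Int.natCast_nonneg a₁
  have hrb : (rN:ℤ) ≤ (ℓ:ℤ) - 1 := by omega
  have h3 : G ≤ (ℓ : ℤ) * G' + a₁ * ((ℓ:ℤ) - 1) := by
    rw [hGeq]
    have := mul_le_mul_of_nonneg_left hrb ha
    nlinarith
  linarith
end

section
/- Let a, b be coprime positive integers, s ≥ 0, i ∈ {0,1,…,s}, and c a positive integer divisible by a or by b. Let j be a non-negative integer with jc ≤ g(a,b;s). Then d(g(a,b;s) − jc; a, b) = i if and only if g(a,b;i−1) < g(a,b;s) − jc ≤ g(a,b;i), where g(a,b;−1) is set to −2. -/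
/-- `g2 a b s = (s+1)ab - a - b` is the generalized Frobenius number of coprime
`a`, `b` at level `s`, with the convention `g2 a b (-1) = -2`. -/
def g2 (a b : ℕ) (s : ℤ) : ℤ := if s = -1 then -2 else (s + 1) * a * b - a - b

lemma key (a b m A : ℕ) (ha : 0 < a) (hb : 0 < b) (hab : Nat.Coprime a b)
    (hA : m + b = a * A) :
    Nat.card {p : ℕ × ℕ // a * p.1 + b * p.2 = m} = A / b := by
  have hF : ∀ k : Fin (A / b), a * (A - b * (k.1 + 1)) + b * (a * (k.1 + 1) - 1) = m := by
    intro k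
    have h1 : b * (k.1 + 1) ≤ A := by
      rw [mul_comm]; exact (Nat.le_div_iff_mul_le hb).mp k.2
    have h2 : 1 ≤ a * (k.1 + 1) := Nat.one_le_iff_ne_zero.mpr (by positivity)
    zify [h1, h2]
    have hAZ : (m : ℤ) + b = a * A := by exact_mod_cast hA
    ring_nf
    ring_nf at hAZ
    linarith [hAZ]
  let F : Fin (A / b) → {p : ℕ × ℕ // a * p.1 + b * p.2 = m} :=
    fun k => ⟨(A - b * (k.1 + 1), a * (k.1 + 1) - 1), hF k⟩
  have hbij : Function.Bijective F := by
    constructor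
    · intro k1 k2 h
      have h2 := congrArg (fun p => p.1.2) h
      simp only [F] at h2
      have : a * (k1.1 + 1) = a * (k2.1 + 1) := by
        have e1 : 1 ≤ a * (k1.1 + 1) := Nat.one_le_iff_ne_zero.mpr (by positivity)
        have e2 : 1 ≤ a * (k2.1 + 1) := Nat.one_le_iff_ne_zero.mpr (by positivity)
        omega
      have := Nat.eq_of_mul_eq_mul_left ha this
      exact Fin.ext (by omega)
    · rintro ⟨⟨x, y⟩, hxy⟩
      simp only at hxy
      have hx : x ≤ A := by
        by_contra hcon
        push_neg at hcon
        have : a * A < a * x := (Nat.mul_lt_mul_left ha).mpr hcon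
        omega
      have hby : b * (y + 1) = a * (A - x) := by
        zify [hx]
        push_cast at hxy hA ⊢
        linarith
      have hd : a ∣ y + 1 := hab.dvd_of_dvd_mul_left ⟨A - x, hby⟩
      obtain ⟨t, ht⟩ := hd
      have ht1 : 1 ≤ t := by
        rcases Nat.eq_zero_or_pos t with h0 | h
        · subst h0; simp at ht
        · exact h
      have hbt : b * t = A - x := by
        have : a * (b * t) = a * (A - x) := by
          rw [← hby, ht]; ring
        exact Nat.eq_of_mul_eq_mul_left ha this
      have hk : t - 1 < A / b := by
        have h5 : t * b ≤ A := by rw [mul_comm]; omega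
        have := (Nat.le_div_iff_mul_le hb).mpr h5
        omega
      refine ⟨⟨t - 1, hk⟩, ?_⟩
      apply Subtype.ext
      simp only [F]
      have ht2 : t - 1 + 1 = t := by omega
      rw [ht2]
      have : b * t ≤ A := by omega
      exact Prod.ext (by omega) (by omega)
  rw [Nat.card_congr (Equiv.ofBijective F hbij).symm, Nat.card_eq_fintype_card, Fintype.card_fin]

lemma d2_key (a b m A : ℕ) (ha : 0 < a) (hb : 0 < b) (hab : Nat.Coprime a b)
    (hA : m + b = a * A) : d2 a b (m : ℤ) = A / b := by
  rw [d2, Nat.card_congr (Equiv.subtypeEquivRight (q := fun p : ℕ × ℕ => a * p.1 + b * p.2 = m)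
    (fun p => by constructor <;> intro h <;> exact_mod_cast h))]
  exact key a b m A ha hb hab hA

lemma d2_symm (a b : ℕ) (n : ℤ) : d2 a b n = d2 b a n := by
  rw [d2, d2]
  exact Nat.card_congr ⟨fun p => ⟨p.1.swap, by have := p.2; simp [Prod.swap]; linarith⟩,
    fun p => ⟨p.1.swap, by have := p.2; simp [Prod.swap]; linarith⟩,
    fun p => by ext <;> simp, fun p => by ext <;> simp⟩

lemma g2_symm (a b : ℕ) (s : ℤ) : g2 a b s = g2 b a s := by
  unfold g2; split <;> ring

lemma main_aux (a b : ℕ) (ha : 0 < a) (hb : 0 < b) (hab : Nat.Coprime a b)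
    (i : ℕ) (n : ℤ) (hn : 0 ≤ n) (hdvd : (a : ℤ) ∣ n + b) :
    d2 a b n = i ↔ g2 a b ((i : ℤ) - 1) < n ∧ n ≤ g2 a b i := by
  lift n to ℕ using hn with m
  obtain ⟨A, hA⟩ : a ∣ m + b := by
    have : (a : ℤ) ∣ ((m + b : ℕ) : ℤ) := by push_cast; exact hdvd
    exact_mod_cast this
  rw [d2_key a b m A ha hb hab hA]
  have hAZ : (m : ℤ) + b = a * A := by exact_mod_cast hA
  have haZ : (1 : ℤ) ≤ a := by exact_mod_cast ha
  have hbZ : (1 : ℤ) ≤ b := by exact_mod_cast hb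
  have hdiv : A / b = i ↔ i * b ≤ A ∧ A < (i + 1) * b := by
    constructor
    · intro h
      subst h
      exact ⟨(Nat.le_div_iff_mul_le hb).mp le_rfl, (Nat.div_lt_iff_lt_mul hb).mp (Nat.lt_succ_self _)⟩
    · rintro ⟨h1, h2⟩
      have e1 := (Nat.le_div_iff_mul_le hb).mpr h1
      have e2 := (Nat.div_lt_iff_lt_mul hb).mpr h2
      omega
  rw [hdiv]
  have hiZ : (0:ℤ) ≤ i := Int.natCast_nonneg i
  rcases Nat.eq_zero_or_pos i with hi0 | hi1
  · subst hi0
    have E1 : g2 a b (((0:ℕ):ℤ) - 1) = -2 := if_pos (by norm_num)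
    have E2 : g2 a b ((0:ℕ):ℤ) = (((0:ℕ):ℤ) + 1) * a * b - a - b := if_neg (by norm_num)
    rw [E1, E2]
    push_cast
    constructor
    · rintro ⟨h1, h2⟩
      have h2Z : (A:ℤ) < 1 * b := by exact_mod_cast h2
      constructor
      · linarith
      · nlinarith
    · rintro ⟨h1, h2⟩
      have hA2 : (a:ℤ) * A ≤ a * b - a := by linarith
      have hAb : (A:ℤ) < b := by nlinarith
      have : A < b := by exact_mod_cast hAb
      omega
  · have hne1 : ((i:ℤ) - 1) ≠ -1 := by omega
    have hne2 : ((i:ℤ)) ≠ -1 := by omega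
    simp only [g2, if_neg hne1, if_neg hne2]
    constructor
    · rintro ⟨h1, h2⟩
      have h1Z : (i:ℤ) * b ≤ A := by exact_mod_cast h1
      have h2Z : (A:ℤ) < (i + 1) * b := by exact_mod_cast h2
      constructor
      · -- i*b ≤ A → i*a*b ≤ a*A = m + b → m ≥ i a b - b > (i-1+1) a b - a - b
        nlinarith
      · -- A < (i+1)b → A ≤ (i+1)b - 1 → aA ≤ (i+1)ab - a → m ≤ (i+1)ab - a - b
        nlinarith
    · rintro ⟨h1, h2⟩
      have h1Z : (i:ℤ) * b ≤ A := by
        -- m > i*a*b - a - b → a*A = m + b > i*a*b - a → A > i*b - 1 → A ≥ i*b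
        have : (i:ℤ) * b - 1 < A := by nlinarith
        omega
      have h2Z : (A:ℤ) < (i + 1) * b := by
        -- m ≤ (i+1)ab - a - b → aA ≤ (i+1)ab - a → A ≤ (i+1)b - 1
        nlinarith
      exact ⟨by exact_mod_cast h1Z, by exact_mod_cast h2Z⟩

/-- Let `c` be divisible by `a` or `b`, `0 ≤ i ≤ s`, and `j ≥ 0` with
`j*c ≤ g(a,b;s)`. Then `d(g(a,b;s) - j*c; a, b) = i` iff
`g(a,b;i-1) < g(a,b;s) - j*c ≤ g(a,b;i)`. -/
theorem stmt5 (a b : ℕ) (ha : 0 < a) (hb : 0 < b) (hab : Nat.gcd a b = 1)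
    (s i : ℕ) (hi : i ≤ s) (c : ℕ) (hc : 0 < c) (hdvd : a ∣ c ∨ b ∣ c)
    (j : ℕ) (hj : (j : ℤ) * c ≤ g2 a b s) :
    d2 a b (g2 a b s - j * c) = i ↔
      g2 a b ((i : ℤ) - 1) < g2 a b s - j * c ∧ g2 a b s - j * c ≤ g2 a b i := by
  have hab' : Nat.Coprime a b := hab
  have hgs : g2 a b s = ((s:ℤ) + 1) * a * b - a - b := if_neg (by omega)
  have hn0 : (0:ℤ) ≤ g2 a b s - j * c := by linarith
  rcases hdvd with hda | hdb
  · apply main_aux a b ha hb hab' i _ hn0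
    obtain ⟨e, he⟩ := hda
    have : g2 a b s - j * c + b = a * (((s:ℤ) + 1) * b - 1 - j * e) := by
      rw [hgs]
      have hce : (c:ℤ) = a * e := by exact_mod_cast he
      rw [hce]; ring
    rw [this]
    exact Dvd.intro _ rfl
  · rw [d2_symm, g2_symm a b ((i:ℤ) - 1), g2_symm a b (i:ℤ)]
    apply main_aux b a hb ha hab'.symm i _ hn0
    obtain ⟨e, he⟩ := hdb
    have : g2 a b s - j * c + a = b * (((s:ℤ) + 1) * a - 1 - j * e) := by
      rw [hgs]
      have hce : (c:ℤ) = b * e := by exact_mod_cast he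
      rw [hce]; ring
    rw [this]
    exact Dvd.intro _ rfl
end

section
/- Let a₁, a₂, a₃ be positive integers with gcd(a₁,a₂,a₃)=1, set d₁ = gcd(a₂,a₃), and suppose a₂/d₁ divides a₁ or a₃/d₁ divides a₁. Then for every s ≥ 0, g(a₁, a₂, a₃; Σ_{j=0}^{s} ⌈ j·a₂a₃ / (a₁d₁²) ⌉) = (s+1)·a₂a₃/d₁ + a₁d₁ − a₁ − a₂ − a₃. -/
/-!
Write `a₂ = d b₂`, `a₃ = d b₃` and `a₁ = b₂ c`. Since `b₂ c` is prime to `d` and `d b₃` is prime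
to `b₂`, every `n` can be written `n = a₁ x₀ + a₃ z₀ + d b₂ W` with `0 ≤ x₀ < d`, `0 ≤ z₀ < b₂`,
and the solutions of `a₁ x + a₂ y + a₃ z = n` are exactly `x = x₀ + d u`, `z = z₀ + b₂ v`,
`y = W - c u - b₃ v`. So `d(n; A)` counts the points `(u, v) ∈ ℕ²` with `c u + b₃ v ≤ W`.
For `W = s b₃ - 1` the column `v` holds `⌈(s - v) b₃ / c⌉` of them, which sums to
`∑_{j ≤ s} ⌈j b₃ / c⌉`, while for `W ≥ s b₃` the point `(0, s)` comes in as well. Hence the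
largest admissible `n` has `x₀ = d - 1`, `z₀ = b₂ - 1`, `W = s b₃ - 1`. The case `a₃ / d ∣ a₁`
follows by exchanging `a₂` and `a₃`.
-/

/-- `d3 a b c n` is the number of triples `(x,y,z)` of non-negative integers
with `a*x + b*y + c*z = n`. -/
noncomputable def d3 (a b c : ℕ) (n : ℤ) : ℕ :=
  Nat.card {p : ℕ × ℕ × ℕ // (a : ℤ) * p.1 + (b : ℤ) * p.2.1 + (c : ℤ) * p.2.2 = n}

open Finset

lemma exists_dvd_sub_mul {a d : ℕ} (hd : 0 < d) (had : Nat.Coprime a d) (n : ℤ) :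
    ∃ x₀ < d, (d : ℤ) ∣ n - a * x₀ := by
  have : NeZero d := ⟨hd.ne'⟩
  have hu : IsUnit (a : ZMod d) := (ZMod.isUnit_iff_coprime a d).2 had
  refine ⟨((a : ZMod d)⁻¹ * n).val, ZMod.val_lt _, (ZMod.intCast_zmod_eq_zero_iff_dvd _ _).1 ?_⟩
  push_cast
  rw [ZMod.natCast_val, ZMod.cast_id, ← mul_assoc, ZMod.mul_inv_of_unit _ hu, one_mul, sub_self]

lemma exists_eq_mul_add_mul_add_mul {A B p q : ℕ} (hp : 0 < p) (hq : 0 < q)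
    (hAp : Nat.Coprime A p) (hBq : Nat.Coprime B q) (hqA : q ∣ A) (hpB : p ∣ B) (n : ℤ) :
    ∃ x₀ < p, ∃ z₀ < q, ∃ W : ℤ, n = A * x₀ + B * z₀ + p * q * W := by
  obtain ⟨x₀, hx₀, hpx⟩ := exists_dvd_sub_mul hp hAp n
  obtain ⟨z₀, hz₀, hqz⟩ := exists_dvd_sub_mul hq hBq n
  have hpq : IsCoprime (p : ℤ) q :=
    Nat.isCoprime_iff_coprime.2 (Nat.Coprime.coprime_dvd_left hqA hAp).symm
  have hpB' : (p : ℤ) ∣ B * z₀ := dvd_mul_of_dvd_left (Int.natCast_dvd_natCast.2 hpB) _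
  have hqA' : (q : ℤ) ∣ A * x₀ := dvd_mul_of_dvd_left (Int.natCast_dvd_natCast.2 hqA) _
  obtain ⟨W, hW⟩ :=
    hpq.mul_dvd (dvd_sub hpx hpB') (by simpa [sub_right_comm] using dvd_sub hqz hqA')
  exact ⟨x₀, hx₀, z₀, hz₀, W, by linear_combination hW⟩

lemma exists_eq_add_mul_of_dvd_mul_sub {a d x x₀ : ℕ} (had : Nat.Coprime a d) (hx₀ : x₀ < d)
    (h : (d : ℤ) ∣ a * x - a * x₀) : ∃ u, x = x₀ + d * u := by
  have hmod : a * x₀ ≡ a * x [MOD d] := Nat.modEq_iff_dvd.2 (by exact_mod_cast h)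
  have hx : x₀ % d = x % d := hmod.cancel_left_of_coprime had.symm
  rw [Nat.mod_eq_of_lt hx₀] at hx
  exact ⟨x / d, by rw [hx, Nat.mod_add_div]⟩

lemma lt_ceil_div_iff_mul_lt {c m u : ℕ} (hc : 0 < c) : u < ⌈(m : ℚ) / c⌉₊ ↔ c * u < m := by
  rw [Nat.lt_ceil, lt_div_iff₀ (by positivity), mul_comm]
  norm_cast

def trianglePoints (c b : ℕ) (W : ℤ) : Set (ℕ × ℕ) := {q | (c * q.1 + b * q.2 : ℤ) ≤ W}

lemma trianglePoints_finite {c b : ℕ} (hc : 0 < c) (hb : 0 < b) (W : ℤ) :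
    (trianglePoints c b W).Finite := by
  refine ((Set.finite_Iic W.toNat).prod (Set.finite_Iic W.toNat)).subset ?_
  rintro ⟨u, v⟩ (h : (c * u + b * v : ℤ) ≤ W)
  have hu : (u : ℤ) ≤ c * u := le_mul_of_one_le_left (by positivity) (by exact_mod_cast hc)
  have hv : (v : ℤ) ≤ b * v := le_mul_of_one_le_left (by positivity) (by exact_mod_cast hb)
  constructor <;> simp only [Set.mem_Iic] <;> omega

lemma mem_trianglePoints_mul_sub_one {c b s u v : ℕ} (hc : 0 < c) :
    (u, v) ∈ trianglePoints c b (s * b - 1) ↔ v < s ∧ u < ⌈((s - v : ℕ) * b : ℚ) / c⌉₊ := by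
  rw [← Nat.cast_mul (α := ℚ), lt_ceil_div_iff_mul_lt hc, Nat.sub_mul, Nat.lt_sub_iff_add_lt]
  change (c * u + b * v : ℤ) ≤ s * b - 1 ↔ _
  rw [Int.le_sub_one_iff, mul_comm (b : ℤ)]
  norm_cast
  refine ⟨fun h => ⟨?_, h⟩, fun h => h.2⟩
  exact Nat.lt_of_mul_lt_mul_right (lt_of_le_of_lt (Nat.le_add_left _ _) h)

lemma ncard_trianglePoints_mul_sub_one {c : ℕ} (hc : 0 < c) (b s : ℕ) :
    (trianglePoints c b (s * b - 1)).ncard = ∑ j ∈ range (s + 1), ⌈(j * b : ℚ) / c⌉₊ := by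
  have hcolumns : trianglePoints c b (s * b - 1) = ↑(((range s).sigma fun v =>
      range ⌈((s - v : ℕ) * b : ℚ) / c⌉₊).map
        ((Equiv.sigmaEquivProd ℕ ℕ).trans (Equiv.prodComm ℕ ℕ)).toEmbedding) := by
    ext ⟨u, v⟩
    rw [mem_trianglePoints_mul_sub_one hc, Finset.mem_coe, Finset.mem_map_equiv]
    simp
  rw [hcolumns, Set.ncard_coe_finset, card_map, card_sigma, eq_comm, ← sum_range_reflect,
    sum_range_succ]
  simp

lemma trianglePoints_mono (c b : ℕ) : Monotone (trianglePoints c b) :=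
  fun _ _ h _ hq => le_trans hq h

lemma ncard_trianglePoints_mul_sub_one_lt {c b : ℕ} (hc : 0 < c) (hb : 0 < b) {s : ℕ} {W : ℤ}
    (hW : s * b ≤ W) :
    (trianglePoints c b (s * b - 1)).ncard < (trianglePoints c b W).ncard := by
  refine Set.ncard_lt_ncard ⟨trianglePoints_mono c b (by linarith), fun h => ?_⟩
    (trianglePoints_finite hc hb W)
  have h0s : ((0, s) : ℕ × ℕ) ∈ trianglePoints c b W := by
    change (c * 0 + b * s : ℤ) ≤ W; linarith
  have h0s' : (c * 0 + b * s : ℤ) ≤ s * b - 1 := h h0s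
  linarith

lemma d3_eq_ncard_trianglePoints {b₂ b₃ c d x₀ z₀ : ℕ} (hcd : Nat.Coprime (b₂ * c) d)
    (hdb₂ : Nat.Coprime (d * b₃) b₂) (hx₀ : x₀ < d) (hz₀ : z₀ < b₂) (W : ℤ) :
    d3 (b₂ * c) (d * b₂) (d * b₃) (↑(b₂ * c) * x₀ + ↑(d * b₃) * z₀ + d * b₂ * W) =
      (trianglePoints c b₃ W).ncard := by
  have hd : 0 < d := by omega
  have hb₂ : 0 < b₂ := by omega
  rw [d3, ← Nat.card_coe_set_eq]
  symm
  have hy (q : trianglePoints c b₃ W) :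
      ((W - c * q.1.1 - b₃ * q.1.2).toNat : ℤ) = W - c * q.1.1 - b₃ * q.1.2 :=
    Int.toNat_of_nonneg (by have : (c * q.1.1 + b₃ * q.1.2 : ℤ) ≤ W := q.2; linarith)
  refine Nat.card_eq_of_bijective
    (fun q => ⟨(x₀ + d * q.1.1, (W - c * q.1.1 - b₃ * q.1.2).toNat, z₀ + b₂ * q.1.2), ?_⟩)
    ⟨fun q q' h => ?_, fun ⟨⟨x, y, z⟩, h⟩ => ?_⟩
  · push_cast
    rw [hy]
    ring
  · simp only [Subtype.mk.injEq, Prod.mk.injEq] at h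
    exact Subtype.ext (Prod.ext (Nat.eq_of_mul_eq_mul_left hd (Nat.add_left_cancel h.1))
      (Nat.eq_of_mul_eq_mul_left hb₂ (Nat.add_left_cancel h.2.2)))
  · push_cast at h
    obtain ⟨u, rfl⟩ := exists_eq_add_mul_of_dvd_mul_sub (x := x) hcd hx₀
      ⟨b₂ * W + b₃ * z₀ - b₂ * y - b₃ * z, by push_cast; linear_combination h⟩
    obtain ⟨v, rfl⟩ := exists_eq_add_mul_of_dvd_mul_sub (x := z) hdb₂ hz₀
      ⟨c * x₀ + d * W - c * (x₀ + d * u) - d * y, by push_cast at h ⊢; linear_combination h⟩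
    have hy' : (y : ℤ) = W - c * u - b₃ * v := by
      have : (d * b₂ : ℤ) ≠ 0 := by positivity
      refine mul_left_cancel₀ this ?_
      push_cast at h
      linear_combination h
    refine ⟨⟨(u, v), show (c * u + b₃ * v : ℤ) ≤ W by linarith⟩, ?_⟩
    simp only [Subtype.mk.injEq, Prod.mk.injEq, true_and, and_true]
    omega

theorem isGreatest_d3_le_sum_ceil {b₂ b₃ c d : ℕ} (hd : 0 < d) (hb₂ : 0 < b₂) (hb₃ : 0 < b₃)
    (hc : 0 < c) (hcd : Nat.Coprime (b₂ * c) d) (hb : Nat.Coprime b₂ b₃) (s : ℕ) :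
    IsGreatest {n : ℤ | d3 (b₂ * c) (d * b₂) (d * b₃) n ≤ ∑ j ∈ range (s + 1), ⌈(j * b₃ : ℚ) / c⌉₊}
      ((s + 1) * (d * b₂ * b₃) + b₂ * c * d - b₂ * c - d * b₂ - d * b₃) := by
  have hdb₂ : Nat.Coprime (d * b₃) b₂ :=
    (Nat.Coprime.coprime_dvd_left (dvd_mul_right b₂ c) hcd).symm.mul_left hb.symm
  refine ⟨?_, fun n hn => ?_⟩
  · have h := d3_eq_ncard_trianglePoints hcd hdb₂ (Nat.sub_lt hd one_pos) (Nat.sub_lt hb₂ one_pos)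
      (s * b₃ - 1)
    rw [ncard_trianglePoints_mul_sub_one hc] at h
    refine le_of_eq (Eq.trans ?_ h)
    congr 1
    push_cast [Nat.cast_pred hd, Nat.cast_pred hb₂]
    ring
  · obtain ⟨x₀, hx₀, z₀, hz₀, W, rfl⟩ := exists_eq_mul_add_mul_add_mul hd hb₂ hcd hdb₂
      (dvd_mul_right _ _) (dvd_mul_right _ _) n
    have hW : W ≤ s * b₃ - 1 := by
      by_contra! hW
      have h := ncard_trianglePoints_mul_sub_one_lt hc hb₃ (s := s) (by linarith : (s * b₃ : ℤ) ≤ W)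
      rw [ncard_trianglePoints_mul_sub_one hc, ← d3_eq_ncard_trianglePoints hcd hdb₂ hx₀ hz₀] at h
      exact absurd hn (not_le.2 h)
    have hx : (b₂ * c : ℤ) * x₀ ≤ b₂ * c * (d - 1) := by gcongr; omega
    have hz : (d * b₃ : ℤ) * z₀ ≤ d * b₃ * (b₂ - 1) := by gcongr; omega
    have hW' : (d * b₂ : ℤ) * W ≤ d * b₂ * (s * b₃ - 1) := by gcongr
    push_cast
    linarith

theorem isGreatest_d3_le_of_div_gcd_dvd (a₁ a₂ a₃ d₁ : ℕ) (h₁ : 0 < a₁) (h₂ : 0 < a₂)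
    (h₃ : 0 < a₃) (hgcd : Nat.gcd a₁ (Nat.gcd a₂ a₃) = 1) (hd₁ : d₁ = Nat.gcd a₂ a₃)
    (hdvd : a₂ / d₁ ∣ a₁) (s : ℕ) :
    IsGreatest
      {n : ℤ | d3 a₁ a₂ a₃ n ≤
        ∑ j ∈ range (s + 1), (⌈(j * a₂ * a₃ : ℚ) / (a₁ * d₁ ^ 2)⌉).toNat}
      (((s : ℤ) + 1) * (a₂ * a₃) / d₁ + a₁ * d₁ - a₁ - a₂ - a₃) := by
  have hd : 0 < d₁ := hd₁ ▸ Nat.gcd_pos_of_pos_left _ h₂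
  obtain ⟨b₂, rfl⟩ : d₁ ∣ a₂ := hd₁ ▸ Nat.gcd_dvd_left _ _
  obtain ⟨b₃, rfl⟩ : d₁ ∣ a₃ := hd₁ ▸ Nat.gcd_dvd_right _ _
  rw [Nat.mul_div_cancel_left _ hd] at hdvd
  obtain ⟨c, rfl⟩ := hdvd
  have hb₂ := Nat.pos_of_mul_pos_left h₂
  have hb₃ := Nat.pos_of_mul_pos_left h₃
  have hc := Nat.pos_of_mul_pos_left h₁
  have hb : Nat.Coprime b₂ b₃ := by
    rw [Nat.gcd_mul_left] at hd₁
    exact (Nat.mul_eq_left hd.ne').1 hd₁.symm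
  have hcd : Nat.Coprime (b₂ * c) d₁ := hd₁ ▸ hgcd
  have hceil (j : ℕ) : (⌈(j * ↑(d₁ * b₂) * ↑(d₁ * b₃) : ℚ) / (↑(b₂ * c) * d₁ ^ 2)⌉).toNat =
      ⌈(j * b₃ : ℚ) / c⌉₊ := by
    rw [Int.ceil_toNat]
    congr 1
    push_cast
    field_simp
  have hval : ((s : ℤ) + 1) * (↑(d₁ * b₂) * ↑(d₁ * b₃)) / d₁ =
      (s + 1) * (d₁ * b₂ * b₃) := by
    push_cast
    exact Int.ediv_eq_of_eq_mul_left (by exact_mod_cast hd.ne') (by ring)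
  simp_rw [hceil, hval]
  convert isGreatest_d3_le_sum_ceil hd hb₂ hb₃ hc hcd hb s using 1
  push_cast
  ring

lemma d3_swap (a b c : ℕ) (n : ℤ) : d3 a b c n = d3 a c b n :=
  Nat.card_congr <| (Equiv.prodCongr (Equiv.refl ℕ) (Equiv.prodComm ℕ ℕ)).subtypeEquiv
    fun p => by simp only [Equiv.prodCongr_apply, Equiv.coe_refl, Equiv.coe_prodComm,
      Prod.map_fst, Prod.map_snd, id_eq, Prod.fst_swap, Prod.snd_swap, add_right_comm]

/-- Main theorem: if `d₁ = gcd(a₂,a₃)` and `a₂/d₁ ∣ a₁` or `a₃/d₁ ∣ a₁`, then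
`g(a₁,a₂,a₃; ∑_{j=0}^s ⌈j a₂ a₃ /(a₁ d₁²)⌉) = (s+1) a₂ a₃ / d₁ + a₁ d₁ - a₁ - a₂ - a₃`. -/
theorem stmt7 (a₁ a₂ a₃ : ℕ) (h₁ : 0 < a₁) (h₂ : 0 < a₂) (h₃ : 0 < a₃)
    (hgcd : Nat.gcd a₁ (Nat.gcd a₂ a₃) = 1)
    (d₁ : ℕ) (hd₁ : d₁ = Nat.gcd a₂ a₃)
    (hdvd : a₂ / d₁ ∣ a₁ ∨ a₃ / d₁ ∣ a₁) (s : ℕ) :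
    IsGreatest
      {n : ℤ | d3 a₁ a₂ a₃ n ≤
        ∑ j ∈ Finset.range (s + 1), (⌈(j * a₂ * a₃ : ℚ) / (a₁ * d₁ ^ 2)⌉).toNat}
      (((s : ℤ) + 1) * (a₂ * a₃) / d₁ + a₁ * d₁ - a₁ - a₂ - a₃) := by
  rcases hdvd with h | h
  · exact isGreatest_d3_le_of_div_gcd_dvd a₁ a₂ a₃ d₁ h₁ h₂ h₃ hgcd hd₁ h s
  · have := isGreatest_d3_le_of_div_gcd_dvd a₁ a₃ a₂ d₁ h₁ h₃ h₂ (by rwa [Nat.gcd_comm a₃])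
      (by rw [hd₁, Nat.gcd_comm]) h s
    simp_rw [d3_swap a₁ a₃, mul_right_comm _ (a₃ : ℚ), mul_comm (a₃ : ℤ)] at this
    convert this using 1
    ring
end

section
/- Let a₁, a₂, a₃ be positive integers with gcd(a₁,a₂,a₃)=1, d₁ = gcd(a₂,a₃), and suppose a₂/d₁ divides a₁. Then the number of representations of g(a₂/d₁, a₃/d₁; s) as a non-negative combination of a₁, a₂/d₁, a₃/d₁ equals Σ_{j=0}^{s} ⌈ j·a₂a₃ / (a₁d₁²) ⌉. -/
lemma lt_toNat_ceil_div_iff {K : Type*} [Field K] [LinearOrder K] [IsStrictOrderedRing K]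
    [FloorRing K] {m N x : ℕ} (hm : 0 < m) :
    x < ⌈(N : K) / m⌉.toNat ↔ m * x < N := by
  rw [Int.lt_toNat, Int.lt_ceil, Int.cast_natCast, lt_div_iff₀ (by exact_mod_cast hm), mul_comm]
  exact_mod_cast Iff.rfl

lemma mul_add_mul_add_mul_eq_sub_sub_iff {b c m s x y z : ℕ} (hb : 0 < b) (hbc : b.Coprime c) :
    ((b * m : ℕ) : ℤ) * x + (b : ℤ) * y + (c : ℤ) * z = ((s : ℤ) + 1) * b * c - b - c ↔
      ∃ j ≤ s, z + 1 = b * (s + 1 - j) ∧ m * x + y + 1 = j * c := by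
  constructor
  · intro h
    have hb_dvd : b ∣ c * (z + 1) := by
      rw [← Int.natCast_dvd_natCast]
      exact ⟨((s : ℤ) + 1) * c - 1 - m * x - y, by push_cast at h ⊢; linear_combination h⟩
    obtain ⟨k, hk⟩ := hbc.dvd_of_dvd_mul_left hb_dvd
    have hkz : (z : ℤ) + 1 = b * k := by exact_mod_cast hk
    have hcancel : (b : ℤ) * (m * x + y + 1 + c * k) = b * (c * (s + 1)) := by
      push_cast at h
      linear_combination h - (c : ℤ) * hkz
    have hsum : m * x + y + 1 + c * k = c * (s + 1) := by
      exact_mod_cast mul_left_cancel₀ (by exact_mod_cast hb.ne') hcancel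
    obtain ⟨j, hj⟩ := Nat.exists_eq_add_of_le
      (Nat.lt_of_mul_lt_mul_left (by omega : c * k < c * (s + 1))).le
    have hk0 : k ≠ 0 := by rintro rfl; omega
    refine ⟨j, by omega, by rw [hk]; congr 1; omega, ?_⟩
    rw [hj, mul_add] at hsum
    linarith [mul_comm c j]
  · rintro ⟨j, hj, hz, hxy⟩
    have hz' : (z : ℤ) + 1 = b * ((s + 1 - j : ℕ) : ℤ) := by exact_mod_cast hz
    have hxy' : (m : ℤ) * x + y + 1 = j * c := by exact_mod_cast hxy
    rw [Nat.cast_sub (by omega)] at hz'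
    push_cast at hz' ⊢
    linear_combination (b : ℤ) * hxy' + (c : ℤ) * hz'

lemma d3_eq_card_of_coprime {b c m s : ℕ} (hb : 0 < b) (hbc : b.Coprime c) :
    d3 (b * m) b c (((s : ℤ) + 1) * b * c - b - c) =
      Nat.card {q : ℕ × ℕ // q.2 ≤ s ∧ m * q.1 < q.2 * c} := by
  have hdiv {j z : ℕ} (hz : z + 1 = b * (s + 1 - j)) : (z + 1) / b = s + 1 - j := by
    rw [hz, Nat.mul_div_cancel_left _ hb]
  refine Nat.card_eq_of_bijective (fun p => ⟨(p.1.1, s + 1 - (p.1.2.2 + 1) / b), ?_⟩) ⟨?_, ?_⟩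
  · obtain ⟨⟨x, y, z⟩, hp⟩ := p
    dsimp only at hp
    obtain ⟨j, hj, hz, hxy⟩ := (mul_add_mul_add_mul_eq_sub_sub_iff hb hbc).1 hp
    show s + 1 - (z + 1) / b ≤ s ∧ m * x < (s + 1 - (z + 1) / b) * c
    rw [hdiv hz, Nat.sub_sub_self (by omega)]
    omega
  · rintro ⟨⟨x₁, y₁, z₁⟩, hp₁⟩ ⟨⟨x₂, y₂, z₂⟩, hp₂⟩ heq
    obtain ⟨j₁, hj₁, hz₁, hxy₁⟩ := (mul_add_mul_add_mul_eq_sub_sub_iff hb hbc).1 hp₁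
    obtain ⟨j₂, hj₂, hz₂, hxy₂⟩ := (mul_add_mul_add_mul_eq_sub_sub_iff hb hbc).1 hp₂
    simp only [Subtype.mk.injEq, Prod.mk.injEq, hdiv hz₁, hdiv hz₂] at heq
    obtain ⟨rfl, hj⟩ := heq
    obtain rfl : j₁ = j₂ := by omega
    simp only [Subtype.mk.injEq, Prod.mk.injEq, true_and]
    dsimp only at hxy₁ hxy₂ hz₁ hz₂
    omega
  · rintro ⟨⟨x, j⟩, hj, hx⟩
    dsimp only at hj hx
    have hz : b * (s + 1 - j) - 1 + 1 = b * (s + 1 - j) :=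
      Nat.sub_add_cancel (Nat.mul_pos hb (by omega))
    refine ⟨⟨(x, j * c - m * x - 1, b * (s + 1 - j) - 1),
      (mul_add_mul_add_mul_eq_sub_sub_iff hb hbc).2 ⟨j, hj, hz, by dsimp only; omega⟩⟩, ?_⟩
    simp only [Subtype.mk.injEq, Prod.mk.injEq, true_and, hz, Nat.mul_div_cancel_left _ hb]
    omega

lemma card_mul_lt_eq_sum_ceil_div {c m s : ℕ} (hm : 0 < m) :
    Nat.card {q : ℕ × ℕ // q.2 ≤ s ∧ m * q.1 < q.2 * c} =
      ∑ j ∈ Finset.range (s + 1), ⌈((j * c : ℕ) : ℚ) / m⌉.toNat := by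
  let e : {q : ℕ × ℕ // q.2 ≤ s ∧ m * q.1 < q.2 * c} ≃
      Σ j : Fin (s + 1), Fin ⌈((j * c : ℕ) : ℚ) / m⌉.toNat :=
    { toFun q := ⟨⟨q.1.2, Nat.lt_succ_of_le q.2.1⟩, ⟨q.1.1, (lt_toNat_ceil_div_iff hm).2 q.2.2⟩⟩
      invFun p := ⟨(p.2, p.1), Nat.le_of_lt_succ p.1.2, (lt_toNat_ceil_div_iff hm).1 p.2.2⟩
      left_inv _ := rfl
      right_inv _ := rfl }
  rw [Nat.card_congr e, Nat.card_sigma]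
  simp only [Nat.card_eq_fintype_card, Fintype.card_fin]
  exact Fin.sum_univ_eq_sum_range (fun j => ⌈((j * c : ℕ) : ℚ) / m⌉.toNat) (s + 1)

theorem stmt9_general (a₁ a₂ a₃ : ℕ) (h₁ : 0 < a₁) (h₂ : 0 < a₂)
    (d₁ : ℕ) (hd₁ : d₁ = Nat.gcd a₂ a₃)
    (hdvd : a₂ / d₁ ∣ a₁) (s : ℕ) :
    d3 a₁ (a₂ / d₁) (a₃ / d₁)
        (((s : ℤ) + 1) * (a₂ / d₁ : ℕ) * (a₃ / d₁ : ℕ) - (a₂ / d₁ : ℕ) - (a₃ / d₁ : ℕ)) =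
      ∑ j ∈ Finset.range (s + 1), (⌈(j * a₂ * a₃ : ℚ) / (a₁ * d₁ ^ 2)⌉).toNat := by
  have hd₁pos : 0 < d₁ := hd₁ ▸ Nat.gcd_pos_of_pos_left a₃ h₂
  have hbc : (a₂ / d₁).Coprime (a₃ / d₁) := hd₁ ▸ Nat.coprime_div_gcd_div_gcd (hd₁ ▸ hd₁pos)
  obtain ⟨b, hb⟩ : d₁ ∣ a₂ := hd₁ ▸ Nat.gcd_dvd_left a₂ a₃
  obtain ⟨c, hc⟩ : d₁ ∣ a₃ := hd₁ ▸ Nat.gcd_dvd_right a₂ a₃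
  subst hb hc
  simp only [Nat.mul_div_cancel_left _ hd₁pos] at hbc hdvd ⊢
  obtain ⟨m, rfl⟩ := hdvd
  have hm : 0 < m := Nat.pos_of_mul_pos_left h₁
  have hb : 0 < b := Nat.pos_of_mul_pos_right h₁
  rw [d3_eq_card_of_coprime hb hbc, card_mul_lt_eq_sum_ceil_div hm]
  refine Finset.sum_congr rfl fun j _ => ?_
  congr 2
  have : (d₁ : ℚ) ≠ 0 := by positivity
  have : (b : ℚ) ≠ 0 := by positivity
  push_cast
  field_simp

/-- The number of representations of `g(a₂/d₁, a₃/d₁; s) = (s+1)(a₂/d₁)(a₃/d₁) - a₂/d₁ - a₃/d₁`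
by `a₁, a₂/d₁, a₃/d₁` equals `∑_{j=0}^s ⌈j a₂ a₃/(a₁ d₁²)⌉`. -/
theorem stmt9 (a₁ a₂ a₃ : ℕ) (h₁ : 0 < a₁) (h₂ : 0 < a₂) (h₃ : 0 < a₃)
    (hgcd : Nat.gcd a₁ (Nat.gcd a₂ a₃) = 1)
    (d₁ : ℕ) (hd₁ : d₁ = Nat.gcd a₂ a₃)
    (hdvd : a₂ / d₁ ∣ a₁) (s : ℕ) :
    d3 a₁ (a₂ / d₁) (a₃ / d₁)
        (((s : ℤ) + 1) * (a₂ / d₁ : ℕ) * (a₃ / d₁ : ℕ) - (a₂ / d₁ : ℕ) - (a₃ / d₁ : ℕ)) =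
      ∑ j ∈ Finset.range (s + 1), (⌈(j * a₂ * a₃ : ℚ) / (a₁ * d₁ ^ 2)⌉).toNat :=
  stmt9_general a₁ a₂ a₃ h₁ h₂ d₁ hd₁ hdvd s
end

section
/- Let a₁, a₂, a₃ be positive integers with gcd(a₁,a₂,a₃)=1, d₁ = gcd(a₂,a₃), and suppose a₂/d₁ divides a₁. Then g(a₁, a₂/d₁, a₃/d₁; Σ_{j=0}^{s} ⌈ j·a₂a₃/(a₁d₁²) ⌉) = g(a₂/d₁, a₃/d₁; s) for every s ≥ 0. -/
set_option maxHeartbeats 1000000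

lemma d3_finite (a b c : ℕ) (ha : 0 < a) (hb : 0 < b) (hc : 0 < c) (n : ℤ) :
    Finite {p : ℕ × ℕ × ℕ // (a : ℤ) * p.1 + (b : ℤ) * p.2.1 + (c : ℤ) * p.2.2 = n} := by
  have hfin : {p : ℕ × ℕ × ℕ | (a : ℤ) * p.1 + (b : ℤ) * p.2.1 + (c : ℤ) * p.2.2 = n}.Finite := by
    apply Set.Finite.subset (Set.finite_Iic (n.toNat, n.toNat, n.toNat))
    rintro ⟨x, y, z⟩ h
    simp only [Set.mem_setOf_eq] at h
    have ha1 : (1 : ℤ) ≤ a := by exact_mod_cast ha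
    have hb1 : (1 : ℤ) ≤ b := by exact_mod_cast hb
    have hc1 : (1 : ℤ) ≤ c := by exact_mod_cast hc
    have hxn : (x : ℤ) ≥ 0 := Int.natCast_nonneg x
    have hyn : (y : ℤ) ≥ 0 := Int.natCast_nonneg y
    have hzn : (z : ℤ) ≥ 0 := Int.natCast_nonneg z
    have hn0 : 0 ≤ n := by nlinarith
    have hx : (x : ℤ) ≤ n := by nlinarith
    have hy : (y : ℤ) ≤ n := by nlinarith
    have hz : (z : ℤ) ≤ n := by nlinarith
    exact ⟨(Int.le_toNat hn0).mpr hx, (Int.le_toNat hn0).mpr hy, (Int.le_toNat hn0).mpr hz⟩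
  exact hfin.to_subtype

lemma key_s10 (b c m : ℕ) (hb : 0 < b) (hc : 0 < c) (hm : 0 < m) (hbc : Nat.Coprime b c) (s : ℕ) :
    IsGreatest {n : ℤ | d3 (b * m) b c n ≤
        ∑ j ∈ Finset.range (s + 1), (⌈(j * c : ℚ) / m⌉).toNat}
      (((s : ℤ) + 1) * b * c - b - c) := by
  set cnt : ℕ → ℕ := fun j => (⌈(j * c : ℚ) / m⌉).toNat with hcnt
  have hb1 : (1 : ℤ) ≤ b := by exact_mod_cast hb
  have hc1 : (1 : ℤ) ≤ c := by exact_mod_cast hc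
  have hm1 : (1 : ℤ) ≤ m := by exact_mod_cast hm
  have hcz : ((c : ℤ)) ≠ 0 := by positivity
  have hmQ : (0 : ℚ) < m := by exact_mod_cast hm
  -- characterization of cnt
  have hcnt_lt : ∀ j x : ℕ, x < cnt j ↔ m * x < c * j := by
    intro j x
    rw [hcnt]
    rw [Int.lt_toNat, Int.lt_ceil, lt_div_iff₀ hmQ]
    push_cast
    rw [show ((x : ℚ) * m) = ((m * x : ℕ) : ℚ) by push_cast; ring,
      show ((j : ℚ) * c) = ((c * j : ℕ) : ℚ) by push_cast; ring, Nat.cast_lt]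
  have hcnt0 : cnt 0 = 0 := by simp [hcnt]
  have hcnt_pos : ∀ j : ℕ, 0 < j → 1 ≤ cnt j := by
    intro j hj
    rw [hcnt]
    have : (0 : ℚ) < (j * c : ℚ) / m := by
      have : (0:ℚ) < (j:ℚ) := by exact_mod_cast hj
      have : (0:ℚ) < (c:ℚ) := by exact_mod_cast hc
      positivity
    have h2 := Int.ceil_pos.mpr this
    exact Int.lt_toNat.mpr (by exact_mod_cast h2)
  have hsum : ∑ j ∈ Finset.range (s + 1), (⌈(j * c : ℚ) / m⌉).toNat
      = ∑ t ∈ Finset.range s, cnt (t + 1) := by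
    rw [show (∑ j ∈ Finset.range (s + 1), (⌈(j * c : ℚ) / m⌉).toNat)
        = ∑ j ∈ Finset.range (s + 1), cnt j from rfl, Finset.sum_range_succ']
    simp [hcnt0]
  constructor
  · -- membership
    show d3 (b * m) b c _ ≤ _
    rw [hsum, d3]
    set S := {p : ℕ × ℕ × ℕ // ((b * m : ℕ) : ℤ) * p.1 + (b : ℤ) * p.2.1 + (c : ℤ) * p.2.2
        = ((s : ℤ) + 1) * b * c - b - c} with hS
    have hfacts : ∀ p : S, ∃ k, 1 ≤ k ∧ k ≤ s ∧ c * k = m * p.val.1 + p.val.2.1 + 1 := by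
      rintro ⟨⟨x, y, z⟩, h⟩
      simp only at h
      have h1 : (b : ℤ) * (m * x + y + 1) = c * (((s:ℤ) + 1) * b - 1 - z) := by
        push_cast at h
        linear_combination h
      have hdvd : (c : ℤ) ∣ ((b * (m * x + y + 1) : ℕ) : ℤ) :=
        ⟨((s:ℤ) + 1) * b - 1 - z, by push_cast; linear_combination h1⟩
      have hcd2 : c ∣ b * (m * x + y + 1) := Int.natCast_dvd_natCast.mp hdvd
      have hck : c ∣ (m * x + y + 1) :=
        Nat.Coprime.dvd_of_dvd_mul_left hbc.symm hcd2
      obtain ⟨k, hk⟩ := hck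
      have hk1 : 1 ≤ k := by
        rcases Nat.eq_zero_or_pos k with rfl | h'
        · rw [Nat.mul_zero] at hk
          exact absurd hk (Nat.succ_ne_zero _)
        · exact h'
      have hkZ : (m : ℤ) * x + y + 1 = (c : ℤ) * k := by exact_mod_cast hk
      have h3 : (c : ℤ) * ((b : ℤ) * k) = (c : ℤ) * (((s:ℤ) + 1) * b - 1 - z) := by
        linear_combination h1 + (b : ℤ) * hkZ.symm
      have hbk : (b : ℤ) * k = ((s:ℤ) + 1) * b - 1 - z := mul_left_cancel₀ hcz h3
      have hzn : (0 : ℤ) ≤ z := Int.natCast_nonneg z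
      have hks : k ≤ s := by
        by_contra hcon
        push_neg at hcon
        have hsk : (s : ℤ) + 1 ≤ (k : ℤ) := by exact_mod_cast hcon
        nlinarith [mul_le_mul_of_nonneg_left hsk (by linarith : (0:ℤ) ≤ b)]
      exact ⟨k, hk1, hks, hk.symm⟩
    choose kf hkf1 hkfs hkfe using hfacts
    classical
    set F : Finset ((_ : ℕ) × ℕ) :=
      (Finset.range s).sigma (fun t => Finset.range (cnt (t + 1))) with hF
    have hmem : ∀ p : S, (⟨kf p - 1, p.val.1⟩ : (_ : ℕ) × ℕ) ∈ F := by
      intro p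
      rw [hF, Finset.mem_sigma, Finset.mem_range, Finset.mem_range]
      dsimp only
      have h1 := hkf1 p
      have h2 := hkfs p
      have h3 := hkfe p
      refine ⟨by omega, ?_⟩
      rw [show kf p - 1 + 1 = kf p from by omega, hcnt_lt]
      linarith [h3, Nat.zero_le p.val.2.1]
    have hinj : Function.Injective (fun p : S => (⟨⟨kf p - 1, p.val.1⟩, hmem p⟩ : ↥F)) := by
      rintro p q hpq
      simp only [Subtype.mk.injEq, Sigma.mk.inj_iff, heq_eq_eq] at hpq
      obtain ⟨ht, hx⟩ := hpq
      have hk : kf p = kf q := by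
        have := hkf1 p; have := hkf1 q; omega
      have he1 := hkfe p
      have he2 := hkfe q
      rw [hk, he2, hx] at he1
      -- he1 : m * q.val.1 + q.val.2.1 + 1 = m * q.val.1 + p.val.2.1 + 1  (or similar)
      have hy : p.val.2.1 = q.val.2.1 := by linarith
      obtain ⟨⟨x, y, z⟩, hp⟩ := p
      obtain ⟨⟨x', y', z'⟩, hq⟩ := q
      simp only at hx hy hp hq
      subst hx hy
      have hz : z = z' := by
        have : (c : ℤ) * z = (c : ℤ) * z' := by linarith [hp, hq]
        exact_mod_cast mul_left_cancel₀ hcz this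
      subst hz
      rfl
    calc Nat.card S ≤ Nat.card ↥F := Nat.card_le_card_of_injective _ hinj
      _ = F.card := Nat.card_eq_finsetCard F
      _ = ∑ t ∈ Finset.range s, cnt (t + 1) := by
          rw [hF, Finset.card_sigma]; simp
  · -- upper bound
    rintro n hn
    simp only [Set.mem_setOf_eq] at hn
    by_contra hcon
    push_neg at hcon
    have hn1 : ((s : ℤ) + 1) * b * c - b - c + 1 ≤ n := hcon
    -- find y₀
    haveI : NeZero c := ⟨hc.ne'⟩
    have hbu : IsUnit ((b : ℕ) : ZMod c) := (ZMod.isUnit_iff_coprime b c).mpr hbc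
    obtain ⟨y₀, hyc, hdvd0⟩ : ∃ y₀ : ℕ, y₀ < c ∧ (c : ℤ) ∣ n - (b : ℤ) * y₀ := by
      refine ⟨(((b : ℕ) : ZMod c)⁻¹ * (n : ZMod c)).val, ZMod.val_lt _, ?_⟩
      have hycast : ((((((b : ℕ) : ZMod c)⁻¹ * (n : ZMod c)).val : ℕ)) : ZMod c)
          = ((b : ℕ) : ZMod c)⁻¹ * (n : ZMod c) := ZMod.natCast_rightInverse _
      rw [← ZMod.intCast_zmod_eq_zero_iff_dvd]
      push_cast
      rw [hycast, ← mul_assoc, ZMod.mul_inv_of_unit _ hbu, one_mul]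
      ring
    have hzdvd : ∀ t : ℕ, (c : ℤ) ∣ n - (b : ℤ) * (y₀ + c * t) := by
      intro t
      obtain ⟨r, hr⟩ := hdvd0
      exact ⟨r - b * t, by push_cast; linear_combination hr⟩
    choose zf hz' using hzdvd
    have hz : ∀ t : ℕ, (c : ℤ) * zf t = n - (b : ℤ) * (y₀ + c * t) := fun t => (hz' t).symm
    have hznn : ∀ t : ℕ, t ≤ s → 0 ≤ zf t := by
      intro t ht
      have htZ : (t : ℤ) ≤ s := by exact_mod_cast ht
      have hy1 : (y₀ : ℤ) ≤ c - 1 := by omega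
      have h1 : (b : ℤ) * y₀ ≤ b * (c - 1) :=
        mul_le_mul_of_nonneg_left hy1 (by linarith)
      have h2 : (b : ℤ) * (c * t) ≤ b * (c * s) := by
        have : (c : ℤ) * t ≤ c * s := mul_le_mul_of_nonneg_left htZ (by linarith)
        exact mul_le_mul_of_nonneg_left this (by linarith)
      have h3 : (c : ℤ) * zf t ≥ 1 - c := by
        rw [hz t]
        push_cast
        nlinarith
      nlinarith
    classical
    set F' : Finset ((_ : ℕ) × ℕ) :=
      (Finset.range (s + 1)).sigma (fun t => Finset.range (max (cnt t) 1)) with hF'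
    have hmx : ∀ q : ↥F', m * q.val.2 ≤ y₀ + c * q.val.1 := by
      rintro ⟨⟨t, x⟩, hq⟩
      rw [hF', Finset.mem_sigma, Finset.mem_range, Finset.mem_range] at hq
      obtain ⟨ht, hx⟩ := hq
      simp only
      rcases lt_max_iff.mp hx with h | h
      · have := (hcnt_lt t x).mp h
        omega
      · interval_cases x
        simp
    have hts : ∀ q : ↥F', q.val.1 ≤ s := by
      rintro ⟨⟨t, x⟩, hq⟩
      rw [hF', Finset.mem_sigma, Finset.mem_range, Finset.mem_range] at hq
      exact Nat.lt_succ_iff.mp hq.1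
    set S := {p : ℕ × ℕ × ℕ // ((b * m : ℕ) : ℤ) * p.1 + (b : ℤ) * p.2.1 + (c : ℤ) * p.2.2 = n}
      with hS
    have heq : ∀ q : ↥F',
        ((b * m : ℕ) : ℤ) * (q.val.2 : ℕ) + (b : ℤ) * ((y₀ + c * q.val.1 - m * q.val.2 : ℕ) : ℤ)
          + (c : ℤ) * ((zf q.val.1).toNat : ℤ) = n := by
      intro q
      rw [Int.toNat_of_nonneg (hznn q.val.1 (hts q)), Nat.cast_sub (hmx q)]
      push_cast
      linear_combination hz q.val.1
    have hinj : Function.Injective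
        (fun q : ↥F' => (⟨(q.val.2, y₀ + c * q.val.1 - m * q.val.2, (zf q.val.1).toNat),
          heq q⟩ : S)) := by
      rintro q q' hqq
      have hmx1 := hmx q
      have hmx2 := hmx q'
      obtain ⟨⟨t, x⟩, hq⟩ := q
      obtain ⟨⟨t', x'⟩, hq'⟩ := q'
      simp only [Subtype.mk.injEq, Prod.mk.injEq] at hqq
      obtain ⟨hx, hy, -⟩ := hqq
      simp only at hmx1 hmx2 hx hy
      subst hx
      have hct : y₀ + c * t = y₀ + c * t' := by
        have h3 := congrArg (· + m * x) hy
        simpa [Nat.sub_add_cancel hmx1, Nat.sub_add_cancel hmx2] using h3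
      have ht : t = t' := by
        exact Nat.eq_of_mul_eq_mul_left hc (Nat.add_left_cancel hct)
      subst ht
      rfl
    haveI : Finite S := d3_finite (b * m) b c (by positivity) hb hc n
    have hcard : F'.card ≤ Nat.card S := by
      calc F'.card = Nat.card ↥F' := (Nat.card_eq_finsetCard F').symm
        _ ≤ Nat.card S := Nat.card_le_card_of_injective _ hinj
    have hFcard : F'.card = (∑ t ∈ Finset.range s, cnt (t + 1)) + 1 := by
      rw [hF', Finset.card_sigma]
      simp only [Finset.card_range]
      rw [Finset.sum_range_succ']
      have h1 : ∀ t ∈ Finset.range s, max (cnt (t + 1)) 1 = cnt (t + 1) := by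
        intro t _
        exact max_eq_left (hcnt_pos (t + 1) (by omega))
      rw [Finset.sum_congr rfl h1, hcnt0]
      simp
    rw [hsum] at hn
    rw [d3] at hn
    have : Nat.card S ≤ ∑ t ∈ Finset.range s, cnt (t + 1) := hn
    omega

/-- `g(a₁, a₂/d₁, a₃/d₁; ∑_{j=0}^s ⌈j a₂ a₃/(a₁ d₁²)⌉)` equals
`g(a₂/d₁, a₃/d₁; s) = (s+1)(a₂/d₁)(a₃/d₁) - a₂/d₁ - a₃/d₁`. -/
theorem stmt10 (a₁ a₂ a₃ : ℕ) (h₁ : 0 < a₁) (h₂ : 0 < a₂) (h₃ : 0 < a₃)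
    (hgcd : Nat.gcd a₁ (Nat.gcd a₂ a₃) = 1)
    (d₁ : ℕ) (hd₁ : d₁ = Nat.gcd a₂ a₃)
    (hdvd : a₂ / d₁ ∣ a₁) (s : ℕ) :
    IsGreatest
      {n : ℤ | d3 a₁ (a₂ / d₁) (a₃ / d₁) n ≤
        ∑ j ∈ Finset.range (s + 1), (⌈(j * a₂ * a₃ : ℚ) / (a₁ * d₁ ^ 2)⌉).toNat}
      (((s : ℤ) + 1) * (a₂ / d₁ : ℕ) * (a₃ / d₁ : ℕ) - (a₂ / d₁ : ℕ) - (a₃ / d₁ : ℕ)) := by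
  have hdpos : 0 < d₁ := by
    rw [hd₁]
    exact Nat.gcd_pos_of_pos_left a₃ h₂
  have hd2 : d₁ ∣ a₂ := hd₁ ▸ Nat.gcd_dvd_left a₂ a₃
  have hd3 : d₁ ∣ a₃ := hd₁ ▸ Nat.gcd_dvd_right a₂ a₃
  set b := a₂ / d₁ with hbdef
  set c := a₃ / d₁ with hcdef
  have hb : 0 < b := Nat.div_pos (Nat.le_of_dvd h₂ hd2) hdpos
  have hc : 0 < c := Nat.div_pos (Nat.le_of_dvd h₃ hd3) hdpos
  have hbc : Nat.Coprime b c := by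
    rw [hbdef, hcdef, hd₁]
    exact Nat.coprime_div_gcd_div_gcd (hd₁ ▸ hdpos)
  have hab : b * (a₁ / b) = a₁ := Nat.mul_div_cancel' hdvd
  set m := a₁ / b with hmdef
  have hm : 0 < m := by
    rcases Nat.eq_zero_or_pos m with h | h
    · rw [h, Nat.mul_zero] at hab
      omega
    · exact h
  have key' := key_s10 b c m hb hc hm hbc s
  have hbQ : (0:ℚ) < b := by exact_mod_cast hb
  have hcQ : (0:ℚ) < c := by exact_mod_cast hc
  have hmQ : (0:ℚ) < m := by exact_mod_cast hm
  have hdQ : (0:ℚ) < d₁ := by exact_mod_cast hdpos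
  have hsums : ∀ j : ℕ, (⌈(j * a₂ * a₃ : ℚ) / (a₁ * d₁ ^ 2)⌉).toNat
      = (⌈(j * c : ℚ) / m⌉).toNat := by
    intro j
    congr 2
    have e2 : (a₂ : ℚ) = b * d₁ := by exact_mod_cast (Nat.div_mul_cancel hd2).symm
    have e3 : (a₃ : ℚ) = c * d₁ := by exact_mod_cast (Nat.div_mul_cancel hd3).symm
    have e1 : (a₁ : ℚ) = b * m := by exact_mod_cast hab.symm
    rw [e1, e2, e3, div_eq_div_iff (by positivity) (by positivity)]
    ring
  have hTeq : (∑ j ∈ Finset.range (s + 1), (⌈(j * a₂ * a₃ : ℚ) / (a₁ * d₁ ^ 2)⌉).toNat)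
      = ∑ j ∈ Finset.range (s + 1), (⌈(j * c : ℚ) / m⌉).toNat :=
    Finset.sum_congr rfl (fun j _ => hsums j)
  rw [hTeq, show a₁ = b * m from hab.symm]
  exact key'
end

section
/- Let n ≥ 1 and s ≥ 0 be integers, t_k = k(k+1)/2, and d₁ = gcd(t_{n+1}, t_{n+2}). Then g(t_n, t_{n+1}, t_{n+2}; Σ_{j=0}^{s} ⌈ j·t_{n+1}t_{n+2}/(t_n·d₁²) ⌉) = (s+1)·t_{n+1}t_{n+2}/d₁ + t_n·d₁ − t_n − t_{n+1} − t_{n+2}. -/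
/-- The `k`-th triangular number `t_k = k(k+1)/2`. -/
def tri (k : ℕ) : ℕ := k * (k + 1) / 2

lemma ceil_nat_div (P Q : ℕ) (hQ : 0 < Q) : (⌈(P:ℚ)/(Q:ℚ)⌉).toNat = (P + Q - 1)/Q := by
  have hQ' : (0:ℚ) < Q := by exact_mod_cast hQ
  set q := (P + Q - 1)/Q with hq
  have key := Nat.div_add_mod (P + Q - 1) Q
  have hm := Nat.mod_lt (P + Q - 1) hQ
  have h1 : Q * q ≤ P + Q - 1 ∧ P ≤ Q * q := by
    rw [hq]
    generalize hg : Q * ((P + Q - 1)/Q) = t at key ⊢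
    omega
  have hceil : ⌈(P:ℚ)/(Q:ℚ)⌉ = (q : ℤ) := by
    rw [Int.ceil_eq_iff]
    constructor
    · rw [lt_div_iff₀ hQ']
      have h2 : Q * q < P + Q := by omega
      have h3 : (Q:ℚ) * q < P + Q := by exact_mod_cast h2
      push_cast
      nlinarith
    · rw [div_le_iff₀ hQ']
      have h3 : (P:ℚ) ≤ Q * q := by exact_mod_cast h1.2
      push_cast
      nlinarith
  rw [hceil, Int.toNat_natCast]

lemma exists_inv (α d : ℕ) (hd : 0 < d) (h : Nat.Coprime α d) (M : ℤ) :
    ∃ η : ℕ, 1 ≤ η ∧ η ≤ d ∧ (d:ℤ) ∣ M - α*η := by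
  haveI : NeZero d := ⟨hd.ne'⟩
  have hu : IsUnit (α : ZMod d) := (ZMod.isUnit_iff_coprime α d).mpr h
  obtain ⟨v, hv⟩ := hu.exists_left_inv
  set η₀ := (v * (M : ZMod d)).val with hη₀
  have hcast : ((η₀ : ℕ) : ZMod d) = v * (M : ZMod d) := by
    rw [hη₀, ZMod.natCast_val, ZMod.cast_id]
  have hval : η₀ < d := ZMod.val_lt _
  have hkey : ∀ η : ℕ, ((η:ZMod d) = v * (M:ZMod d)) → (d:ℤ) ∣ M - α*η := by
    intro η hη
    have : ((M - α*η : ℤ) : ZMod d) = 0 := by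
      push_cast
      rw [hη]
      rw [← mul_assoc, mul_comm (α : ZMod d) v, hv, one_mul]
      ring
    exact (ZMod.intCast_zmod_eq_zero_iff_dvd _ _).mp this
  by_cases hz : η₀ = 0
  · refine ⟨d, hd, le_refl d, hkey d ?_⟩
    rw [ZMod.natCast_self, ← hcast, hz, Nat.cast_zero]
  · exact ⟨η₀, Nat.one_le_iff_ne_zero.mpr hz, le_of_lt hval, hkey η₀ hcast⟩

lemma sols_finite (a b c : ℕ) (ha : 0 < a) (hb : 0 < b) (hc : 0 < c) (m : ℤ) :
    Finite {p : ℕ × ℕ × ℕ // (a : ℤ) * p.1 + (b : ℤ) * p.2.1 + (c : ℤ) * p.2.2 = m} := by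
  set K := m.toNat + 1 with hK
  apply Finite.of_injective (β := Fin K × Fin K × Fin K)
    (f := fun q => (⟨q.1.1 % K, Nat.mod_lt _ (by omega)⟩,
                    ⟨q.1.2.1 % K, Nat.mod_lt _ (by omega)⟩,
                    ⟨q.1.2.2 % K, Nat.mod_lt _ (by omega)⟩))
  rintro ⟨⟨x, y, z⟩, hp⟩ ⟨⟨x', y', z'⟩, hp'⟩ hEq
  simp only [Prod.mk.injEq, Fin.mk.injEq] at hEq
  have hb1 : ∀ (x y z : ℕ), (a : ℤ) * x + (b : ℤ) * y + (c : ℤ) * z = m →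
      x < K ∧ y < K ∧ z < K := by
    intro x y z hxyz
    have hxa : (x : ℤ) ≤ (a:ℤ) * x := by nlinarith [Int.natCast_nonneg x, (by exact_mod_cast ha : (1:ℤ) ≤ a)]
    have hyb : (y : ℤ) ≤ (b:ℤ) * y := by nlinarith [Int.natCast_nonneg y, (by exact_mod_cast hb : (1:ℤ) ≤ b)]
    have hzc : (z : ℤ) ≤ (c:ℤ) * z := by nlinarith [Int.natCast_nonneg z, (by exact_mod_cast hc : (1:ℤ) ≤ c)]
    have h1 : (0:ℤ) ≤ (a:ℤ) * x := by positivity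
    have h2 : (0:ℤ) ≤ (b:ℤ) * y := by positivity
    have h3 : (0:ℤ) ≤ (c:ℤ) * z := by positivity
    have hx : (x : ℤ) ≤ m := by linarith
    have hy : (y : ℤ) ≤ m := by linarith
    have hz : (z : ℤ) ≤ m := by linarith
    refine ⟨?_, ?_, ?_⟩ <;> omega
  obtain ⟨hx, hy, hz⟩ := hb1 x y z hp
  obtain ⟨hx', hy', hz'⟩ := hb1 x' y' z' hp'
  rw [Nat.mod_eq_of_lt hx, Nat.mod_eq_of_lt hx', Nat.mod_eq_of_lt hy, Nat.mod_eq_of_lt hy',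
      Nat.mod_eq_of_lt hz, Nat.mod_eq_of_lt hz'] at hEq
  simp only [Subtype.mk.injEq, Prod.mk.injEq]
  exact ⟨hEq.1, hEq.2.1, hEq.2.2⟩

lemma sol_structure (A B C d s : ℕ) (hA : 0 < A) (hB : 0 < B) (hC : 0 < C) (hd : 0 < d)
    (hBC : Nat.Coprime B C) (had : Nat.Coprime (A*B) d)
    (x y z : ℕ)
    (hsol : ((A*B : ℕ) : ℤ) * x + ((d*B : ℕ) : ℤ) * y + ((d*C : ℕ) : ℤ) * z
      = ((s:ℤ)+1)*d*B*C + A*B*d - A*B - d*B - d*C) :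
    ∃ X τ : ℕ, 1 ≤ X ∧ 1 ≤ τ ∧ τ ≤ s ∧ x + 1 = d * X ∧
      A*X + (y+1) = A + C*τ ∧ B*τ + (z+1) = (s+1)*B := by
  have hMn : A*B*(x+1) + d*B*(y+1) + d*C*(z+1) = d*(A*B + (s+1)*(B*C)) := by
    have : ((A*B*(x+1) + d*B*(y+1) + d*C*(z+1) : ℕ) : ℤ)
        = ((d*(A*B + (s+1)*(B*C)) : ℕ) : ℤ) := by
      push_cast
      push_cast at hsol
      linarith
    exact_mod_cast this
  have hdvd1 : d ∣ A*B*(x+1) := by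
    have hrest : d ∣ d*B*(y+1) + d*C*(z+1) := ⟨B*(y+1) + C*(z+1), by ring⟩
    have hsum : d ∣ (d*B*(y+1) + d*C*(z+1)) + A*B*(x+1) := by
      rw [show (d*B*(y+1) + d*C*(z+1)) + A*B*(x+1)
          = A*B*(x+1) + d*B*(y+1) + d*C*(z+1) from by ring, hMn]
      exact ⟨A*B + (s+1)*(B*C), rfl⟩
    exact (Nat.dvd_add_right hrest).mp hsum
  have hdvdx : d ∣ (x+1) := Nat.Coprime.dvd_of_dvd_mul_left had.symm hdvd1
  obtain ⟨X, hX⟩ := hdvdx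
  have hX1 : 1 ≤ X := by
    rcases Nat.eq_zero_or_pos X with h | h
    · subst h; simp at hX
    · exact h
  have main2 : A*B*X + B*(y+1) + C*(z+1) = A*B + (s+1)*(B*C) := by
    have h5 : d * (A*B*X + B*(y+1) + C*(z+1)) = d * (A*B + (s+1)*(B*C)) := by
      rw [← hMn, hX]; ring
    exact Nat.eq_of_mul_eq_mul_left hd h5
  have hGA : A + 1 ≤ A*X + (y+1) := by
    have : A*1 ≤ A*X := Nat.mul_le_mul_left A hX1
    omega
  have h6 : B*(A*X + (y+1)) + C*(z+1) = A*B + (s+1)*(B*C) := by rw [← main2]; ring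
  have h6' : (B:ℤ)*((A:ℤ)*X + (y+1)) + (C:ℤ)*((z:ℤ)+1)
      = (A:ℤ)*B + ((s:ℤ)+1)*((B:ℤ)*C) := by exact_mod_cast h6
  have h7 : (C:ℤ) ∣ (B:ℤ) * (((A:ℤ)*X + (y+1)) - A) := by
    refine ⟨((s:ℤ)+1)*B - ((z:ℤ)+1), ?_⟩
    linear_combination h6'
  have h8 : (C:ℤ) ∣ (((A:ℤ)*X + (y+1)) - A) := by
    have hcop : IsCoprime (C:ℤ) (B:ℤ) := Nat.isCoprime_iff_coprime.mpr hBC.symm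
    exact hcop.dvd_of_dvd_mul_left h7
  have h9 : C ∣ (A*X + (y+1) - A) := by
    have hc : ((A*X + (y+1) - A : ℕ) : ℤ) = ((A:ℤ)*X + (y+1)) - A := by
      have hle : A ≤ A*X + (y+1) := by omega
      push_cast [Nat.cast_sub hle]
      ring
    rw [← hc] at h8
    exact_mod_cast h8
  obtain ⟨τ, hτ⟩ := h9
  have hτ1 : 1 ≤ τ := by
    rcases Nat.eq_zero_or_pos τ with h | h
    · subst h; simp at hτ; omega
    · exact h
  have hGeq : A*X + (y+1) = A + C*τ := by
    have hle : A ≤ A*X + (y+1) := by omega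
    rw [← Nat.add_sub_cancel' hle, hτ]
  have hGeq' : (A:ℤ)*X + ((y:ℤ)+1) = (A:ℤ) + (C:ℤ)*τ := by exact_mod_cast hGeq
  have main3 : B*τ + (z+1) = (s+1)*B := by
    have h10 : (C:ℤ)*((B:ℤ)*τ + ((z:ℤ)+1)) = (C:ℤ)*(((s:ℤ)+1)*B) := by
      linear_combination h6' - (B:ℤ)*hGeq'
    have h11 : (B:ℤ)*τ + ((z:ℤ)+1) = ((s:ℤ)+1)*B :=
      mul_left_cancel₀ (by exact_mod_cast hC.ne' : (C:ℤ) ≠ 0) h10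
    exact_mod_cast h11
  have hτs : τ ≤ s := by
    have hlt : B*τ < B*(s+1) := by
      have h12 : B*τ + (z+1) = (s+1)*B := main3
      have : B*τ < (s+1)*B := by omega
      rwa [mul_comm (s+1) B] at this
    have := Nat.lt_of_mul_lt_mul_left hlt
    omega
  exact ⟨X, τ, hX1, hτ1, hτs, hX, hGeq, main3⟩
theorem core_upper (A B C d s : ℕ) (hA : 0 < A) (hB : 0 < B) (hC : 0 < C) (hd : 0 < d)
    (hBC : Nat.Coprime B C) (had : Nat.Coprime (A*B) d) :
    d3 (A*B) (d*B) (d*C) (((s:ℤ)+1)*d*B*C + A*B*d - A*B - d*B - d*C)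
      ≤ ∑ j ∈ Finset.range (s+1), (j*C + A - 1)/A := by
  classical
  set Q : Finset ((_ : ℕ) × ℕ) :=
    (Finset.range s).sigma (fun t => Finset.range ((t*C + C - 1)/A + 1)) with hQ
  -- the raw map
  set f : ℕ × ℕ × ℕ → (_ : ℕ) × ℕ :=
    (fun q => ⟨(A*((q.1+1)/d) + q.2.1 + 1 - A)/C - 1, (q.1+1)/d - 1⟩) with hf
  -- key computation
  have hkey : ∀ x y z : ℕ,
      (((A*B : ℕ) : ℤ) * x + ((d*B : ℕ) : ℤ) * y + ((d*C : ℕ) : ℤ) * z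
        = ((s:ℤ)+1)*d*B*C + A*B*d - A*B - d*B - d*C) →
      ∃ X τ : ℕ, 1 ≤ X ∧ 1 ≤ τ ∧ τ ≤ s ∧ x + 1 = d * X ∧
        A*X + (y+1) = A + C*τ ∧ B*τ + (z+1) = (s+1)*B ∧
        f (x, y, z) = ⟨τ - 1, X - 1⟩ := by
    intro x y z hsol
    obtain ⟨X, τ, hX1, hτ1, hτs, hX, hGeq, main3⟩ :=
      sol_structure A B C d s hA hB hC hd hBC had x y z hsol
    refine ⟨X, τ, hX1, hτ1, hτs, hX, hGeq, main3, ?_⟩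
    have hXdiv : (x+1)/d = X := by rw [hX]; exact Nat.mul_div_cancel_left X hd
    have hτdiv : (A*((x+1)/d) + y + 1 - A)/C = τ := by
      rw [hXdiv]
      have : A*X + y + 1 - A = C*τ := by omega
      rw [this]
      exact Nat.mul_div_cancel_left τ hC
    simp only [hf]
    rw [hτdiv, hXdiv]
  have hmem : ∀ (q : {p : ℕ × ℕ × ℕ // ((A*B : ℕ) : ℤ) * p.1 + ((d*B : ℕ) : ℤ) * p.2.1
      + ((d*C : ℕ) : ℤ) * p.2.2 = ((s:ℤ)+1)*d*B*C + A*B*d - A*B - d*B - d*C}),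
      f q.1 ∈ Q := by
    rintro ⟨⟨x, y, z⟩, hp⟩
    obtain ⟨X, τ, hX1, hτ1, hτs, hX, hGeq, main3, hfval⟩ := hkey x y z hp
    rw [hfval, hQ, Finset.mem_sigma]
    dsimp only
    constructor
    · rw [Finset.mem_range]; omega
    · rw [Finset.mem_range]
      have hle : X - 1 ≤ ((τ-1)*C + C - 1)/A := by
        rw [Nat.le_div_iff_mul_le hA]
        obtain ⟨X', rfl⟩ : ∃ X', X = X' + 1 := ⟨X - 1, by omega⟩
        obtain ⟨τ', rfl⟩ : ∃ τ', τ = τ' + 1 := ⟨τ - 1, by omega⟩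
        have e1 : A*(X'+1) = A*X' + A := by ring
        have e2 : C*(τ'+1) = C*τ' + C := by ring
        have e3 : (X'+1-1)*A = A*X' := by rw [Nat.add_sub_cancel]; ring
        have e4 : (τ'+1-1)*C = C*τ' := by rw [Nat.add_sub_cancel]; ring
        omega
      omega
  set F : {p : ℕ × ℕ × ℕ // ((A*B : ℕ) : ℤ) * p.1 + ((d*B : ℕ) : ℤ) * p.2.1
      + ((d*C : ℕ) : ℤ) * p.2.2 = ((s:ℤ)+1)*d*B*C + A*B*d - A*B - d*B - d*C}
      → ↥Q := fun q => ⟨f q.1, hmem q⟩ with hF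
  have hFinj : Function.Injective F := by
    rintro ⟨⟨x, y, z⟩, hp⟩ ⟨⟨x', y', z'⟩, hp'⟩ hEq
    obtain ⟨X, τ, hX1, hτ1, hτs, hX, hGeq, main3, hfval⟩ := hkey x y z hp
    obtain ⟨X', τ', hX1', hτ1', hτs', hX', hGeq', main3'⟩ := hkey x' y' z' hp'
    obtain ⟨main3', hfval'⟩ := main3'
    have hfeq : f (x, y, z) = f (x', y', z') := by
      have := congrArg Subtype.val hEq
      simpa [hF] using this
    rw [hfval, hfval'] at hfeq
    have h1 : τ - 1 = τ' - 1 ∧ X - 1 = X' - 1 := by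
      constructor
      · exact congrArg Sigma.fst hfeq
      · have := congrArg Sigma.snd hfeq
        simpa using this
    have hττ : τ = τ' := by omega
    have hXX : X = X' := by omega
    subst hττ; subst hXX
    have hx : x = x' := by omega
    have hy : y = y' := by omega
    have hz : z = z' := by omega
    apply Subtype.ext
    simp [hx, hy, hz]
  have hcard : d3 (A*B) (d*B) (d*C) (((s:ℤ)+1)*d*B*C + A*B*d - A*B - d*B - d*C) ≤ Q.card := by
    have := Nat.card_le_card_of_injective F hFinj
    rwa [Nat.card_eq_finsetCard] at this
  refine le_trans hcard (le_of_eq ?_)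
  rw [hQ, Finset.card_sigma]
  simp only [Finset.card_range]
  rw [Finset.sum_range_succ']
  have h0 : (0*C + A - 1)/A = 0 := by
    apply Nat.div_eq_of_lt; omega
  rw [h0, add_zero]
  apply Finset.sum_congr rfl
  intro t _
  have : (t+1)*C + A - 1 = (t*C + C - 1) + A := by
    have : 0 < C := hC
    have e : (t+1)*C = t*C + C := by ring
    omega
  rw [this, Nat.add_div_right _ hA]
theorem core_lower (A B C d s : ℕ) (hA : 0 < A) (hB : 0 < B) (hC : 0 < C) (hd : 0 < d)
    (hBC : Nat.Coprime B C) (had : Nat.Coprime (A*B) d) (m : ℤ)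
    (hm : ((s:ℤ)+1)*d*B*C + A*B*d - A*B - d*B - d*C < m) :
    (∑ j ∈ Finset.range (s+1), (j*C + A - 1)/A) + 1 ≤ d3 (A*B) (d*B) (d*C) m := by
  classical
  -- choose η with A*B*η ≡ M' mod d, where M' = m + a + b + c
  obtain ⟨η, hη1, hηd, hηdvd⟩ := exists_inv (A*B) d hd had (m + (A*B : ℕ) + (d*B : ℕ) + (d*C : ℕ))
  obtain ⟨w, hw⟩ := hηdvd
  -- w = V, a natural number, V ≥ (s+1)*B*C + 1
  have hwpos : ((s:ℤ)+1)*(B:ℤ)*C < w := by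
    have h2 : (d:ℤ) * (((s:ℤ)+1)*B*C) < (d:ℤ) * w := by
      have hηle : (A:ℤ)*(B:ℤ)*η ≤ (A:ℤ)*(B:ℤ)*d := by
        have h3 : (η:ℤ) ≤ d := by exact_mod_cast hηd
        have hab : (0:ℤ) ≤ (A:ℤ)*(B:ℤ) := by positivity
        nlinarith
      push_cast at hw ⊢
      nlinarith [hm, hw]
    exact lt_of_mul_lt_mul_left h2 (by positivity)
  set V : ℕ := w.toNat with hV
  have hVw : (V:ℤ) = w := by
    have h4 : (0:ℤ) ≤ ((s:ℤ)+1)*(B:ℤ)*C := by positivity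
    exact Int.toNat_of_nonneg (by linarith)
  have hVlb : (s+1)*(B*C) + 1 ≤ V := by
    have : ((s:ℤ)+1)*(B:ℤ)*C < (V:ℤ) := by rw [hVw]; exact hwpos
    have h2 : ((( s+1)*(B*C) : ℕ) : ℤ) < (V:ℤ) := by push_cast; linarith
    exact_mod_cast h2
  -- choose ρ with B*ρ ≡ V mod C
  obtain ⟨ρ, hρ1, hρC, hρdvd⟩ := exists_inv B C hC hBC (V:ℤ)
  have hBρV : B*ρ ≤ V := by
    have h1 : B*ρ ≤ B*C := Nat.mul_le_mul_left B hρC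
    calc B*ρ ≤ B*C := h1
      _ ≤ (s+1)*(B*C) := Nat.le_mul_of_pos_left _ (by omega)
      _ ≤ V := by omega
  have hκdvd : C ∣ (V - B*ρ) := by
    have hcast : ((V - B*ρ : ℕ) : ℤ) = (V:ℤ) - (B:ℤ)*ρ := by
      push_cast [Nat.cast_sub hBρV]; ring
    have : (C:ℤ) ∣ ((V - B*ρ : ℕ) : ℤ) := by rw [hcast]; exact_mod_cast hρdvd
    exact_mod_cast this
  obtain ⟨κ, hκ⟩ := hκdvd
  have hκeq : C*κ + B*ρ = V := by omega
  have hκlb : s*B + 1 ≤ κ := by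
    have h1 : C*κ ≥ s*(B*C) + 1 := by
      have e1 : (s+1)*(B*C) = s*(B*C) + B*C := by ring
      have e2 : B*ρ ≤ B*C := Nat.mul_le_mul_left B hρC
      omega
    by_contra hcon
    push_neg at hcon
    have : κ ≤ s*B := by omega
    have : C*κ ≤ C*(s*B) := Nat.mul_le_mul_left C this
    have e3 : C*(s*B) = s*(B*C) := by ring
    omega
  -- the index finset
  set Q' : Finset ((_ : ℕ) × ℕ) :=
    (Finset.range (s+1)).sigma (fun t => Finset.range (t*C/A + 1)) with hQ'
  -- the injection
  have hg : ∀ tu : (_ : ℕ) × ℕ, tu ∈ Q' →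
      ((A*B : ℕ) : ℤ) * ((η + d*tu.2 - 1 : ℕ) : ℤ) + ((d*B : ℕ) : ℤ) * ((ρ + tu.1*C - A*tu.2 - 1 : ℕ) : ℤ)
        + ((d*C : ℕ) : ℤ) * ((κ - tu.1*B - 1 : ℕ) : ℤ) = m := by
    rintro ⟨t, u⟩ htu
    rw [hQ', Finset.mem_sigma, Finset.mem_range, Finset.mem_range] at htu
    obtain ⟨hts, hu⟩ := htu
    dsimp only at hts hu ⊢
    have hAu : A*u ≤ t*C := by
      have := (Nat.le_div_iff_mul_le hA).mp (by omega : u ≤ t*C/A)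
      linarith [this]
    have htB : t*B + 1 ≤ κ := by
      have : t*B ≤ s*B := Nat.mul_le_mul_right B (by omega)
      omega
    have hc1 : ((η + d*u - 1 : ℕ) : ℤ) = (η:ℤ) + d*u - 1 := by
      have : 1 ≤ η + d*u := by omega
      omega
    have hc2 : ((ρ + t*C - A*u - 1 : ℕ) : ℤ) = (ρ:ℤ) + t*C - A*u - 1 := by
      have h1 : A*u + 1 ≤ ρ + t*C := by omega
      push_cast
      have h2 : ((A*u : ℕ):ℤ) + 1 ≤ ((ρ + t*C : ℕ):ℤ) := by exact_mod_cast h1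
      push_cast at h2
      omega
    have hc3 : ((κ - t*B - 1 : ℕ) : ℤ) = (κ:ℤ) - t*B - 1 := by
      push_cast
      have h2 : ((t*B : ℕ):ℤ) + 1 ≤ (κ:ℤ) := by exact_mod_cast htB
      push_cast at h2
      omega
    rw [hc1, hc2, hc3]
    have hκeq' : (C:ℤ)*κ + (B:ℤ)*ρ = (V:ℤ) := by exact_mod_cast hκeq
    have hw' : (d:ℤ)*(V:ℤ) = m + (A*B:ℤ) + (d*B:ℤ) + (d*C:ℤ) - (A*B:ℤ)*η := by
      rw [hVw]; push_cast; push_cast at hw; linarith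
    push_cast
    linear_combination hw' + (d:ℤ)*hκeq'
  -- conclude via cardinality
  haveI : Finite {p : ℕ × ℕ × ℕ // ((A*B : ℕ) : ℤ) * p.1 + ((d*B : ℕ) : ℤ) * p.2.1
      + ((d*C : ℕ) : ℤ) * p.2.2 = m} := by
    exact sols_finite (A*B) (d*B) (d*C) (Nat.mul_pos hA hB) (Nat.mul_pos hd hB) (Nat.mul_pos hd hC) m
  set G : ↥Q' → {p : ℕ × ℕ × ℕ // ((A*B : ℕ) : ℤ) * p.1 + ((d*B : ℕ) : ℤ) * p.2.1
      + ((d*C : ℕ) : ℤ) * p.2.2 = m} :=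
    fun tu => ⟨(η + d*tu.1.2 - 1, ρ + tu.1.1*C - A*tu.1.2 - 1, κ - tu.1.1*B - 1),
      hg tu.1 tu.2⟩ with hG
  have hGinj : Function.Injective G := by
    rintro ⟨⟨t, u⟩, htu⟩ ⟨⟨t', u'⟩, htu'⟩ hEq
    have h := congrArg Subtype.val hEq
    simp only [hG, Prod.mk.injEq] at h
    obtain ⟨h1, h2, h3⟩ := h
    have hQmem := htu; have hQmem' := htu'
    rw [hQ', Finset.mem_sigma, Finset.mem_range, Finset.mem_range] at hQmem hQmem'
    dsimp only at hQmem hQmem' h1 h2 ⊢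
    have hAu : A*u ≤ t*C := by
      have := (Nat.le_div_iff_mul_le hA).mp (by omega : u ≤ t*C/A)
      linarith [this]
    have hAu' : A*u' ≤ t'*C := by
      have := (Nat.le_div_iff_mul_le hA).mp (by omega : u' ≤ t'*C/A)
      linarith [this]
    have hdu : d*u = d*u' := by omega
    have huu : u = u' := Nat.eq_of_mul_eq_mul_left hd hdu
    subst huu
    have htC : t*C = t'*C := by omega
    have htt : t = t' := Nat.eq_of_mul_eq_mul_right hC htC
    subst htt
    rfl
  have hcard : Q'.card ≤ d3 (A*B) (d*B) (d*C) m := by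
    have h := Nat.card_le_card_of_injective G hGinj
    rw [Nat.card_eq_finsetCard] at h
    exact h
  refine le_trans ?_ hcard
  rw [hQ', Finset.card_sigma]
  simp only [Finset.card_range]
  rw [Finset.sum_range_succ', Finset.sum_range_succ']
  have h0 : (0*C + A - 1)/A = 0 := by apply Nat.div_eq_of_lt; omega
  have h00 : (0*C)/A = 0 := by apply Nat.div_eq_of_lt; omega
  rw [h0, h00]
  have hterm : ∀ t, ((t+1)*C + A - 1)/A ≤ (t+1)*C/A + 1 := by
    intro t
    have h1 : (t+1)*C + A - 1 ≤ (t+1)*C + A := by omega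
    calc ((t+1)*C + A - 1)/A ≤ ((t+1)*C + A)/A := Nat.div_le_div_right h1
      _ = (t+1)*C/A + 1 := Nat.add_div_right _ hA
  have hsum : ∑ t ∈ Finset.range s, ((t+1)*C + A - 1)/A
      ≤ ∑ t ∈ Finset.range s, ((t+1)*C/A + 1) := by
    apply Finset.sum_le_sum
    intro t _
    exact hterm t
  omega

theorem core_isGreatest (A B C d s : ℕ) (hA : 0 < A) (hB : 0 < B) (hC : 0 < C) (hd : 0 < d)
    (hBC : Nat.Coprime B C) (had : Nat.Coprime (A*B) d) :
    IsGreatest {m : ℤ | d3 (A*B) (d*B) (d*C) m ≤ ∑ j ∈ Finset.range (s+1), (j*C + A - 1)/A}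
      (((s:ℤ)+1)*d*B*C + A*B*d - A*B - d*B - d*C) := by
  constructor
  · exact core_upper A B C d s hA hB hC hd hBC had
  · intro m hmem
    by_contra hcon
    push_neg at hcon
    have := core_lower A B C d s hA hB hC hd hBC had m hcon
    have hm' : d3 (A*B) (d*B) (d*C) m ≤ ∑ j ∈ Finset.range (s+1), (j*C + A - 1)/A := hmem
    omega

lemma tri_even (k : ℕ) : tri (2*k) = k*(2*k+1) := by
  unfold tri
  rw [show 2*k*(2*k+1) = k*(2*k+1)*2 from by ring, Nat.mul_div_cancel _ (by norm_num)]

lemma tri_odd (k : ℕ) : tri (2*k+1) = (2*k+1)*(k+1) := by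
  unfold tri
  rw [show (2*k+1)*(2*k+1+1) = (2*k+1)*(k+1)*2 from by ring, Nat.mul_div_cancel _ (by norm_num)]

/-- With `d₁ = gcd(t_{n+1}, t_{n+2})`:
`g(t_n, t_{n+1}, t_{n+2}; ∑_{j=0}^s ⌈j t_{n+1} t_{n+2}/(t_n d₁²)⌉)
  = (s+1) t_{n+1} t_{n+2}/d₁ + t_n d₁ - t_n - t_{n+1} - t_{n+2}`. -/
theorem stmt13 (n : ℕ) (hn : 1 ≤ n) (s : ℕ)
    (d₁ : ℕ) (hd₁ : d₁ = Nat.gcd (tri (n + 1)) (tri (n + 2))) :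
    IsGreatest
      {m : ℤ | d3 (tri n) (tri (n + 1)) (tri (n + 2)) m ≤
        ∑ j ∈ Finset.range (s + 1),
          (⌈(j * tri (n + 1) * tri (n + 2) : ℚ) / (tri n * d₁ ^ 2)⌉).toNat}
      (((s : ℤ) + 1) * (tri (n + 1) * tri (n + 2)) / d₁ + tri n * d₁
        - tri n - tri (n + 1) - tri (n + 2)) := by
  obtain ⟨A, B, C, dd, hA, hB, hC, hdd, hBC, had, htn, htn1, htn2⟩ :
      ∃ A B C dd : ℕ, 0 < A ∧ 0 < B ∧ 0 < C ∧ 0 < dd ∧ Nat.Coprime B C ∧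
        Nat.Coprime (A*B) dd ∧ tri n = A*B ∧ tri (n+1) = dd*B ∧ tri (n+2) = dd*C := by
    rcases Nat.even_or_odd n with ⟨k, hk⟩ | ⟨k, hk⟩
    · -- n = 2k, k ≥ 1
      have hn2 : n = 2*k := by omega
      have hk1 : 1 ≤ k := by omega
      refine ⟨k, 2*k+1, 2*k+3, k+1, hk1, by omega, by omega, by omega, ?_, ?_, ?_, ?_, ?_⟩
      · exact Nat.isCoprime_iff_coprime.mp ⟨(k:ℤ)+1, -(k:ℤ), by push_cast; ring⟩
      · exact Nat.isCoprime_iff_coprime.mp ⟨1, 1-2*(k:ℤ), by push_cast; ring⟩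
      · rw [hn2, tri_even]
      · rw [show n + 1 = 2*k+1 from by omega, tri_odd]; ring
      · rw [show n + 2 = 2*(k+1) from by omega, tri_even]; ring
    · -- n = 2k+1
      have hn2 : n = 2*k+1 := hk
      refine ⟨2*k+1, k+1, k+2, 2*k+3, by omega, by omega, by omega, by omega, ?_, ?_, ?_, ?_, ?_⟩
      · exact Nat.isCoprime_iff_coprime.mp ⟨-1, 1, by push_cast; ring⟩
      · exact Nat.isCoprime_iff_coprime.mp ⟨1, -(k:ℤ), by push_cast; ring⟩
      · rw [hn2, tri_odd]
      · rw [show n + 1 = 2*(k+1) from by omega, tri_even]; ring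
      · rw [show n + 2 = 2*(k+1)+1 from by omega, tri_odd]; ring
  have hd1 : d₁ = dd := by
    rw [hd₁, htn1, htn2, Nat.gcd_mul_left, hBC.gcd_eq_one, mul_one]
  rw [htn, htn1, htn2, hd1]
  have hsum : (∑ j ∈ Finset.range (s + 1),
      (⌈(j * ((dd*B : ℕ) : ℚ) * ((dd*C : ℕ) : ℚ)) / (((A*B : ℕ) : ℚ) * (dd : ℚ) ^ 2)⌉).toNat)
      = ∑ j ∈ Finset.range (s+1), (j*C + A - 1)/A := by
    apply Finset.sum_congr rfl
    intro j _
    have hdiv : ((j : ℚ) * ((dd*B : ℕ) : ℚ) * ((dd*C : ℕ) : ℚ)) / (((A*B : ℕ) : ℚ) * (dd : ℚ) ^ 2)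
        = ((j*C : ℕ) : ℚ) / (A : ℚ) := by
      have hA0 : ((A:ℚ)) ≠ 0 := by positivity
      have hB0 : ((B:ℚ)) ≠ 0 := by positivity
      have hd0 : ((dd:ℚ)) ≠ 0 := by positivity
      push_cast
      field_simp
    rw [hdiv, ceil_nat_div (j*C) A hA]
  rw [hsum]
  have hval : ((s : ℤ) + 1) * (((dd*B : ℕ) : ℤ) * ((dd*C : ℕ) : ℤ)) / ((dd : ℕ) : ℤ)
      + ((A*B : ℕ) : ℤ) * ((dd : ℕ) : ℤ) - ((A*B : ℕ) : ℤ) - ((dd*B : ℕ) : ℤ) - ((dd*C : ℕ) : ℤ)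
      = ((s:ℤ)+1)*dd*B*C + A*B*dd - A*B - dd*B - dd*C := by
    have h1 : ((s : ℤ) + 1) * (((dd*B : ℕ) : ℤ) * ((dd*C : ℕ) : ℤ))
        = ((dd : ℕ) : ℤ) * (((s:ℤ)+1)*dd*B*C) := by push_cast; ring
    rw [h1, Int.mul_ediv_cancel_left _ (by exact_mod_cast hdd.ne' : ((dd : ℕ) : ℤ) ≠ 0)]
    push_cast
    ring
  rw [hval]
  exact core_isGreatest A B C dd s hA hB hC hdd hBC had
end

section
/- Let n ≥ 1 and s ≥ 0 be integers, t_k = k(k+1)/2, and d₃ = gcd(t_n, t_{n+1}). Then g(t_n, t_{n+1}, t_{n+2}; Σ_{j=0}^{s} ⌈ j·t_n t_{n+1}/(t_{n+2}·d₃²) ⌉) = (s+1)·t_n t_{n+1}/d₃ + t_{n+2}·d₃ − t_n − t_{n+1} − t_{n+2}. -/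
namespace Stmt14

def reg (a' e : ℕ) (Q : ℤ) : Set (ℕ × ℕ) := {p | (a' : ℤ) * p.1 + (e : ℤ) * p.2 ≤ Q}

lemma reg_finite (a' e : ℕ) (ha' : 0 < a') (he : 0 < e) (Q : ℤ) : (reg a' e Q).Finite := by
  apply Set.Finite.subset ((Finset.range (Q.toNat + 1) ×ˢ Finset.range (Q.toNat + 1)).finite_toSet)
  rintro ⟨u, v⟩ h
  simp only [reg, Set.mem_setOf_eq] at h
  have hu : (u : ℤ) ≤ (a' : ℤ) * u := le_mul_of_one_le_left (by positivity) (by exact_mod_cast ha')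
  have hv : (v : ℤ) ≤ (e : ℤ) * v := le_mul_of_one_le_left (by positivity) (by exact_mod_cast he)
  have h1 : (u : ℤ) ≤ Q := by linarith
  have h2 : (v : ℤ) ≤ Q := by linarith
  simp only [Finset.coe_product, Set.mem_prod, Finset.mem_coe, Finset.mem_range]
  omega

lemma lin_finite (e : ℕ) (he : 0 < e) (B : ℤ) : {v : ℕ | (e : ℤ) * v < B}.Finite := by
  apply Set.Finite.subset (Finset.range (B.toNat + 1)).finite_toSet
  intro v hv
  simp only [Set.mem_setOf_eq] at hv
  have h1 : (v : ℤ) ≤ (e : ℤ) * v := le_mul_of_one_le_left (by positivity) (by exact_mod_cast he)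
  simp only [Finset.coe_range, Set.mem_Iio]
  omega

lemma lin_count (e : ℕ) (he : 0 < e) (B : ℤ) :
    {v : ℕ | (e : ℤ) * v < B}.ncard = (⌈(B : ℚ) / e⌉).toNat := by
  have he' : (0 : ℚ) < e := by exact_mod_cast he
  have claim : ∀ v : ℕ, ((e : ℤ) * v < B) ↔ v < (⌈(B : ℚ) / e⌉).toNat := by
    intro v
    have hcast : ((v : ℤ) : ℚ) * e = (((e : ℤ) * v : ℤ) : ℚ) := by push_cast; ring
    have h1 : ((e : ℤ) * v < B) ↔ (((v : ℤ) : ℚ) < (B : ℚ) / e) := by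
      rw [lt_div_iff₀ he', hcast, Int.cast_lt]
    rw [h1, ← Int.lt_ceil]
    omega
  have : {v : ℕ | (e : ℤ) * v < B} = ↑(Finset.range (⌈(B : ℚ) / e⌉).toNat) := by
    ext v; simp [claim v]
  rw [this, Set.ncard_coe_finset, Finset.card_range]

lemma reg_step (a' e : ℕ) (ha' : 0 < a') (he : 0 < e) (Q : ℤ) :
    (reg a' e Q).ncard = {v : ℕ | (e : ℤ) * v < Q + 1}.ncard + (reg a' e (Q - a')).ncard := by
  have hsplit : reg a' e Q =
      ((fun v : ℕ => ((0 : ℕ), v)) '' {v : ℕ | (e : ℤ) * v < Q + 1}) ∪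
      ((fun p : ℕ × ℕ => (p.1 + 1, p.2)) '' reg a' e (Q - a')) := by
    ext ⟨u, v⟩
    simp only [reg, Set.mem_setOf_eq, Set.mem_union, Set.mem_image, Prod.mk.injEq, Prod.exists]
    constructor
    · intro h
      rcases Nat.eq_zero_or_pos u with hu | hu
      · left; exact ⟨v, by subst hu; push_cast at h ⊢; linarith, by omega, rfl⟩
      · right
        refine ⟨u - 1, v, ?_, by omega, rfl⟩
        have h1 : ((u - 1 : ℕ) : ℤ) = (u : ℤ) - 1 := by omega
        rw [h1]; push_cast at h ⊢; linarith
    · rintro (⟨w, hw, h0, hv⟩ | ⟨w, x, hw, h0, hv⟩)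
      · subst h0; subst hv; simp; linarith
      · subst h0; subst hv
        push_cast at hw ⊢; linarith
  rw [hsplit, Set.ncard_union_eq ?disj ?f1 ?f2]
  · rw [Set.ncard_image_of_injective _ (fun x y h => by simpa using h),
        Set.ncard_image_of_injective _ (fun x y h => by
          simp only [Prod.mk.injEq] at h; exact Prod.ext (by omega) h.2)]
  case disj =>
    rw [Set.disjoint_left]
    rintro ⟨u, v⟩ ⟨w, hw, h0⟩ ⟨p, hp, h1⟩
    rw [← h1] at h0
    simp at h0
  case f1 => exact Set.Finite.image _ (lin_finite e he _)
  case f2 => exact Set.Finite.image _ (reg_finite a' e ha' he _)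

lemma ncard_reg (a' e : ℕ) (ha' : 0 < a') (he : 0 < e) (s : ℕ) :
    (reg a' e ((s : ℤ) * a' - 1)).ncard
      = ∑ j ∈ Finset.range (s + 1), (⌈((j : ℚ) * a' / e)⌉).toNat := by
  induction s with
  | zero =>
    have hempty : reg a' e (((0:ℕ) : ℤ) * a' - 1) = ∅ := by
      ext ⟨u, v⟩
      simp only [reg, Set.mem_setOf_eq, Set.mem_empty_iff_false, iff_false, not_le]
      have : (0 : ℤ) ≤ (a' : ℤ) * u + e * v := by positivity
      simp only [Nat.cast_zero, zero_mul]
      linarith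
    rw [hempty]
    simp
  | succ s ih =>
    have hQ : ((s + 1 : ℕ) : ℤ) * a' - 1 = (((s : ℤ) * a' - 1) + a') := by push_cast; ring
    rw [hQ, reg_step a' e ha' he]
    have h2 : ((s : ℤ) * a' - 1 + a') - a' = (s : ℤ) * a' - 1 := by ring
    have h3 : ((s : ℤ) * a' - 1 + a') + 1 = ((s + 1 : ℕ) : ℤ) * a' := by push_cast; ring
    have hceil : ((((s + 1 : ℕ) : ℤ) * (a' : ℤ) : ℤ) : ℚ) / e = ((s + 1 : ℕ) : ℚ) * a' / e := by
      push_cast; ring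
    rw [h2, h3, ih, lin_count e he, hceil, Finset.sum_range_succ _ (s + 1), add_comm]

lemma d3_eq_ncard (d a' b' e : ℕ) (hd : 0 < d) (hb' : 0 < b')
    (h1 : Nat.Coprime (d * a') b') (h2 : Nat.Coprime (e * b') d)
    (Q : ℤ) (x₀ z₀ : ℕ) (hx : x₀ < b') (hz : z₀ < d) (m : ℤ)
    (hm : m = ((d * b' : ℕ) : ℤ) * Q + ((d * a' : ℕ) : ℤ) * x₀ + ((e * b' : ℕ) : ℤ) * z₀) :
    d3 (d * a') (d * b') (e * b') m = (reg a' e Q).ncard := by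
  rw [← Nat.card_coe_set_eq]
  unfold d3
  apply (Nat.card_eq_of_bijective (fun q : reg a' e Q =>
    ⟨(x₀ + b' * q.1.1, ((Q - a' * q.1.1 - e * q.1.2).toNat, z₀ + d * q.1.2)), by
      obtain ⟨⟨u, v⟩, hq⟩ := q
      simp only [reg, Set.mem_setOf_eq] at hq
      have hy : (0 : ℤ) ≤ Q - a' * u - e * v := by linarith
      simp only
      rw [hm]
      push_cast [Int.toNat_of_nonneg hy]
      ring⟩) ?_).symm
  constructor
  · rintro ⟨⟨u₁, v₁⟩, hq₁⟩ ⟨⟨u₂, v₂⟩, hq₂⟩ hfeq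
    simp only [Subtype.mk.injEq, Prod.mk.injEq] at hfeq
    obtain ⟨hxeq, -, hzeq⟩ := hfeq
    have hu : u₁ = u₂ := by
      have := Nat.eq_of_mul_eq_mul_left hb' (by omega : b' * u₁ = b' * u₂)
      exact this
    have hv : v₁ = v₂ := Nat.eq_of_mul_eq_mul_left hd (by omega)
    simp [hu, hv]
  · rintro ⟨⟨x, y, z⟩, hsol⟩
    simp only at hsol
    -- derive congruences
    have hco1 : IsCoprime ((d * a' : ℕ) : ℤ) ((b' : ℕ) : ℤ) := Nat.isCoprime_iff_coprime.mpr h1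
    have hco2 : IsCoprime ((e * b' : ℕ) : ℤ) ((d : ℕ) : ℤ) := Nat.isCoprime_iff_coprime.mpr h2
    have key1 : ((b' : ℕ) : ℤ) ∣ ((d * a' : ℕ) : ℤ) * ((x : ℤ) - x₀) := by
      refine ⟨(d : ℤ) * Q + e * z₀ - d * y - e * z, ?_⟩
      rw [hm] at hsol
      push_cast at hsol ⊢
      linarith
    have key1' : ((b' : ℕ) : ℤ) ∣ ((x : ℤ) - x₀) := hco1.symm.dvd_of_dvd_mul_left key1
    obtain ⟨u', hu'⟩ := key1'
    have hxl : (x₀ : ℤ) < b' := by exact_mod_cast hx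
    have hu'0 : 0 ≤ u' := by
      by_contra hneg
      push_neg at hneg
      have h' : u' ≤ -1 := by omega
      have : (b' : ℤ) * u' ≤ (b' : ℤ) * (-1) :=
        mul_le_mul_of_nonneg_left h' (by positivity)
      have hx0 : (0 : ℤ) ≤ (x : ℤ) := by positivity
      linarith
    have key2 : ((d : ℕ) : ℤ) ∣ ((e * b' : ℕ) : ℤ) * ((z : ℤ) - z₀) := by
      refine ⟨(b' : ℤ) * Q + a' * x₀ - a' * x - b' * y, ?_⟩
      rw [hm] at hsol
      push_cast at hsol ⊢
      linarith
    have key2' : ((d : ℕ) : ℤ) ∣ ((z : ℤ) - z₀) := hco2.symm.dvd_of_dvd_mul_left key2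
    obtain ⟨v', hv'⟩ := key2'
    have hzl : (z₀ : ℤ) < d := by exact_mod_cast hz
    have hv'0 : 0 ≤ v' := by
      by_contra hneg
      push_neg at hneg
      have h' : v' ≤ -1 := by omega
      have : (d : ℤ) * v' ≤ (d : ℤ) * (-1) :=
        mul_le_mul_of_nonneg_left h' (by positivity)
      have hz0 : (0 : ℤ) ≤ (z : ℤ) := by positivity
      linarith
    set u : ℕ := u'.toNat with hudef
    set v : ℕ := v'.toNat with hvdef
    have huc : (u : ℤ) = u' := Int.toNat_of_nonneg hu'0
    have hvc : (v : ℤ) = v' := Int.toNat_of_nonneg hv'0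
    have hxu : (x : ℤ) = x₀ + b' * u := by rw [huc]; linarith [hu']
    have hzv : (z : ℤ) = z₀ + d * v := by rw [hvc]; linarith [hv']
    -- y value
    have hyv : ((d * b' : ℕ) : ℤ) * y = ((d * b' : ℕ) : ℤ) * (Q - a' * u - e * v) := by
      rw [hm] at hsol
      push_cast at hsol ⊢
      rw [hxu, hzv] at hsol
      ring_nf at hsol ⊢
      linarith
    have hdb : ((d * b' : ℕ) : ℤ) ≠ 0 := by positivity
    have hy : (y : ℤ) = Q - a' * u - e * v := mul_left_cancel₀ hdb hyv
    have hmem : ((u, v) : ℕ × ℕ) ∈ reg a' e Q := by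
      simp only [reg, Set.mem_setOf_eq]
      have : (0 : ℤ) ≤ (y : ℤ) := by positivity
      linarith
    refine ⟨⟨(u, v), hmem⟩, ?_⟩
    apply Subtype.ext
    simp only [Prod.mk.injEq]
    refine ⟨by exact_mod_cast hxu.symm, ?_, by exact_mod_cast hzv.symm⟩
    rw [← hy]
    exact Int.toNat_natCast y

lemma decomp (d a' b' e : ℕ) (hd : 0 < d) (hb' : 0 < b')
    (h1 : Nat.Coprime (d * a') b') (h2 : Nat.Coprime (e * b') d) (m : ℤ) :
    ∃ (Q : ℤ) (x₀ z₀ : ℕ), x₀ < b' ∧ z₀ < d ∧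
      m = ((d * b' : ℕ) : ℤ) * Q + ((d * a' : ℕ) : ℤ) * x₀ + ((e * b' : ℕ) : ℤ) * z₀ := by
  have hb'z : ((b' : ℕ) : ℤ) ≠ 0 := by positivity
  have hdz : ((d : ℕ) : ℤ) ≠ 0 := by positivity
  obtain ⟨α, β, hab⟩ := Nat.isCoprime_iff_coprime.mpr h1
  have h2e : Nat.Coprime e d := Nat.Coprime.coprime_dvd_left (dvd_mul_right e b') h2
  obtain ⟨γ, δ, hgd⟩ := Nat.isCoprime_iff_coprime.mpr h2e
  push_cast at hab
  set X : ℤ := (α * m) % (b' : ℤ) with hX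
  have hXnn : 0 ≤ X := Int.emod_nonneg _ hb'z
  have hXlt : X < b' := Int.emod_lt_of_pos _ (by positivity)
  have key1 : (b' : ℤ) * ((α * m) / b') + (α * m) % b' = α * m := Int.mul_ediv_add_emod _ _
  set M : ℤ := m * β + (d : ℤ) * a' * ((α * m) / b') with hM
  set Z : ℤ := (γ * M) % (d : ℤ) with hZ
  have hZnn : 0 ≤ Z := Int.emod_nonneg _ hdz
  have hZlt : Z < d := Int.emod_lt_of_pos _ (by positivity)
  have key2 : (d : ℤ) * ((γ * M) / d) + (γ * M) % d = γ * M := Int.mul_ediv_add_emod _ _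
  refine ⟨M * δ + (e : ℤ) * ((γ * M) / d), X.toNat, Z.toNat, by omega, by omega, ?_⟩
  rw [Int.toNat_of_nonneg hXnn, Int.toNat_of_nonneg hZnn, hX, hZ]
  push_cast
  rw [hM] at key2 ⊢
  linear_combination (-m) * hab - ((d : ℤ) * a') * key1
    - ((b' : ℤ) * (m * β + (d : ℤ) * a' * ((α * m) / b'))) * hgd - ((b' : ℤ) * e) * key2

lemma main_abs (d a' b' e s : ℕ) (hd : 0 < d) (ha' : 0 < a') (hb' : 0 < b') (he : 0 < e)
    (h1 : Nat.Coprime (d * a') b') (h2 : Nat.Coprime (e * b') d) :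
    IsGreatest {m : ℤ | d3 (d * a') (d * b') (e * b') m ≤
        ∑ j ∈ Finset.range (s + 1), (⌈((j : ℚ) * a' / e)⌉).toNat}
      ((d : ℤ) * b' * ((s : ℤ) * a' - 1) + (d : ℤ) * a' * ((b' : ℤ) - 1)
        + (e : ℤ) * b' * ((d : ℤ) - 1)) := by
  have hstrict : ∀ Q : ℤ, (s : ℤ) * a' ≤ Q →
      (reg a' e ((s : ℤ) * a' - 1)).ncard + 1 ≤ (reg a' e Q).ncard := by
    intro Q hQ
    have hnot : ((s, 0) : ℕ × ℕ) ∉ reg a' e ((s : ℤ) * a' - 1) := by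
      simp only [reg, Set.mem_setOf_eq, not_le]
      push_cast
      linarith
    have hins : insert ((s, 0) : ℕ × ℕ) (reg a' e ((s : ℤ) * a' - 1)) ⊆ reg a' e Q := by
      rintro ⟨u, v⟩ h
      rcases h with h | h
      · simp only [Prod.mk.injEq] at h
        obtain ⟨h1', h2'⟩ := h
        subst h1'; subst h2'
        simp only [reg, Set.mem_setOf_eq]
        push_cast
        linarith
      · simp only [reg, Set.mem_setOf_eq] at h ⊢
        linarith
    calc (reg a' e ((s : ℤ) * a' - 1)).ncard + 1
        = (insert ((s, 0) : ℕ × ℕ) (reg a' e ((s : ℤ) * a' - 1))).ncard := by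
          rw [Set.ncard_insert_of_notMem hnot (reg_finite a' e ha' he _)]
      _ ≤ (reg a' e Q).ncard := Set.ncard_le_ncard hins (reg_finite a' e ha' he _)
  constructor
  · show d3 _ _ _ _ ≤ _
    have hm : (d : ℤ) * b' * ((s : ℤ) * a' - 1) + (d : ℤ) * a' * ((b' : ℤ) - 1)
        + (e : ℤ) * b' * ((d : ℤ) - 1)
        = ((d * b' : ℕ) : ℤ) * ((s : ℤ) * a' - 1) + ((d * a' : ℕ) : ℤ) * ((b' - 1 : ℕ) : ℕ)
          + ((e * b' : ℕ) : ℤ) * ((d - 1 : ℕ) : ℕ) := by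
      have e1 : (((b' - 1 : ℕ) : ℕ) : ℤ) = (b' : ℤ) - 1 := by omega
      have e2 : (((d - 1 : ℕ) : ℕ) : ℤ) = (d : ℤ) - 1 := by omega
      rw [e1, e2]; push_cast; ring
    rw [d3_eq_ncard d a' b' e hd hb' h1 h2 ((s : ℤ) * a' - 1) (b' - 1) (d - 1)
      (by omega) (by omega) _ hm, ncard_reg a' e ha' he s]
  · rintro m hmem
    simp only [Set.mem_setOf_eq] at hmem
    obtain ⟨Q, x₀, z₀, hx, hz, hm⟩ := decomp d a' b' e hd hb' h1 h2 m
    have hQle : Q ≤ (s : ℤ) * a' - 1 := by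
      by_contra hQ
      push_neg at hQ
      have hQ' : (s : ℤ) * a' ≤ Q := by omega
      have := hstrict Q hQ'
      rw [← d3_eq_ncard d a' b' e hd hb' h1 h2 Q x₀ z₀ hx hz m hm] at this
      rw [← ncard_reg a' e ha' he s] at hmem
      omega
    rw [hm]
    have t1 : ((d * b' : ℕ) : ℤ) * Q ≤ ((d * b' : ℕ) : ℤ) * ((s : ℤ) * a' - 1) :=
      mul_le_mul_of_nonneg_left hQle (by positivity)
    have hx' : (x₀ : ℤ) ≤ (b' : ℤ) - 1 := by omega
    have hz' : (z₀ : ℤ) ≤ (d : ℤ) - 1 := by omega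
    have t2 : ((d * a' : ℕ) : ℤ) * x₀ ≤ ((d * a' : ℕ) : ℤ) * ((b' : ℤ) - 1) :=
      mul_le_mul_of_nonneg_left hx' (by positivity)
    have t3 : ((e * b' : ℕ) : ℤ) * z₀ ≤ ((e * b' : ℕ) : ℤ) * ((d : ℤ) - 1) :=
      mul_le_mul_of_nonneg_left hz' (by positivity)
    push_cast at t1 t2 t3 ⊢
    linarith

lemma final (d a' b' e : ℕ) (hd : 0 < d) (ha' : 0 < a') (hb' : 0 < b') (he : 0 < e)
    (h1 : Nat.Coprime (d * a') b') (h2 : Nat.Coprime (e * b') d)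
    (s : ℕ) (A B C D : ℕ) (hA : A = d * a') (hB : B = d * b') (hC : C = e * b')
    (hD : D = d) :
    IsGreatest
      {m : ℤ | d3 A B C m ≤
        ∑ j ∈ Finset.range (s + 1), (⌈(j * A * B : ℚ) / (C * D ^ 2)⌉).toNat}
      (((s : ℤ) + 1) * (A * B) / D + C * D - A - B - C) := by
  rw [hA, hB, hC, hD]
  have hqd : ((d : ℚ) ≠ 0) := by positivity
  have hqb : ((b' : ℚ) ≠ 0) := by positivity
  have hqe : ((e : ℚ) ≠ 0) := by positivity
  have hsum : ∀ j : ℕ, ((j : ℚ) * ((d * a' : ℕ) : ℚ) * ((d * b' : ℕ) : ℚ))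
      / (((e * b' : ℕ) : ℚ) * ((d : ℕ) : ℚ) ^ 2) = (j : ℚ) * a' / e := by
    intro j
    push_cast
    field_simp
  have hval : ((s : ℤ) + 1) * (((d * a' : ℕ) : ℤ) * ((d * b' : ℕ) : ℤ)) / ((d : ℕ) : ℤ)
      + ((e * b' : ℕ) : ℤ) * ((d : ℕ) : ℤ) - ((d * a' : ℕ) : ℤ) - ((d * b' : ℕ) : ℤ)
      - ((e * b' : ℕ) : ℤ)
      = (d : ℤ) * b' * ((s : ℤ) * a' - 1) + (d : ℤ) * a' * ((b' : ℤ) - 1)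
        + (e : ℤ) * b' * ((d : ℤ) - 1) := by
    have hnum : ((s : ℤ) + 1) * (((d * a' : ℕ) : ℤ) * ((d * b' : ℕ) : ℤ))
        = ((d : ℕ) : ℤ) * (((s : ℤ) + 1) * ((d : ℤ) * (a' * b'))) := by
      push_cast; ring
    rw [hnum, Int.mul_ediv_cancel_left _ (by positivity : ((d : ℕ) : ℤ) ≠ 0)]
    push_cast; ring
  have hset : {m : ℤ | d3 (d * a') (d * b') (e * b') m ≤
      ∑ j ∈ Finset.range (s + 1),
        (⌈((j : ℕ) * (d * a' : ℕ) * (d * b' : ℕ) : ℚ) / ((e * b' : ℕ) * (d : ℕ) ^ 2)⌉).toNat}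
      = {m : ℤ | d3 (d * a') (d * b') (e * b') m ≤
          ∑ j ∈ Finset.range (s + 1), (⌈((j : ℚ) * a' / e)⌉).toNat} := by
    ext m
    simp only [Set.mem_setOf_eq]
    congr! 1
    apply Finset.sum_congr rfl
    intro j _
    congr 1
    congr 1
    exact hsum j
  rw [hval]
  convert main_abs d a' b' e s hd ha' hb' he h1 h2 using 2

lemma copInt (a b : ℕ) (u v : ℤ) (h : u * a + v * b = 1) : Nat.Coprime a b :=
  Nat.isCoprime_iff_coprime.mp ⟨u, v, h⟩

lemma tri_eq (k : ℕ) : tri k = k * (k + 1) / 2 := rfl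

end Stmt14

/-- With `d₃ = gcd(t_n, t_{n+1})`:
`g(t_n, t_{n+1}, t_{n+2}; ∑_{j=0}^s ⌈j t_n t_{n+1}/(t_{n+2} d₃²)⌉)
  = (s+1) t_n t_{n+1}/d₃ + t_{n+2} d₃ - t_n - t_{n+1} - t_{n+2}`. -/
theorem stmt14 (n : ℕ) (hn : 1 ≤ n) (s : ℕ)
    (d₃ : ℕ) (hd₃ : d₃ = Nat.gcd (tri n) (tri (n + 1))) :
    IsGreatest
      {m : ℤ | d3 (tri n) (tri (n + 1)) (tri (n + 2)) m ≤
        ∑ j ∈ Finset.range (s + 1),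
          (⌈(j * tri n * tri (n + 1) : ℚ) / (tri (n + 2) * d₃ ^ 2)⌉).toNat}
      (((s : ℤ) + 1) * (tri n * tri (n + 1)) / d₃ + tri (n + 2) * d₃
        - tri n - tri (n + 1) - tri (n + 2)) := by
  rcases Nat.even_or_odd n with hev | hod
  · -- n even, n = 2k+2
    obtain ⟨k, hk⟩ : ∃ k, n = 2 * k + 2 := by
      obtain ⟨t, ht⟩ := hev; exact ⟨t - 1, by omega⟩
    subst hk
    have hA : tri (2 * k + 2) = (2 * k + 3) * (k + 1) := by
      rw [Stmt14.tri_eq, show (2 * k + 2) * (2 * k + 2 + 1) = ((2 * k + 3) * (k + 1)) * 2 by ring,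
        Nat.mul_div_cancel _ two_pos]
    have hB : tri (2 * k + 2 + 1) = (2 * k + 3) * (k + 2) := by
      rw [Stmt14.tri_eq, show (2 * k + 2 + 1) * (2 * k + 2 + 1 + 1) = ((2 * k + 3) * (k + 2)) * 2 by ring,
        Nat.mul_div_cancel _ two_pos]
    have hC : tri (2 * k + 2 + 2) = (2 * k + 5) * (k + 2) := by
      rw [Stmt14.tri_eq, show (2 * k + 2 + 2) * (2 * k + 2 + 2 + 1) = ((2 * k + 5) * (k + 2)) * 2 by ring,
        Nat.mul_div_cancel _ two_pos]
    have cop1 : Nat.Coprime (k + 1) (k + 2) := Stmt14.copInt _ _ (-1) 1 (by push_cast; ring)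
    have hD : d₃ = 2 * k + 3 := by
      rw [hd₃, hA, hB, Nat.gcd_mul_left, cop1, mul_one]
    exact Stmt14.final (2 * k + 3) (k + 1) (k + 2) (2 * k + 5) (by omega) (by omega) (by omega)
      (by omega)
      (Nat.Coprime.mul (Stmt14.copInt _ _ (-1) 2 (by push_cast; ring)) cop1)
      (Nat.Coprime.mul (Stmt14.copInt _ _ (-((k : ℤ) + 1)) ((k : ℤ) + 2) (by push_cast; ring))
        (Stmt14.copInt _ _ 2 (-1) (by push_cast; ring)))
      s _ _ _ _ hA hB hC hD
  · -- n odd, n = 2k+1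
    obtain ⟨k, hk⟩ := hod
    subst hk
    have hA : tri (2 * k + 1) = (k + 1) * (2 * k + 1) := by
      rw [Stmt14.tri_eq, show (2 * k + 1) * (2 * k + 1 + 1) = ((k + 1) * (2 * k + 1)) * 2 by ring,
        Nat.mul_div_cancel _ two_pos]
    have hB : tri (2 * k + 1 + 1) = (k + 1) * (2 * k + 3) := by
      rw [Stmt14.tri_eq, show (2 * k + 1 + 1) * (2 * k + 1 + 1 + 1) = ((k + 1) * (2 * k + 3)) * 2 by ring,
        Nat.mul_div_cancel _ two_pos]
    have hC : tri (2 * k + 1 + 2) = (k + 2) * (2 * k + 3) := by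
      rw [Stmt14.tri_eq, show (2 * k + 1 + 2) * (2 * k + 1 + 2 + 1) = ((k + 2) * (2 * k + 3)) * 2 by ring,
        Nat.mul_div_cancel _ two_pos]
    have cop1 : Nat.Coprime (2 * k + 1) (2 * k + 3) :=
      Stmt14.copInt _ _ (-((k : ℤ) + 2)) ((k : ℤ) + 1) (by push_cast; ring)
    have hD : d₃ = k + 1 := by
      rw [hd₃, hA, hB, Nat.gcd_mul_left, cop1, mul_one]
    exact Stmt14.final (k + 1) (2 * k + 1) (2 * k + 3) (k + 2) (by omega) (by omega) (by omega)
      (by omega)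
      (Nat.Coprime.mul (Stmt14.copInt _ _ (-2) 1 (by push_cast; ring)) cop1)
      (Nat.Coprime.mul (Stmt14.copInt _ _ 1 (-1) (by push_cast; ring))
        (Stmt14.copInt _ _ 1 (-2) (by push_cast; ring)))
      s _ _ _ _ hA hB hC hD
end

section
/- For even positive n and s ≥ 0, g(t_n, t_{n+1}, t_{n+2}; s(s+1) + Σ_{j=1}^{s} ⌈6j/n⌉) = (n+1)(n+2)(2s(n+3) + 3n)/4 − 1, where t_k = k(k+1)/2. -/
namespace Stmt15


/-- Index finset: pairs (k,t) with 1 ≤ k, t ≤ s, q*k + (2q+3)*t ≤ Z. -/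
def PF (q s Z : ℕ) : Finset (ℕ × ℕ) :=
  (Finset.range (s+1)).biUnion fun t =>
    (Finset.Icc 1 ((Z - (2*q+3)*t)/q)).image fun k => (k, t)

lemma mem_PF {q s Z : ℕ} (hq : 0 < q) {k t : ℕ} :
    (k, t) ∈ PF q s Z ↔ t ≤ s ∧ 1 ≤ k ∧ q*k + (2*q+3)*t ≤ Z := by
  unfold PF
  simp only [Finset.mem_biUnion, Finset.mem_range, Finset.mem_image, Finset.mem_Icc,
    Prod.mk.injEq]
  constructor
  · rintro ⟨t', ht', k', ⟨hk1, hk2⟩, rfl, rfl⟩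
    refine ⟨by omega, hk1, ?_⟩
    have h2 := (Nat.le_div_iff_mul_le hq).mp hk2
    have h3 : 1 ≤ k' * q := Nat.one_le_iff_ne_zero.mpr (by positivity)
    rw [mul_comm q k']
    generalize k' * q = A at *
    generalize (2*q+3)*t' = B at *
    omega
  · rintro ⟨ht, hk, hle⟩
    refine ⟨t, by omega, k, ⟨hk, (Nat.le_div_iff_mul_le hq).mpr ?_⟩, rfl, rfl⟩
    rw [mul_comm k q]
    generalize q*k = A at *
    generalize (2*q+3)*t = B at *
    omega

lemma card_PF (q s Z : ℕ) :
    (PF q s Z).card = ∑ t ∈ Finset.range (s+1), (Z - (2*q+3)*t)/q := by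
  unfold PF
  rw [Finset.card_biUnion]
  · refine Finset.sum_congr rfl fun t _ => ?_
    rw [Finset.card_image_of_injective _ (fun a b h => (Prod.mk.injEq _ _ _ _ ▸ h).1),
      Nat.card_Icc, Nat.add_sub_cancel]
  · intro t1 _ t2 _ hne
    simp only [Finset.disjoint_left, Finset.mem_image]
    rintro ⟨k, t⟩ ⟨k1, _, h1⟩ ⟨k2, _, h2⟩
    apply hne
    rw [Prod.mk.injEq] at h1 h2
    omega




lemma gauss (s : ℕ) (c : ℕ → ℕ) :
    ∑ i ∈ Finset.range s, (2*(i+1)+1 + c i) = s*(s+1) + ∑ i ∈ Finset.range s, (c i + 1) := by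
  induction s with
  | zero => simp
  | succ s ih =>
    rw [Finset.sum_range_succ, Finset.sum_range_succ, ih]
    ring_nf

lemma sum_PF {q s Z : ℕ} (hq : 0 < q) (hZ : Z + 1 = s*(2*q+3) + q) :
    (Finset.range (s+1)).sum (fun t => (Z - (2*q+3)*t)/q)
      = s*(s+1) + ∑ j ∈ Finset.Icc 1 s, ((3*j-1)/q + 1) := by
  have hZ' : Z + 1 = (2*q+3)*s + q := by rw [mul_comm (2*q+3) s]; exact hZ
  rw [← Finset.sum_range_reflect, Finset.sum_range_succ']
  have h0 : (Z - (2*q+3)*(s+1-1-0))/q = 0 := by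
    apply Nat.div_eq_of_lt
    simp only [Nat.sub_zero, Nat.add_sub_cancel]
    generalize (2*q+3)*s = A at *
    omega
  rw [h0]
  have key : ∀ i ∈ Finset.range s,
      (Z - (2*q+3)*(s+1-1-(i+1)))/q = 2*(i+1)+1 + (3*(i+1)-1)/q := by
    intro i hi
    rw [Finset.mem_range] at hi
    have h1 : s+1-1-(i+1) = s - (i+1) := by omega
    have h2 : Z - (2*q+3)*(s-(i+1)) = q*(2*(i+1)+1) + (3*(i+1)-1) := by
      have h3 : (2*q+3)*(s-(i+1)) + (2*q+3)*(i+1) = (2*q+3)*s := by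
        rw [← Nat.mul_add]; congr 1; omega
      have h6 : q*(2*(i+1)+1) + 3*(i+1) = (2*q+3)*(i+1) + q := by ring
      generalize (2*q+3)*(s-(i+1)) = A1 at h3 ⊢
      generalize (2*q+3)*(i+1) = A2 at h3 h6
      generalize (2*q+3)*s = A3 at h3 hZ'
      generalize q*(2*(i+1)+1) = A4 at h6 ⊢
      omega
    rw [h1, h2, Nat.mul_add_div hq]
  rw [Finset.sum_congr rfl key, add_zero, gauss]
  congr 1
  rw [← Finset.Ico_add_one_right_eq_Icc, Finset.sum_Ico_eq_sum_range]
  apply Finset.sum_congr (by norm_num)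
  intro i _
  rw [Nat.add_comm 1 i]




lemma ceil_eq {q j : ℕ} (hq : 0 < q) (hj : 1 ≤ j) :
    (⌈(6*(j:ℚ)) / ((2*q : ℕ) : ℚ)⌉).toNat = (3*j-1)/q + 1 := by
  have hq' : (0:ℚ) < (q:ℚ) := by exact_mod_cast hq
  have h1 : (6*(j:ℚ)) / ((2*q : ℕ) : ℚ) = (3*j:ℚ)/(q:ℚ) := by
    push_cast
    rw [div_eq_div_iff (by positivity) hq'.ne']
    ring
  obtain ⟨N, r, hr, hNr, hN⟩ : ∃ N r, r < q ∧ 3*j-1 = q*N + r ∧ N = (3*j-1)/q :=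
    ⟨(3*j-1)/q, (3*j-1)%q, Nat.mod_lt _ hq, (Nat.div_add_mod _ q).symm, rfl⟩
  have f1 : q*N + 1 ≤ 3*j := by
    generalize q*N = A at *; omega
  have f2 : 3*j ≤ q*N + q := by
    generalize q*N = A at *; omega
  have f1Q : (q:ℚ)*N + 1 ≤ 3*(j:ℚ) := by exact_mod_cast f1
  have f2Q : 3*(j:ℚ) ≤ (q:ℚ)*N + q := by exact_mod_cast f2
  have hceil : ⌈(6*(j:ℚ)) / ((2*q : ℕ) : ℚ)⌉ = (N:ℤ) + 1 := by
    rw [h1, Int.ceil_eq_iff]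
    constructor
    · push_cast
      have : ((N:ℚ)) < 3*j/q := by rw [lt_div_iff₀ hq']; nlinarith
      linarith
    · push_cast
      rw [div_le_iff₀ hq']
      nlinarith
  rw [hceil, ← hN]
  omega




lemma keyA {q s : ℕ} (hq : 0 < q) {x y z : ℕ}
    (h : ((q*(2*q+1) : ℕ) : ℤ) * x + ((q+1)*(2*q+1) : ℕ) * y + ((q+1)*(2*q+3) : ℕ) * z
        = ((q+1)*(2*q+1) : ℕ) * ((s*(2*q+3)+3*q : ℕ) : ℤ) - 1) :
    ∃ k v, 1 ≤ k ∧ v ≤ s ∧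
      x + 1 = (q+1)*k ∧ z = (2*q+1)*v + 2*q ∧
      y + (2*q+3)*(v+1) + q*k = s*(2*q+3)+3*q + 2 ∧
      q*k + (2*q+3)*v + 1 ≤ s*(2*q+3) + q ∧
      k = (x+1)/(q+1) ∧ v = z/(2*q+1) := by
  push_cast at h
  -- Step 1: (2q+1) ∣ z+1
  have hz1 : ((2*q+1 : ℕ) : ℤ) ∣ ((z+1 : ℕ) : ℤ) := by
    refine ⟨((q:ℤ)+1)*((s:ℤ)*(2*q+3)+3*q) - q*x - (q+1)*y - (q+2)*z, ?_⟩
    push_cast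
    linear_combination h
  have hz2 : (2*q+1) ∣ (z+1) := by exact_mod_cast hz1
  obtain ⟨u, hu⟩ := hz2
  have hu0 : u ≠ 0 := by rintro rfl; simp at hu
  have hzZ : (z:ℤ) = (2*q+1)*u - 1 := by
    have h' := hu; zify at h'; linarith
  -- Step 2
  have h2Z : (q:ℤ)*x + ((q:ℤ)+1)*y + ((q:ℤ)+1)*(2*q+3)*u
      = ((q:ℤ)+1)*((s:ℤ)*(2*q+3)+3*q) + q + 2 := by
    apply mul_left_cancel₀ (a := (2*(q:ℤ)+1)) (by positivity)
    linear_combination h - (((q:ℤ)+1)*(2*q+3))*hzZ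
  -- Step 3: (q+1) ∣ x+1
  have hx1 : ((q+1 : ℕ) : ℤ) ∣ ((q*(x+1) : ℕ) : ℤ) := by
    refine ⟨((s:ℤ)*(2*q+3)+3*q) + 2 - ((y:ℤ) + (2*q+3)*u), ?_⟩
    push_cast
    linear_combination h2Z
  have hx2 : (q+1) ∣ q*(x+1) := by exact_mod_cast hx1
  have cop : Nat.Coprime (q+1) q := by simpa using (Nat.coprime_add_self_left (m:=1) (n:=q)).mpr (Nat.coprime_one_left q)
  have hx3 : (q+1) ∣ (x+1) := cop.dvd_of_dvd_mul_left hx2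
  obtain ⟨k, hk⟩ := hx3
  have hk0 : k ≠ 0 := by rintro rfl; simp at hk
  have hkZ : ((x:ℤ)+1) = ((q:ℤ)+1)*k := by
    have h' := hk; zify at h'; linarith
  -- Step 4
  have h4Z : (q:ℤ)*k + ((y:ℤ) + (2*(q:ℤ)+3)*u) = ((s:ℤ)*(2*q+3)+3*q) + 2 := by
    apply mul_left_cancel₀ (a := ((q:ℤ)+1)) (by positivity)
    linear_combination h2Z - (q:ℤ)*hkZ
  have h4 : q*k + (y + (2*q+3)*u) = (s*(2*q+3)+3*q) + 2 := by exact_mod_cast h4Z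
  -- Step 5
  obtain ⟨v, rfl⟩ : ∃ v, u = v + 1 := ⟨u - 1, by omega⟩
  have expand : (2*q+3)*(v+1) = (2*q+3)*v + (2*q+3) := by ring
  have hqk : q*1 ≤ q*k := Nat.mul_le_mul_left q (by omega)
  have hineq : q*k + (2*q+3)*v + 1 ≤ s*(2*q+3) + q := by
    rw [expand] at h4
    generalize q*k = A at *
    generalize (2*q+3)*v = B at *
    generalize s*(2*q+3) = C at *
    omega
  have hvs : v ≤ s := by
    by_contra hv
    have h5 : (2*q+3)*(s+1) ≤ (2*q+3)*v := Nat.mul_le_mul_left _ (by omega)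
    have h6 : (2*q+3)*(s+1) = s*(2*q+3) + (2*q+3) := by ring
    generalize q*k = A at *
    generalize (2*q+3)*v = B at *
    generalize s*(2*q+3) = C at *
    omega
  have hzv : z = (2*q+1)*v + 2*q := by
    have h' : z + 1 = (2*q+1)*(v+1) := hu
    have e2 : (2*q+1)*(v+1) = (2*q+1)*v + (2*q+1) := by ring
    generalize (2*q+1)*v = A at *
    omega
  refine ⟨k, v, by omega, hvs, hk, hzv, by rw [expand] at h4 ⊢; omega, hineq, ?_, ?_⟩
  · rw [hk, Nat.mul_div_cancel_left _ (by omega)]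
  · rw [hzv, Nat.mul_add_div (by omega), Nat.div_eq_of_lt (by omega)]
    omega







lemma partA {q s : ℕ} (hq : 0 < q) (P : ℕ)
    (hP : (PF q s (s*(2*q+3)+q-1)).card = P) :
    Nat.card {p : ℕ × ℕ × ℕ // ((q*(2*q+1) : ℕ) : ℤ) * p.1 + ((q+1)*(2*q+1) : ℕ) * p.2.1
        + ((q+1)*(2*q+3) : ℕ) * p.2.2
        = ((q+1)*(2*q+1) : ℕ) * ((s*(2*q+3)+3*q : ℕ) : ℤ) - 1} ≤ P := by
  classical
  set Z := s*(2*q+3)+q-1 with hZ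
  have hf : ∀ r : {p : ℕ × ℕ × ℕ // ((q*(2*q+1) : ℕ) : ℤ) * p.1 + ((q+1)*(2*q+1) : ℕ) * p.2.1
        + ((q+1)*(2*q+3) : ℕ) * p.2.2
        = ((q+1)*(2*q+1) : ℕ) * ((s*(2*q+3)+3*q : ℕ) : ℤ) - 1},
      ((r.1.1+1)/(q+1), r.1.2.2/(2*q+1)) ∈ PF q s Z := by
    rintro ⟨⟨x, y, z⟩, hr⟩
    obtain ⟨k, v, hk1, hvs, hxk, hzv, heq, hineq, hkdiv, hvdiv⟩ := keyA hq hr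
    rw [← hkdiv, ← hvdiv, mem_PF hq]
    refine ⟨hvs, hk1, ?_⟩
    have h1 : 1 ≤ s*(2*q+3)+q := by omega
    omega
  let f : {p : ℕ × ℕ × ℕ // ((q*(2*q+1) : ℕ) : ℤ) * p.1 + ((q+1)*(2*q+1) : ℕ) * p.2.1
        + ((q+1)*(2*q+3) : ℕ) * p.2.2
        = ((q+1)*(2*q+1) : ℕ) * ((s*(2*q+3)+3*q : ℕ) : ℤ) - 1} → ↥(PF q s Z) :=
    fun r => ⟨((r.1.1+1)/(q+1), r.1.2.2/(2*q+1)), hf r⟩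
  have hinj : Function.Injective f := by
    rintro ⟨⟨x1, y1, z1⟩, h1⟩ ⟨⟨x2, y2, z2⟩, h2⟩ hfeq
    obtain ⟨k1, v1, hk1, hvs1, hxk1, hzv1, heq1, hineq1, hkd1, hvd1⟩ := keyA hq h1
    obtain ⟨k2, v2, hk2, hvs2, hxk2, hzv2, heq2, hineq2, hkd2, hvd2⟩ := keyA hq h2
    simp only [f, Subtype.mk.injEq, Prod.mk.injEq] at hfeq
    obtain ⟨hfk, hfv⟩ := hfeq
    simp only at hxk1 hxk2 hzv1 hzv2 heq1 heq2 hkd1 hkd2 hvd1 hvd2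
    have ek : k1 = k2 := by rw [hkd1, hkd2, hfk]
    have ev : v1 = v2 := by rw [hvd1, hvd2, hfv]
    subst ek; subst ev
    have ex : x1 = x2 := by
      generalize (q+1)*k1 = A at hxk1 hxk2
      omega
    have ez : z1 = z2 := by
      generalize (2*q+1)*v1 = A at hzv1 hzv2
      omega
    have ey : y1 = y2 := by
      generalize (2*q+3)*(v1+1) = B at heq1 heq2
      generalize q*k1 = C at heq1 heq2
      omega
    apply Subtype.ext
    simp [ex, ey, ez]
  calc Nat.card _ ≤ Nat.card ↥(PF q s Z) := Nat.card_le_card_of_injective f hinj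
    _ = (PF q s Z).card := Nat.card_eq_finsetCard _
    _ = P := hP






lemma finiteReps (a b c : ℕ) (ha : 0 < a) (hb : 0 < b) (hc : 0 < c) (m : ℤ) :
    Finite {p : ℕ × ℕ × ℕ // (a:ℤ)*p.1 + (b:ℤ)*p.2.1 + (c:ℤ)*p.2.2 = m} := by
  have key : ∀ (r : {p : ℕ × ℕ × ℕ // (a:ℤ)*p.1 + (b:ℤ)*p.2.1 + (c:ℤ)*p.2.2 = m}),
      r.1.1 < m.toNat+1 ∧ r.1.2.1 < m.toNat+1 ∧ r.1.2.2 < m.toNat+1 := by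
    rintro ⟨⟨x,y,z⟩,hr⟩
    simp only at hr ⊢
    have hxa : (x:ℤ) ≤ (a:ℤ)*x := le_mul_of_one_le_left (by positivity) (by exact_mod_cast ha)
    have hyb : (y:ℤ) ≤ (b:ℤ)*y := le_mul_of_one_le_left (by positivity) (by exact_mod_cast hb)
    have hzc : (z:ℤ) ≤ (c:ℤ)*z := le_mul_of_one_le_left (by positivity) (by exact_mod_cast hc)
    have h1 : (0:ℤ) ≤ (a:ℤ)*x := by positivity
    have h2 : (0:ℤ) ≤ (b:ℤ)*y := by positivity
    have h3 : (0:ℤ) ≤ (c:ℤ)*z := by positivity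
    have hx : (x:ℤ) ≤ m := by linarith
    have hy : (y:ℤ) ≤ m := by linarith
    have hz : (z:ℤ) ≤ m := by linarith
    omega
  apply Finite.of_injective
    (f := fun r => ((⟨r.1.1, (key r).1⟩, ⟨r.1.2.1, (key r).2.1⟩, ⟨r.1.2.2, (key r).2.2⟩) :
      Fin (m.toNat+1) × Fin (m.toNat+1) × Fin (m.toNat+1)))
  rintro ⟨⟨x1,y1,z1⟩,h1⟩ ⟨⟨x2,y2,z2⟩,h2⟩ h
  simp only [Prod.mk.injEq, Fin.mk.injEq] at h
  apply Subtype.ext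
  simp_all

lemma partB_core {q s : ℕ} (hq : 0 < q) (m : ℤ) (ρ E : ℕ) (hE : 1 ≤ E)
    (hmkey : m = (2*(q:ℤ)+1) * (((q:ℤ)+1)*((s:ℤ)*(2*q+3)+q-1) + E - q)
        + (((q+1)*(2*q+3) : ℕ) : ℤ)*ρ) :
    (PF q s (s*(2*q+3)+q)).card ≤
      Nat.card {p : ℕ × ℕ × ℕ // ((q*(2*q+1) : ℕ) : ℤ) * p.1 + ((q+1)*(2*q+1) : ℕ) * p.2.1
        + ((q+1)*(2*q+3) : ℕ) * p.2.2 = m} := by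
  classical
  haveI : Finite {p : ℕ × ℕ × ℕ // ((q*(2*q+1) : ℕ) : ℤ) * p.1 + ((q+1)*(2*q+1) : ℕ) * p.2.1
        + ((q+1)*(2*q+3) : ℕ) * p.2.2 = m} :=
    finiteReps _ _ _ (by positivity) (by positivity) (by positivity) m
  set η := (E-1) % q with hη
  set g := (E-1) / q with hg
  have hηq : η < q := Nat.mod_lt _ hq
  have hEg : E = q*g + η + 1 := by
    have := Nat.div_add_mod (E-1) q
    generalize q*g = A at *
    omega
  have hmem : ∀ r : ↥(PF q s (s*(2*q+3)+q)),
      ((q*(2*q+1) : ℕ) : ℤ) * ((g + (q+1)*(r.1.1-1) + (q-1-η) : ℕ) : ℤ)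
        + ((q+1)*(2*q+1) : ℕ) * (((s*(2*q+3)+q+η) - q*r.1.1 - (2*q+3)*r.1.2 : ℕ) : ℤ)
        + ((q+1)*(2*q+3) : ℕ) * ((ρ + (2*q+1)*r.1.2 : ℕ) : ℤ) = m := by
    rintro ⟨⟨k,t⟩, hkt⟩
    rw [mem_PF hq] at hkt
    obtain ⟨hts, hk1, hle⟩ := hkt
    simp only
    have hyE : ((s*(2*q+3)+q+η) - q*k - (2*q+3)*t) + (q*k + (2*q+3)*t) = s*(2*q+3)+q+η := by
      generalize q*k = A at *
      generalize (2*q+3)*t = B at *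
      generalize s*(2*q+3) = C at *
      omega
    have yZ : (((s*(2*q+3)+q+η) - q*k - (2*q+3)*t : ℕ) : ℤ)
        = (s:ℤ)*(2*q+3)+q+η - q*k - (2*q+3)*t := by
      zify at hyE
      push_cast at hyE ⊢
      linarith
    have xZ : ((q-1-η : ℕ) : ℤ) = (q:ℤ) - 1 - η := by
      have : (q-1-η) + (η + 1) = q := by omega
      zify at this
      push_cast at this ⊢
      linarith
    have kZ : ((k-1 : ℕ) : ℤ) = (k:ℤ) - 1 := by
      have : (k-1) + 1 = k := by omega
      zify at this
      linarith
    have EZ : (E : ℤ) = (q:ℤ)*g + η + 1 := by exact_mod_cast hEg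
    rw [hmkey]
    push_cast [yZ, xZ, kZ]
    linear_combination -(2*(q:ℤ)+1)*EZ
  let f : ↥(PF q s (s*(2*q+3)+q)) →
      {p : ℕ × ℕ × ℕ // ((q*(2*q+1) : ℕ) : ℤ) * p.1 + ((q+1)*(2*q+1) : ℕ) * p.2.1
        + ((q+1)*(2*q+3) : ℕ) * p.2.2 = m} :=
    fun r => ⟨(g + (q+1)*(r.1.1-1) + (q-1-η),
      ((s*(2*q+3)+q+η) - q*r.1.1 - (2*q+3)*r.1.2 : ℕ),
      ρ + (2*q+1)*r.1.2), hmem r⟩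
  have hinj : Function.Injective f := by
    rintro ⟨⟨k1,t1⟩, hkt1⟩ ⟨⟨k2,t2⟩, hkt2⟩ hfeq
    rw [mem_PF hq] at hkt1 hkt2
    simp only [f, Subtype.mk.injEq, Prod.mk.injEq] at hfeq
    obtain ⟨hx, -, hz⟩ := hfeq
    apply Subtype.ext
    simp only [Prod.mk.injEq]
    have e0 : (2*q+1)*t1 = (2*q+1)*t2 := by
      generalize (2*q+1)*t1 = A at *
      generalize (2*q+1)*t2 = B at *
      omega
    have ht : t1 = t2 := Nat.eq_of_mul_eq_mul_left (by omega) e0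
    have e1 : (q+1)*(k1-1) = (q+1)*(k2-1) := by
      generalize (q+1)*(k1-1) = A at *
      generalize (q+1)*(k2-1) = B at *
      omega
    have e2 : k1 - 1 = k2 - 1 := Nat.eq_of_mul_eq_mul_left (by omega) e1
    exact ⟨by omega, ht⟩
  calc (PF q s (s*(2*q+3)+q)).card = Nat.card ↥(PF q s (s*(2*q+3)+q)) :=
        (Nat.card_eq_finsetCard _).symm
    _ ≤ _ := Nat.card_le_card_of_injective f hinj







lemma partB {q s : ℕ} (hq : 0 < q) (m : ℤ)
    (hm : (((q+1)*(2*q+1) : ℕ) : ℤ) * ((s*(2*q+3)+3*q : ℕ) : ℤ) - 1 < m) :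
    (PF q s (s*(2*q+3)+q)).card ≤
      Nat.card {p : ℕ × ℕ × ℕ // ((q*(2*q+1) : ℕ) : ℤ) * p.1 + ((q+1)*(2*q+1) : ℕ) * p.2.1
        + ((q+1)*(2*q+3) : ℕ) * p.2.2 = m} := by
  set F := (((q+1)*(2*q+1) : ℕ) : ℤ) * ((s*(2*q+3)+3*q : ℕ) : ℤ) - 1 with hF
  obtain ⟨d, hd1, hdm⟩ : ∃ d : ℕ, 1 ≤ d ∧ m = F + d := ⟨(m-F).toNat, by omega, by omega⟩
  set σ := d % (2*q+1) with hσd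
  set e := d / (2*q+1) with hed
  have hde : (2*q+1)*e + σ = d := Nat.div_add_mod d (2*q+1)
  have hσlt : σ < 2*q+1 := Nat.mod_lt _ (by omega)
  rcases Nat.eq_zero_or_pos σ with hσ0 | hσ1
  · have he1 : 1 ≤ e := by
      rcases Nat.eq_zero_or_pos e with h | h
      · rw [h, hσ0] at hde; simp at hde; omega
      · exact h
    apply partB_core hq m (2*q) e he1
    have dZ : (d:ℤ) = (2*q+1)*e := by
      rw [hσ0] at hde; exact_mod_cast (by omega : d = (2*q+1)*e)
    rw [hdm, hF, dZ]
    push_cast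
    ring
  · apply partB_core hq m (σ-1) (e + (q+2)*(2*q+1-σ) + 1) (Nat.le_add_left 1 _)
    have dZ : (d:ℤ) = (2*q+1)*e + σ := by exact_mod_cast hde.symm
    have sZ : ((σ-1:ℕ):ℤ) = (σ:ℤ) - 1 := by omega
    have tZ : ((2*q+1-σ:ℕ):ℤ) = 2*(q:ℤ)+1-σ := by omega
    rw [hdm, hF, dZ]
    push_cast [sZ, tZ]
    ring

lemma card_succ {q s : ℕ} (hq : 0 < q) :
    (PF q s (s*(2*q+3)+q-1)).card + 1 ≤ (PF q s (s*(2*q+3)+q)).card := by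
  have hsub : PF q s (s*(2*q+3)+q-1) ⊆ PF q s (s*(2*q+3)+q) := by
    rintro ⟨k, t⟩ hx
    rw [mem_PF hq] at hx ⊢
    exact ⟨hx.1, hx.2.1, by omega⟩
  have hcomm : (2*q+3)*s = s*(2*q+3) := mul_comm _ _
  have hmem1 : (1, s) ∈ PF q s (s*(2*q+3)+q) := by
    rw [mem_PF hq]
    exact ⟨le_refl s, le_refl 1, by omega⟩
  have hmem2 : (1, s) ∉ PF q s (s*(2*q+3)+q-1) := by
    rw [mem_PF hq]
    rintro ⟨-, -, h⟩
    omega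
  calc (PF q s (s*(2*q+3)+q-1)).card + 1
      = (insert (1,s) (PF q s (s*(2*q+3)+q-1))).card :=
        (Finset.card_insert_of_notMem hmem2).symm
    _ ≤ (PF q s (s*(2*q+3)+q)).card :=
        Finset.card_le_card (Finset.insert_subset hmem1 hsub)


end Stmt15

/-- For even positive `n`:
`g(t_n, t_{n+1}, t_{n+2}; s(s+1) + ∑_{j=1}^s ⌈6j/n⌉) = (n+1)(n+2)(2s(n+3)+3n)/4 - 1`. -/
theorem stmt15 (n : ℕ) (hn : 0 < n) (hne : Even n) (s : ℕ) :
    IsGreatest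
      {m : ℤ | d3 (tri n) (tri (n + 1)) (tri (n + 2)) m ≤
        s * (s + 1) + ∑ j ∈ Finset.Icc 1 s, (⌈(6 * j : ℚ) / n⌉).toNat}
      (((n : ℤ) + 1) * ((n : ℤ) + 2) * (2 * s * ((n : ℤ) + 3) + 3 * n) / 4 - 1) := by
  obtain ⟨q, rfl⟩ := hne
  have hq : 0 < q := by omega
  have ha : tri (q+q) = q*(2*q+1) := by
    unfold tri
    rw [show (q+q)*((q+q)+1) = 2*(q*(2*q+1)) from by ring,
      Nat.mul_div_cancel_left _ two_pos]
  have hb : tri (q+q+1) = (q+1)*(2*q+1) := by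
    unfold tri
    rw [show (q+q+1)*((q+q+1)+1) = 2*((q+1)*(2*q+1)) from by ring,
      Nat.mul_div_cancel_left _ two_pos]
  have hc : tri (q+q+2) = (q+1)*(2*q+3) := by
    unfold tri
    rw [show (q+q+2)*((q+q+2)+1) = 2*((q+1)*(2*q+3)) from by ring,
      Nat.mul_div_cancel_left _ two_pos]
  have hP : s * (s + 1) + ∑ j ∈ Finset.Icc 1 s, (⌈(6 * j : ℚ) / ((q+q : ℕ) : ℚ)⌉).toNat
      = s*(s+1) + ∑ j ∈ Finset.Icc 1 s, ((3*j-1)/q + 1) := by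
    congr 1
    apply Finset.sum_congr rfl
    intro j hj
    rw [Finset.mem_Icc] at hj
    rw [show q + q = 2*q from by ring]
    exact Stmt15.ceil_eq hq hj.1
  have hZ1 : (s*(2*q+3)+q-1) + 1 = s*(2*q+3)+q := by
    generalize s*(2*q+3) = A
    omega
  have hcard : (Stmt15.PF q s (s*(2*q+3)+q-1)).card
      = s*(s+1) + ∑ j ∈ Finset.Icc 1 s, ((3*j-1)/q + 1) := by
    rw [Stmt15.card_PF, Stmt15.sum_PF hq hZ1]
  have hFval : (((q+q : ℕ) : ℤ) + 1) * (((q+q : ℕ) : ℤ) + 2) *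
        (2 * (s:ℤ) * (((q+q : ℕ) : ℤ) + 3) + 3 * ((q+q : ℕ) : ℤ)) / 4 - 1
      = (((q+1)*(2*q+1) : ℕ) : ℤ) * ((s*(2*q+3)+3*q : ℕ) : ℤ) - 1 := by
    rw [show (((q+q : ℕ) : ℤ) + 1) * (((q+q : ℕ) : ℤ) + 2) *
        (2 * (s:ℤ) * (((q+q : ℕ) : ℤ) + 3) + 3 * ((q+q : ℕ) : ℤ))
        = 4 * ((((q+1)*(2*q+1) : ℕ) : ℤ) * ((s*(2*q+3)+3*q : ℕ) : ℤ)) from by push_cast; ring,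
      Int.mul_ediv_cancel_left _ (by norm_num)]
  constructor
  · show d3 (tri (q+q)) (tri (q+q+1)) (tri (q+q+2)) _ ≤ _
    rw [ha, hb, hc, hP, hFval]
    unfold d3
    exact Stmt15.partA hq _ hcard
  · intro m hm
    simp only [Set.mem_setOf_eq] at hm
    by_contra hlt
    push_neg at hlt
    rw [ha, hb, hc, hP] at hm
    rw [hFval] at hlt
    have h1 := Stmt15.partB hq m hlt
    have h2 := Stmt15.card_succ (s := s) hq
    rw [hcard] at h2
    unfold d3 at hm
    omega
end

section
/- For odd n ≥ 3 and s ≥ 0, g(t_n, t_{n+1}, t_{n+2}; Σ_{j=1}^{s} ⌈ (j/2)(1 + 3/n) ⌉) = (n+1)(n+2)((n+3)s + 3(n−1))/4 − 1, where t_k = k(k+1)/2. -/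
namespace Stmt16

/-- The lattice-point count `#{(i,j) : (2d-1)i + (d+1)j ≤ M}`. -/
def cardN (d M : ℕ) : ℕ :=
  ((Finset.range (M+1) ×ˢ Finset.range (M+1)).filter
    (fun q => (2*d-1) * q.1 + (d+1) * q.2 ≤ M)).card

/-- Fiberwise evaluation of `cardN`. -/
lemma cardN_eval (d M : ℕ) (hd : 2 ≤ d) :
    cardN d M = ∑ j ∈ Finset.range (M+1),
      (if (d+1)*j ≤ M then (M - (d+1)*j)/(2*d-1) + 1 else 0) := by
  rw [cardN, Finset.card_filter, Finset.sum_product, Finset.sum_comm]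
  simp only []
  refine Finset.sum_congr rfl (fun j hj => ?_)
  by_cases h : (d+1)*j ≤ M
  · rw [if_pos h]
    have hcond : ∀ i : ℕ, ((2*d-1) * i + (d+1) * j ≤ M) ↔ i ≤ (M - (d+1)*j)/(2*d-1) := by
      intro i
      rw [Nat.le_div_iff_mul_le (by omega : 0 < 2*d-1), Nat.mul_comm i (2*d-1)]
      omega
    calc (∑ i ∈ Finset.range (M+1), if (2*d-1) * i + (d+1) * j ≤ M then 1 else 0)
        = ((Finset.range (M+1)).filter (fun i => (2*d-1) * i + (d+1) * j ≤ M)).card := by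
          rw [Finset.card_filter]
      _ = ((Finset.range (M+1)).filter (fun i => i ≤ (M - (d+1)*j)/(2*d-1))).card := by
          congr 1; apply Finset.filter_congr; intro i _; simp [hcond i]
      _ = (Finset.range ((M - (d+1)*j)/(2*d-1) + 1)).card := by
          congr 1; ext x
          simp only [Finset.mem_filter, Finset.mem_range, Nat.lt_succ_iff]
          have : (M - (d+1)*j)/(2*d-1) ≤ M := le_trans (Nat.div_le_self _ _) (by omega)
          omega
      _ = (M - (d+1)*j)/(2*d-1) + 1 := Finset.card_range _
  · rw [if_neg h]
    apply Finset.sum_eq_zero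
    intro i _
    rw [if_neg (by omega)]

/-- `cardN` is monotone enough: it dominates the evaluation at a smaller bound. -/
lemma cardN_mono (d : ℕ) (hd : 2 ≤ d) {M M' : ℕ} (h : M ≤ M') :
    cardN d M ≤ cardN d M' := by
  rw [cardN_eval d M hd, cardN_eval d M' hd]
  calc (∑ j ∈ Finset.range (M+1), if (d+1)*j ≤ M then (M - (d+1)*j)/(2*d-1) + 1 else 0)
      ≤ ∑ j ∈ Finset.range (M+1), (if (d+1)*j ≤ M' then (M' - (d+1)*j)/(2*d-1) + 1 else 0) := by
        apply Finset.sum_le_sum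
        intro j _
        by_cases hj : (d+1)*j ≤ M
        · rw [if_pos hj, if_pos (le_trans hj h)]
          have := Nat.div_le_div_right (c := 2*d-1) (by omega : M - (d+1)*j ≤ M' - (d+1)*j)
          omega
        · rw [if_neg hj]; exact Nat.zero_le _
    _ ≤ ∑ j ∈ Finset.range (M'+1), (if (d+1)*j ≤ M' then (M' - (d+1)*j)/(2*d-1) + 1 else 0) := by
        apply Finset.sum_le_sum_of_subset
        exact Finset.range_subset_range.mpr (by omega)

/-- The threshold sum. -/
def pSum (d s : ℕ) : ℕ := ∑ t ∈ Finset.Icc 1 s, (((d+1)*t - 1)/(2*d-1) + 1)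

lemma pSum_eq_range (d s : ℕ) :
    pSum d s = ∑ i ∈ Finset.range s, (((d+1)*(1+i) - 1)/(2*d-1) + 1) := by
  rw [pSum, ← Finset.Ico_add_one_right_eq_Icc, Finset.sum_Ico_eq_sum_range]
  simp

/-- Exact value at `M = (d+1)s - 1`. -/
lemma cardN_exact (d s : ℕ) (hd : 2 ≤ d) (hs : 1 ≤ s) :
    cardN d ((d+1)*s - 1) = pSum d s := by
  set M := (d+1)*s - 1 with hM
  have hMs : s ≤ M + 1 := by
    have : s ≤ (d+1)*s := Nat.le_mul_of_pos_left s (by omega)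
    omega
  rw [cardN_eval d M hd]
  have hstep : (∑ j ∈ Finset.range (M+1),
      if (d+1)*j ≤ M then (M - (d+1)*j)/(2*d-1) + 1 else 0)
      = ∑ j ∈ Finset.range s, ((M - (d+1)*j)/(2*d-1) + 1) := by
    rw [← Finset.sum_subset (Finset.range_subset_range.mpr (by omega : s ≤ M+1))]
    · apply Finset.sum_congr rfl
      intro j hj
      rw [Finset.mem_range] at hj
      rw [if_pos]
      have h1 : (d+1)*j + (d+1) ≤ (d+1)*s := by
        have : (d+1)*(j+1) ≤ (d+1)*s := Nat.mul_le_mul_left _ (by omega)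
        calc (d+1)*j + (d+1) = (d+1)*(j+1) := by ring
          _ ≤ (d+1)*s := this
      omega
    · intro j hj hjs
      rw [Finset.mem_range] at hj hjs
      rw [if_neg]
      have h1 : (d+1)*s ≤ (d+1)*j := Nat.mul_le_mul_left _ (by omega)
      omega
  rw [hstep, ← Finset.sum_range_reflect]
  rw [pSum_eq_range]
  apply Finset.sum_congr rfl
  intro i hi
  rw [Finset.mem_range] at hi
  congr 2
  -- (M - (d+1)*(s-1-i)) = (d+1)*(1+i) - 1
  have h1 : (d+1)*(s-1-i) + (d+1)*(1+i) = (d+1)*s := by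
    rw [← Nat.mul_add]
    congr 1
    omega
  have h2 : 1 ≤ (d+1)*(1+i) := Nat.mul_pos (by omega) (by omega)
  omega

/-- Lower bound at `M ≥ (d+1)s`. -/
lemma cardN_lower (d s M : ℕ) (hd : 2 ≤ d) (hM : (d+1)*s ≤ M) :
    pSum d s + 1 ≤ cardN d M := by
  have key : pSum d s + 1 ≤ cardN d ((d+1)*s) := by
    set M0 := (d+1)*s with hM0
    rw [cardN_eval d M0 hd]
    have hss : s + 1 ≤ M0 + 1 := by
      have : s ≤ (d+1)*s := Nat.le_mul_of_pos_left s (by omega)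
      omega
    have hstep : (∑ j ∈ Finset.range (M0+1),
        if (d+1)*j ≤ M0 then (M0 - (d+1)*j)/(2*d-1) + 1 else 0)
        = ∑ j ∈ Finset.range (s+1), ((M0 - (d+1)*j)/(2*d-1) + 1) := by
      rw [← Finset.sum_subset (Finset.range_subset_range.mpr hss)]
      · apply Finset.sum_congr rfl
        intro j hj
        rw [Finset.mem_range] at hj
        rw [if_pos (Nat.mul_le_mul_left _ (by omega))]
      · intro j hj hjs
        rw [Finset.mem_range] at hj hjs
        rw [if_neg]
        have h1 : (d+1)*(s+1) ≤ (d+1)*j := Nat.mul_le_mul_left _ (by omega)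
        have h2 : (d+1)*s + (d+1) = (d+1)*(s+1) := by ring
        omega
    rw [hstep, ← Finset.sum_range_reflect]
    have hre : ∀ i ∈ Finset.range (s+1),
        (M0 - (d+1)*(s+1-1-i))/(2*d-1) + 1 = ((d+1)*i)/(2*d-1) + 1 := by
      intro i hi
      rw [Finset.mem_range] at hi
      congr 2
      have h1 : (d+1)*(s-i) + (d+1)*i = (d+1)*s := by
        rw [← Nat.mul_add]; congr 1; omega
      have h2 : s + 1 - 1 - i = s - i := by omega
      rw [h2]
      omega
    rw [Finset.sum_congr rfl hre, Finset.sum_range_succ', pSum_eq_range, Nat.mul_zero, Nat.zero_div]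
    have hterm : ∀ i ∈ Finset.range s,
        ((d+1)*(1+i) - 1)/(2*d-1) + 1 ≤ ((d+1)*(i+1))/(2*d-1) + 1 := by
      intro i _
      have h0 : 1 + i = i + 1 := by omega
      rw [h0]
      exact Nat.add_le_add_right (Nat.div_le_div_right (by omega)) 1
    have := Finset.sum_le_sum hterm
    omega
  exact le_trans key (cardN_mono d hd hM)


/-- Ceiling of a rational `A/B` as natural division. -/
lemma ceil_div (A B : ℕ) (hA : 1 ≤ A) (hB : 1 ≤ B) :
    ⌈(A:ℚ)/(B:ℚ)⌉ = (((A-1)/B + 1 : ℕ) : ℤ) := by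
  have hBQ : (0:ℚ) < B := by exact_mod_cast hB
  have hd1 : (A-1)/B*B ≤ A-1 := Nat.div_mul_le_self _ _
  have hd2 : A - 1 < ((A-1)/B + 1) * B := by
    rw [add_mul, one_mul]
    linarith [Nat.div_add_mod' (A-1) B, Nat.mod_lt (A-1) (by omega : 0 < B)]
  set q : ℕ := (A-1)/B with hq
  rw [Int.ceil_eq_iff]
  constructor
  · rw [lt_div_iff₀ hBQ]
    have key : q * B < A := by omega
    have h2' : ((q * B : ℕ) : ℚ) < (A:ℚ) := by exact_mod_cast key
    push_cast at h2' ⊢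
    linarith
  · rw [div_le_iff₀ hBQ]
    have key : A ≤ (q + 1) * B := by omega
    have h2' : ((A:ℕ) : ℚ) ≤ (((q + 1) * B : ℕ) : ℚ) := by exact_mod_cast key
    push_cast at h2' ⊢
    linarith

/-- The summand of the threshold, in natural-division form. -/
lemma ceil_toNat (d n : ℕ) (hd : 2 ≤ d) (hn : n + 1 = 2*d) (t : ℕ) (ht : 1 ≤ t) :
    (⌈(t : ℚ) / 2 * (1 + 3 / (n:ℚ))⌉).toNat = ((d+1)*t - 1)/(2*d-1) + 1 := by
  have hn3 : 3 ≤ n := by omega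
  have hnQ : (n:ℚ) = 2*(d:ℚ) - 1 := by
    have : ((n:ℚ)) + 1 = 2*(d:ℚ) := by exact_mod_cast hn
    linarith
  have hdQ : (2:ℚ) ≤ (d:ℚ) := by exact_mod_cast hd
  have hne : (n:ℚ) ≠ 0 := by
    rw [hnQ]; intro h; linarith
  have heq : (t : ℚ)/2 * (1 + 3 / (n:ℚ)) = (((d+1)*t : ℕ) : ℚ) / (((2*d-1 : ℕ)) : ℚ) := by
    have hc1 : (((2*d-1 : ℕ)) : ℚ) = 2*(d:ℚ) - 1 := by
      push_cast [Nat.cast_sub (show 1 ≤ 2*d by omega)]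
      ring
    rw [hc1, hnQ]
    have hne2 : (2*(d:ℚ) - 1) ≠ 0 := by intro h; linarith
    field_simp
    push_cast
    ring
  rw [heq, ceil_div _ _ (Nat.mul_pos (by omega) (by omega)) (by omega)]
  exact Int.toNat_natCast _

/-- No representations when `M < 0`. -/
lemma card_pairs_neg (d : ℕ) (hd : 2 ≤ d) (M : ℤ) (hM : M < 0) :
    Nat.card {q : ℕ × ℕ // (2*(d:ℤ)-1) * q.1 + ((d:ℤ)+1) * q.2 ≤ M} = 0 := by
  have hD : (2:ℤ) ≤ (d:ℤ) := by exact_mod_cast hd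
  have : IsEmpty {q : ℕ × ℕ // (2*(d:ℤ)-1) * q.1 + ((d:ℤ)+1) * q.2 ≤ M} := by
    refine ⟨fun ⟨q, hq⟩ => ?_⟩
    have h1 : (0:ℤ) ≤ (2*(d:ℤ)-1) * q.1 := mul_nonneg (by linarith) (Int.natCast_nonneg _)
    have h2 : (0:ℤ) ≤ ((d:ℤ)+1) * q.2 := mul_nonneg (by linarith) (Int.natCast_nonneg _)
    linarith
  exact Nat.card_of_isEmpty

/-- Pair count as a finite count. -/
lemma card_pairs (d Mn : ℕ) (hd : 2 ≤ d) :
    Nat.card {q : ℕ × ℕ // (2*(d:ℤ)-1) * q.1 + ((d:ℤ)+1) * q.2 ≤ (Mn:ℤ)} = cardN d Mn := by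
  have hD : (2:ℤ) ≤ (d:ℤ) := by exact_mod_cast hd
  have hiff : ∀ q : ℕ × ℕ, ((2*(d:ℤ)-1) * q.1 + ((d:ℤ)+1) * q.2 ≤ (Mn:ℤ))
      ↔ q ∈ (Finset.range (Mn+1) ×ˢ Finset.range (Mn+1)).filter
        (fun q => (2*d-1) * q.1 + (d+1) * q.2 ≤ Mn) := by
    rintro ⟨i, j⟩
    simp only [Finset.mem_filter, Finset.mem_product, Finset.mem_range]
    constructor
    · intro h
      have hi : (i:ℤ) ≤ (2*(d:ℤ)-1) * i :=
        le_mul_of_one_le_left (Int.natCast_nonneg _) (by linarith)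
      have hj : (j:ℤ) ≤ ((d:ℤ)+1) * j :=
        le_mul_of_one_le_left (Int.natCast_nonneg _) (by linarith)
      have h1 : (0:ℤ) ≤ (2*(d:ℤ)-1) * i := mul_nonneg (by linarith) (Int.natCast_nonneg _)
      have h2 : (0:ℤ) ≤ ((d:ℤ)+1) * j := mul_nonneg (by linarith) (Int.natCast_nonneg _)
      have hiM : (i:ℤ) ≤ (Mn:ℤ) := by linarith
      have hjM : (j:ℤ) ≤ (Mn:ℤ) := by linarith
      refine ⟨⟨by exact_mod_cast Int.lt_add_one_iff.mpr hiM, by exact_mod_cast Int.lt_add_one_iff.mpr hjM⟩, ?_⟩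
      zify [show 1 ≤ 2*d by omega]
      push_cast
      linarith
    · rintro ⟨-, h⟩
      zify [show 1 ≤ 2*d by omega] at h
      push_cast at h
      linarith
  rw [Nat.card_congr (Equiv.subtypeEquivRight hiff)]
  rw [cardN]
  exact Nat.card_eq_finsetCard _

/-- Structure of an arbitrary representation. -/
lemma rep_struct (d : ℕ) (hd : 2 ≤ d) (a b c : ℕ)
    (ha : (a:ℤ) = 2*(d:ℤ)^2 - d) (hb : (b:ℤ) = 2*(d:ℤ)^2 + d)
    (hc : (c:ℤ) = 2*(d:ℤ)^2 + 3*(d:ℤ) + 1)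
    (x0 z0 : ℕ) (hx0 : x0 ≤ 2*d) (hz0 : z0 < d) (M m : ℤ)
    (hm : m = (a:ℤ) * x0 + (c:ℤ) * z0 + (b:ℤ) * M) (x y z : ℕ)
    (hp : (a:ℤ) * x + (b:ℤ) * y + (c:ℤ) * z = m) :
    ∃ i j : ℕ, x = x0 + (2*d+1)*i ∧ z = z0 + d*j ∧
      (y:ℤ) + (2*(d:ℤ)-1)*i + ((d:ℤ)+1)*j = M := by
  have hD : (2:ℤ) ≤ (d:ℤ) := by exact_mod_cast hd
  have heq : (2*(d:ℤ)^2 - d) * x + (2*(d:ℤ)^2 + d) * y + (2*(d:ℤ)^2+3*d+1) * z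
      = (2*(d:ℤ)^2-d) * x0 + (2*(d:ℤ)^2+3*d+1) * z0 + (2*(d:ℤ)^2+d) * M := by
    rw [← ha, ← hb, ← hc]; linarith [hp, hm]
  have hx0' : (x0:ℤ) ≤ 2*(d:ℤ) := by exact_mod_cast hx0
  have hz0' : (z0:ℤ) ≤ (d:ℤ) - 1 := by
    have : (z0:ℤ) < (d:ℤ) := by exact_mod_cast hz0
    omega
  set E : ℤ := (d:ℤ)*M - d*y + (d+1)*z0 - (d+1)*z - ((d:ℤ)-1)*((x:ℤ)-x0) with hE
  have keyx : (x:ℤ) - x0 = (2*(d:ℤ)+1) * E := by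
    rw [hE]; linear_combination heq
  have hEnn : 0 ≤ E := by
    by_contra hneg
    push_neg at hneg
    have h1 : E ≤ -1 := by omega
    have h2 : (2*(d:ℤ)+1) * E ≤ (2*(d:ℤ)+1) * (-1) :=
      mul_le_mul_of_nonneg_left h1 (by linarith)
    have hxnn : (0:ℤ) ≤ (x:ℤ) := Int.natCast_nonneg x
    linarith
  have hiE : ((E.toNat : ℕ) : ℤ) = E := Int.toNat_of_nonneg hEnn
  have hxi : x = x0 + (2*d+1)*E.toNat := by
    have : (x:ℤ) = (x0:ℤ) + (2*(d:ℤ)+1)*(E.toNat : ℤ) := by rw [hiE]; linarith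
    exact_mod_cast this
  set G : ℤ := (2*(d:ℤ)+1)*M - (2*d+1)*y + (2*d-1)*x0 - (2*d-1)*x - (2*(d:ℤ)+3)*((z:ℤ)-z0)
    with hG
  have keyz : (z:ℤ) - z0 = (d:ℤ) * G := by
    rw [hG]; linear_combination heq
  have hGnn : 0 ≤ G := by
    by_contra hneg
    push_neg at hneg
    have h1 : G ≤ -1 := by omega
    have h2 : (d:ℤ) * G ≤ (d:ℤ) * (-1) := mul_le_mul_of_nonneg_left h1 (by linarith)
    have hznn : (0:ℤ) ≤ (z:ℤ) := Int.natCast_nonneg z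
    linarith
  have hjG : ((G.toNat : ℕ) : ℤ) = G := Int.toNat_of_nonneg hGnn
  have hzj : z = z0 + d*G.toNat := by
    have : (z:ℤ) = (z0:ℤ) + (d:ℤ)*(G.toNat : ℤ) := by rw [hjG]; linarith
    exact_mod_cast this
  refine ⟨E.toNat, G.toNat, hxi, hzj, ?_⟩
  have hx2 : (x:ℤ) = (x0:ℤ) + (2*(d:ℤ)+1)*(E.toNat : ℤ) := by rw [hiE]; linarith
  have hz2 : (z:ℤ) = (z0:ℤ) + (d:ℤ)*(G.toNat : ℤ) := by rw [hjG]; linarith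
  have hb2 : (2*(d:ℤ)^2+d) * ((y:ℤ) + (2*(d:ℤ)-1)*(E.toNat:ℤ) + ((d:ℤ)+1)*(G.toNat:ℤ) - M)
      = 0 := by
    linear_combination heq - (2*(d:ℤ)^2-d)*hx2 - (2*(d:ℤ)^2+3*d+1)*hz2
  have hbne : (2*(d:ℤ)^2+d) ≠ 0 := by
    have hsq : (0:ℤ) ≤ (d:ℤ)^2 := sq_nonneg _
    intro h0
    linarith
  rcases mul_eq_zero.mp hb2 with h | h
  · exact absurd h hbne
  · linarith

/-- The main bijection: representation count equals the pair count. -/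
lemma card_reps (d : ℕ) (hd : 2 ≤ d) (a b c : ℕ)
    (ha : (a:ℤ) = 2*(d:ℤ)^2 - d) (hb : (b:ℤ) = 2*(d:ℤ)^2 + d)
    (hc : (c:ℤ) = 2*(d:ℤ)^2 + 3*(d:ℤ) + 1)
    (x0 z0 : ℕ) (hx0 : x0 ≤ 2*d) (hz0 : z0 < d) (M m : ℤ)
    (hm : m = (a:ℤ) * x0 + (c:ℤ) * z0 + (b:ℤ) * M) :
    d3 a b c m = Nat.card {q : ℕ × ℕ // (2*(d:ℤ)-1) * q.1 + ((d:ℤ)+1) * q.2 ≤ M} := by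
  unfold d3
  symm
  apply Nat.card_eq_of_bijective
    (f := fun (q : {q : ℕ × ℕ // (2*(d:ℤ)-1) * q.1 + ((d:ℤ)+1) * q.2 ≤ M}) =>
      (⟨(x0 + (2*d+1)*q.1.1, (M - ((2*(d:ℤ)-1) * q.1.1 + ((d:ℤ)+1) * q.1.2)).toNat,
        z0 + d*q.1.2), by
        have hynn : 0 ≤ M - ((2*(d:ℤ)-1) * q.1.1 + ((d:ℤ)+1) * q.1.2) :=
          sub_nonneg.mpr q.2
        rw [hm, ha, hc, hb]
        push_cast [Int.toNat_of_nonneg hynn]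
        ring⟩ :
        {p : ℕ × ℕ × ℕ // (a:ℤ) * p.1 + (b:ℤ) * p.2.1 + (c:ℤ) * p.2.2 = m}))
  constructor
  · rintro ⟨⟨i, j⟩, hq⟩ ⟨⟨i', j'⟩, hq'⟩ h
    simp only [Subtype.mk.injEq, Prod.mk.injEq] at h
    obtain ⟨h1, -, h3⟩ := h
    have hi : i = i' := Nat.eq_of_mul_eq_mul_left (show 0 < 2*d+1 by omega) (by omega)
    have hj : j = j' := Nat.eq_of_mul_eq_mul_left (show 0 < d by omega) (by omega)
    exact Subtype.ext (by simp [hi, hj])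
  · rintro ⟨⟨x, y, z⟩, hp⟩
    obtain ⟨i, j, hxi, hzj, hy⟩ :=
      rep_struct d hd a b c ha hb hc x0 z0 hx0 hz0 M m hm x y z hp
    have hynn : (0:ℤ) ≤ (y:ℤ) := Int.natCast_nonneg y
    refine ⟨⟨(i, j), by linarith⟩, ?_⟩
    apply Subtype.ext
    simp only [Prod.mk.injEq]
    refine ⟨hxi.symm, ?_, hzj.symm⟩
    rw [show M - ((2*(d:ℤ)-1) * i + ((d:ℤ)+1) * j) = ((y:ℕ):ℤ) by linarith]
    exact Int.toNat_natCast y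

end Stmt16

open Stmt16 in
/-- For odd `n ≥ 3`:
`g(t_n, t_{n+1}, t_{n+2}; ∑_{j=1}^s ⌈(j/2)(1 + 3/n)⌉) = (n+1)(n+2)((n+3)s + 3(n-1))/4 - 1`. -/
theorem stmt16 (n : ℕ) (hn : 3 ≤ n) (hno : Odd n) (s : ℕ) :
    IsGreatest
      {m : ℤ | d3 (tri n) (tri (n + 1)) (tri (n + 2)) m ≤
        ∑ j ∈ Finset.Icc 1 s, (⌈(j : ℚ) / 2 * (1 + 3 / n)⌉).toNat}
      (((n : ℤ) + 1) * ((n : ℤ) + 2) * (((n : ℤ) + 3) * s + 3 * ((n : ℤ) - 1)) / 4 - 1) := by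
  obtain ⟨k, hk⟩ := hno
  obtain ⟨d, hd, hn2⟩ : ∃ d : ℕ, 2 ≤ d ∧ n + 1 = 2*d := ⟨k+1, by omega, by omega⟩
  have hD : (2:ℤ) ≤ (d:ℤ) := by exact_mod_cast hd
  have hnz : (n:ℤ) = 2*(d:ℤ) - 1 := by omega
  -- triangular number values
  have htriA : tri n = n*d := by
    rw [tri]
    have h1 : n*(n+1) = (n*d)*2 := by rw [hn2]; ring
    rw [h1, Nat.mul_div_cancel _ (by omega : 0 < 2)]
  have htriB : tri (n+1) = d*(2*d+1) := by
    rw [tri]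
    have h1 : (n+1)*(n+1+1) = (d*(2*d+1))*2 := by rw [hn2]; ring
    rw [h1, Nat.mul_div_cancel _ (by omega : 0 < 2)]
  have htriC : tri (n+2) = (2*d+1)*(d+1) := by
    rw [tri]
    have h2 : n+2 = 2*d+1 := by omega
    have h1 : (n+2)*(n+2+1) = ((2*d+1)*(d+1))*2 := by rw [h2]; ring
    rw [h1, Nat.mul_div_cancel _ (by omega : 0 < 2)]
  have haz : ((tri n : ℕ) : ℤ) = 2*(d:ℤ)^2 - (d:ℤ) := by
    rw [htriA]; push_cast; rw [hnz]; ring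
  have hbz : ((tri (n+1) : ℕ) : ℤ) = 2*(d:ℤ)^2 + (d:ℤ) := by
    rw [htriB]; push_cast; ring
  have hcz : ((tri (n+2) : ℕ) : ℤ) = 2*(d:ℤ)^2 + 3*(d:ℤ) + 1 := by
    rw [htriC]; push_cast; ring
  -- the threshold sum
  have hsum : (∑ j ∈ Finset.Icc 1 s, (⌈(j : ℚ) / 2 * (1 + 3 / (n:ℚ))⌉).toNat) = pSum d s := by
    rw [pSum]
    refine Finset.sum_congr rfl (fun t htmem => ?_)
    rw [Finset.mem_Icc] at htmem
    exact ceil_toNat d n hd hn2 t htmem.1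
  set g : ℤ := ((n : ℤ) + 1) * ((n : ℤ) + 2) * (((n : ℤ) + 3) * s + 3 * ((n : ℤ) - 1)) / 4 - 1
    with hgdef
  have hg : g = (tri n : ℤ) * ((2*d : ℕ) : ℤ) + (tri (n+2) : ℤ) * (((d-1) : ℕ) : ℤ)
      + (tri (n+1) : ℤ) * (((d:ℤ)+1)*(s:ℤ) - 1) := by
    rw [hgdef, haz, hbz, hcz]
    have hd1 : (((d-1 : ℕ)) : ℤ) = (d:ℤ) - 1 := by omega
    have hd2 : (((2*d : ℕ)) : ℤ) = 2*(d:ℤ) := by push_cast; ring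
    rw [hd1, hd2]
    have h4 : ((n : ℤ) + 1) * ((n : ℤ) + 2) * (((n : ℤ) + 3) * s + 3 * ((n : ℤ) - 1))
        = 4 * ((2*(d:ℤ)^2 - d) * (2*(d:ℤ)) + (2*(d:ℤ)^2+3*d+1) * ((d:ℤ)-1)
          + (2*(d:ℤ)^2+d) * (((d:ℤ)+1)*(s:ℤ) - 1) + 1) := by
      rw [hnz]; ring
    rw [h4, Int.mul_ediv_cancel_left _ (by norm_num : (4:ℤ) ≠ 0)]
    ring
  constructor
  · -- membership
    show d3 (tri n) (tri (n+1)) (tri (n+2)) g ≤ _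
    rw [hsum]
    by_cases hs : s = 0
    · subst hs
      have hM : g = (tri n : ℤ) * ((2*d : ℕ) : ℤ) + (tri (n+2) : ℤ) * (((d-1) : ℕ) : ℤ)
          + (tri (n+1) : ℤ) * (-1) := by
        rw [hg]; push_cast; ring
      rw [card_reps d hd (tri n) (tri (n+1)) (tri (n+2)) haz hbz hcz (2*d) (d-1)
        le_rfl (by omega) (-1) g hM]
      rw [card_pairs_neg d hd (-1) (by norm_num)]
      exact Nat.zero_le _
    · have hs1 : 1 ≤ s := by omega
      have hmul1 : 1 ≤ (d+1)*s := Nat.mul_pos (by omega) (by omega)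
      have hMn : ((((d+1)*s - 1 : ℕ)) : ℤ) = ((d:ℤ)+1)*(s:ℤ) - 1 := by
        rw [Nat.cast_sub hmul1]; push_cast; ring
      have hM : g = (tri n : ℤ) * ((2*d : ℕ) : ℤ) + (tri (n+2) : ℤ) * (((d-1) : ℕ) : ℤ)
          + (tri (n+1) : ℤ) * ((((d+1)*s - 1 : ℕ)) : ℤ) := by
        rw [hg, ← hMn]
      rw [card_reps d hd (tri n) (tri (n+1)) (tri (n+2)) haz hbz hcz (2*d) (d-1)
        le_rfl (by omega) _ g hM]
      rw [card_pairs d _ hd, cardN_exact d s hd hs1]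
  · -- upper bound
    intro m hmem
    simp only [Set.mem_setOf_eq] at hmem
    rw [hsum] at hmem
    by_contra hlt
    push_neg at hlt
    have hgm : g + 1 ≤ m := Int.add_one_le_iff.mpr hlt
    have hTpos : (0:ℤ) < 2*(d:ℤ)+1 := by linarith
    have hdpos : (0:ℤ) < (d:ℤ) := by linarith
    set x0 : ℕ := (m % (2*(d:ℤ)+1)).toNat with hx0def
    have hx0v : ((x0:ℕ):ℤ) = m % (2*(d:ℤ)+1) :=
      Int.toNat_of_nonneg (Int.emod_nonneg m (by linarith))
    have hx0le : x0 ≤ 2*d := by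
      have h1 : m % (2*(d:ℤ)+1) < 2*(d:ℤ)+1 := Int.emod_lt_of_pos m hTpos
      have h2 : ((x0:ℕ):ℤ) < 2*(d:ℤ)+1 := by rw [hx0v]; exact h1
      omega
    set z0 : ℕ := (m % (d:ℤ)).toNat with hz0def
    have hz0v : ((z0:ℕ):ℤ) = m % (d:ℤ) :=
      Int.toNat_of_nonneg (Int.emod_nonneg m (by linarith))
    have hz0lt : z0 < d := by
      have h1 : m % (d:ℤ) < (d:ℤ) := Int.emod_lt_of_pos m hdpos
      have h2 : ((z0:ℕ):ℤ) < (d:ℤ) := by rw [hz0v]; exact h1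
      omega
    have hdvd1 : (d:ℤ) ∣ (m - (tri n : ℤ)*x0 - (tri (n+2) : ℤ)*z0) := by
      refine ⟨m / (d:ℤ) - (2*(d:ℤ)-1)*x0 - (2*(d:ℤ)+3)*z0, ?_⟩
      have hdm := Int.mul_ediv_add_emod m (d:ℤ)
      rw [← hz0v] at hdm
      rw [haz, hcz]
      linear_combination -hdm
    have hdvd2 : (2*(d:ℤ)+1) ∣ (m - (tri n : ℤ)*x0 - (tri (n+2) : ℤ)*z0) := by
      refine ⟨m / (2*(d:ℤ)+1) - ((d:ℤ)-1)*x0 - ((d:ℤ)+1)*z0, ?_⟩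
      have hdm := Int.mul_ediv_add_emod m (2*(d:ℤ)+1)
      rw [← hx0v] at hdm
      rw [haz, hcz]
      linear_combination -hdm
    have hcop : IsCoprime (d:ℤ) (2*(d:ℤ)+1) := ⟨-2, 1, by ring⟩
    obtain ⟨M, hMdef⟩ := hcop.mul_dvd hdvd1 hdvd2
    have hmrep : m = (tri n : ℤ)*x0 + (tri (n+2) : ℤ)*z0 + (tri (n+1) : ℤ)*M := by
      rw [hbz]
      linear_combination hMdef
    have hx0b : (tri n : ℤ)*x0 ≤ (tri n : ℤ)*((2*d : ℕ) : ℤ) := by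
      apply mul_le_mul_of_nonneg_left _ (Int.natCast_nonneg _)
      exact_mod_cast hx0le
    have hz0b : (tri (n+2) : ℤ)*z0 ≤ (tri (n+2) : ℤ)*(((d-1) : ℕ) : ℤ) := by
      apply mul_le_mul_of_nonneg_left _ (Int.natCast_nonneg _)
      exact_mod_cast (show z0 ≤ d-1 by omega)
    have hBpos : (0:ℤ) < (tri (n+1) : ℤ) := by
      rw [hbz]
      have hsq : (0:ℤ) ≤ (d:ℤ)^2 := sq_nonneg _
      linarith
    have hBM : (tri (n+1) : ℤ)*(((d:ℤ)+1)*(s:ℤ) - 1) + 1 ≤ (tri (n+1) : ℤ)*M := by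
      linarith [hg, hmrep, hx0b, hz0b, hgm]
    have hMlb : ((d:ℤ)+1)*(s:ℤ) ≤ M := by
      by_contra hc
      push_neg at hc
      have h1 : M ≤ ((d:ℤ)+1)*(s:ℤ) - 1 := by omega
      have h2 := mul_le_mul_of_nonneg_left h1 (le_of_lt hBpos)
      linarith
    have hM0 : (0:ℤ) ≤ M := by
      have : (0:ℤ) ≤ ((d:ℤ)+1)*(s:ℤ) := mul_nonneg (by linarith) (Int.natCast_nonneg _)
      linarith
    have hMt : ((M.toNat : ℕ) : ℤ) = M := Int.toNat_of_nonneg hM0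
    have hmrep' : m = (tri n : ℤ)*x0 + (tri (n+2) : ℤ)*z0
        + (tri (n+1) : ℤ)*((M.toNat : ℕ) : ℤ) := by rw [hMt]; exact hmrep
    have hd3 : d3 (tri n) (tri (n+1)) (tri (n+2)) m = cardN d M.toNat := by
      rw [card_reps d hd (tri n) (tri (n+1)) (tri (n+2)) haz hbz hcz x0 z0 hx0le hz0lt
        _ m hmrep', card_pairs d _ hd]
    have hMnge : (d+1)*s ≤ M.toNat := by
      have h1 : ((((d+1)*s : ℕ)) : ℤ) ≤ M := by push_cast; linarith
      omega
    have hlow := cardN_lower d s M.toNat hd hMnge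
    rw [hd3] at hmem
    omega
end
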